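/- arXiv:2501.05402 — 11 statements merged into one kernel-verified Lean document; each statement's English description precedes it below -/
import Mathlib

section
/- Given positive reals d_0,...,d_{N-1} and the stiffness matrix K_n of a mass-spring chain with n repeated unit cells and fixed ends, if ω² is an eigenvalue of K (the single unit cell matrix K_1), then ω² is an eigenvalue of K_n for every n ≥ 1. -/
/-- The stiffness matrix `K_n` of the mass-spring chain with `n` repeated unit cells of
`N` masses with neighbouring distances `d 0, ..., d (N-1)` (extended `N`-periodically)
and fixed (Dirichlet) ends.  Its size is `(n*N-1) × (n*N-1)`; the `0`-based row `i`
corresponds to the mass `j = i+1`. -/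
noncomputable def Kmat (N : ℕ) (d : ℕ → ℝ) (n : ℕ) :
    Matrix (Fin (n * N - 1)) (Fin (n * N - 1)) ℝ :=
  fun i j =>
    if (i : ℕ) = (j : ℕ) then 1 / d ((i : ℕ) % N) + 1 / d (((i : ℕ) + 1) % N)
    else if (i : ℕ) + 1 = (j : ℕ) then -(1 / d (((i : ℕ) + 1) % N))
    else if (j : ℕ) + 1 = (i : ℕ) then -(1 / d (((j : ℕ) + 1) % N))
    else 0

lemma Kmat_mulVec (N : ℕ) (hN : 2 ≤ N) (d : ℕ → ℝ) (n : ℕ) (hn : 1 ≤ n)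
    (W : ℕ → ℝ) (hW0 : W 0 = 0) (hWtop : W (n * N) = 0)
    (w : Fin (n * N - 1) → ℝ) (hw : ∀ i, w i = W ((i : ℕ) + 1)) (i : Fin (n * N - 1)) :
    (Kmat N d n).mulVec w i =
      (1 / d ((i : ℕ) % N) + 1 / d (((i : ℕ) + 1) % N)) * W ((i : ℕ) + 1)
        - (1 / d ((i : ℕ) % N)) * W (i : ℕ)
        - (1 / d (((i : ℕ) + 1) % N)) * W ((i : ℕ) + 2) := by
  have hM : 2 ≤ n * N := Nat.one_mul 2 ▸ Nat.mul_le_mul hn hN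
  have hi := i.isLt
  unfold Matrix.mulVec dotProduct Kmat
  simp only [hw]
  rw [Fin.sum_univ_eq_sum_range (fun j =>
    (if (i : ℕ) = j then 1 / d ((i : ℕ) % N) + 1 / d (((i : ℕ) + 1) % N)
     else if (i : ℕ) + 1 = j then -(1 / d (((i : ℕ) + 1) % N))
     else if j + 1 = (i : ℕ) then -(1 / d ((j + 1) % N)) else 0) * W (j + 1))]
  have hsplit : ∀ j : ℕ,
      (if (i : ℕ) = j then 1 / d ((i : ℕ) % N) + 1 / d (((i : ℕ) + 1) % N)
       else if (i : ℕ) + 1 = j then -(1 / d (((i : ℕ) + 1) % N))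
       else if j + 1 = (i : ℕ) then -(1 / d ((j + 1) % N)) else 0) * W (j + 1)
      = (if j = (i : ℕ) then (1 / d ((i : ℕ) % N) + 1 / d (((i : ℕ) + 1) % N)) * W (j + 1) else 0)
        + (if j = (i : ℕ) + 1 then -(1 / d (((i : ℕ) + 1) % N)) * W (j + 1) else 0)
        + (if j + 1 = (i : ℕ) then -(1 / d ((j + 1) % N)) * W (j + 1) else 0) := by
    intro j
    split_ifs <;> first | omega | ring
  simp only [hsplit]
  rw [Finset.sum_add_distrib, Finset.sum_add_distrib, Finset.sum_ite_eq', Finset.sum_ite_eq']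
  have h1 : ((i : ℕ) ∈ Finset.range (n * N - 1)) := Finset.mem_range.mpr hi
  rw [if_pos h1]
  have h2 : (if (i : ℕ) + 1 ∈ Finset.range (n * N - 1) then
      -(1 / d (((i : ℕ) + 1) % N)) * W ((i : ℕ) + 1 + 1) else 0)
      = -(1 / d (((i : ℕ) + 1) % N)) * W ((i : ℕ) + 2) := by
    by_cases h : (i : ℕ) + 1 < n * N - 1
    · rw [if_pos (Finset.mem_range.mpr h)]
    · have he : (i : ℕ) + 2 = n * N := by omega
      rw [if_neg (by simp [Finset.mem_range]; omega), he, hWtop, mul_zero]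
  rw [h2]
  have h3 : (∑ j ∈ Finset.range (n * N - 1),
      if j + 1 = (i : ℕ) then -(1 / d ((j + 1) % N)) * W (j + 1) else 0)
      = -(1 / d ((i : ℕ) % N)) * W (i : ℕ) := by
    rcases Nat.eq_zero_or_pos (i : ℕ) with h0 | hp
    · rw [Finset.sum_eq_zero (by intro j _; rw [if_neg (by omega)]), h0, hW0, mul_zero]
    · have hrw : ∀ j : ℕ, (if j + 1 = (i : ℕ) then -(1 / d ((j + 1) % N)) * W (j + 1) else 0)
          = (if j = (i : ℕ) - 1 then -(1 / d ((j + 1) % N)) * W (j + 1) else 0) := by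
        intro j
        by_cases hj : j + 1 = (i : ℕ)
        · rw [if_pos hj, if_pos (by omega)]
        · rw [if_neg hj, if_neg (by omega)]
      simp only [hrw]
      rw [Finset.sum_ite_eq', if_pos (Finset.mem_range.mpr (by omega))]
      have : (i : ℕ) - 1 + 1 = (i : ℕ) := by omega
      rw [this]
  rw [h3]
  ring

/-- If `ω²` is an eigenvalue of the single unit cell matrix `K = K_1`, then `ω²` is an
eigenvalue of `K_n` for every `n ≥ 1`. -/
theorem eigenvalue_of_single_cell_is_universal
    (N : ℕ) (hN : 2 ≤ N) (d : ℕ → ℝ) (hd : ∀ i, 0 < d i)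
    (n : ℕ) (hn : 1 ≤ n) (μ : ℝ)
    (v : Fin (1 * N - 1) → ℝ) (hv : v ≠ 0)
    (heig : (Kmat N d 1).mulVec v = μ • v) :
    ∃ w : Fin (n * N - 1) → ℝ, w ≠ 0 ∧ (Kmat N d n).mulVec w = μ • w := by
  have hN0 : 0 < N := by omega
  -- extension of v to ℕ with zeros outside [1, N-1]
  set V : ℕ → ℝ := fun m => if h : 1 ≤ m ∧ m < N then v ⟨m - 1, by omega⟩ else 0 with hVdef
  have hV0 : V 0 = 0 := by simp [hVdef]
  have hVtop : ∀ m, N ≤ m → V m = 0 := by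
    intro m hm
    simp only [hVdef]
    rw [dif_neg (by omega)]
  have hwv : ∀ i : Fin (1 * N - 1), v i = V ((i : ℕ) + 1) := by
    intro i
    have hi := i.isLt
    simp only [hVdef]
    rw [dif_pos (by omega)]
    congr 1
  -- scalar recurrence for V
  have hrec : ∀ r, 1 ≤ r → r < N →
      (1 / d (r - 1) + 1 / d r) * V r - (1 / d (r - 1)) * V (r - 1)
        - (1 / d r) * V (r + 1) = μ * V r := by
    intro r h1 h2
    have hi : r - 1 < 1 * N - 1 := by omega
    have hkey := Kmat_mulVec N hN d 1 le_rfl V hV0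
      (by rw [one_mul]; exact hVtop N le_rfl) v hwv ⟨r - 1, hi⟩
    rw [heig] at hkey
    simp only [Pi.smul_apply, smul_eq_mul] at hkey
    rw [hwv ⟨r - 1, hi⟩] at hkey
    have hc : ((⟨r - 1, hi⟩ : Fin (1 * N - 1)) : ℕ) = r - 1 := rfl
    rw [hc] at hkey
    have e1 : r - 1 + 1 = r := by omega
    have e2 : (r - 1) % N = r - 1 := Nat.mod_eq_of_lt (by omega)
    have e4 : r - 1 + 2 = r + 1 := by omega
    rw [e1, e2, e4, Nat.mod_eq_of_lt h2] at hkey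
    linarith [hkey]
  -- the cell-coupling coefficients
  obtain ⟨c, hcrec, k0, hk0, hck0⟩ :
      ∃ c : ℕ → ℝ, (∀ k, 1 ≤ k → k ≤ n - 1 →
          (1 / d (N - 1) * V (N - 1)) * c (k - 1) + (1 / d 0 * V 1) * c k = 0)
        ∧ ∃ k0, k0 ≤ n - 1 ∧ c k0 ≠ 0 := by
    by_cases hb : V 1 = 0
    · by_cases ha : V (N - 1) = 0
      · exact ⟨fun _ => 1, fun k _ _ => by simp [ha, hb], 0, Nat.zero_le _, one_ne_zero⟩
      · refine ⟨fun k => if k = n - 1 then 1 else 0, ?_, n - 1, le_refl _, by simp⟩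
        intro k hk1 hk2
        have h' : k - 1 ≠ n - 1 := by omega
        simp [h', hb]
    · have hb' : (1 : ℝ) / d 0 * V 1 ≠ 0 :=
        mul_ne_zero (one_div_ne_zero (hd 0).ne') hb
      set t : ℝ := -(1 / d (N - 1) * V (N - 1) / (1 / d 0 * V 1)) with ht
      have hbt : (1 / d 0 * V 1) * t = -(1 / d (N - 1) * V (N - 1)) := by
        rw [ht]
        field_simp [(hd 0).ne', (hd (N - 1)).ne', hb]
      refine ⟨fun k => t ^ k, ?_, 0, Nat.zero_le _, by norm_num⟩
      intro k hk1 hk2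
      obtain ⟨k', rfl⟩ : ∃ k', k = k' + 1 := ⟨k - 1, by omega⟩
      simp only [Nat.add_sub_cancel, pow_succ]
      linear_combination (t ^ k') * hbt
  -- the global vector
  set W : ℕ → ℝ := fun m => c (m / N) * V (m % N) with hWdef
  have hWval : ∀ k r, r ≤ N → W (N * k + r) = c k * V r := by
    intro k r hr
    rcases eq_or_lt_of_le hr with h | h
    · rw [h]
      have e : N * k + N = N * (k + 1) + 0 := by ring
      rw [e]
      simp only [hWdef]
      rw [Nat.mul_add_div hN0, Nat.mul_add_mod]
      simp [hV0, hVtop N le_rfl]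
    · simp only [hWdef]
      rw [Nat.mul_add_div hN0, Nat.mul_add_mod, Nat.div_eq_of_lt h, Nat.mod_eq_of_lt h,
        Nat.add_zero]
  have hW0 : W 0 = 0 := by simp [hWdef, hV0]
  have hWtop : W (n * N) = 0 := by
    rw [Nat.mul_comm n N]
    have := hWval n 0 (Nat.zero_le N)
    simpa [hV0] using this
  -- the key scalar identity for W
  have key : ∀ m, 1 ≤ m → m ≤ n * N - 1 →
      (1 / d ((m - 1) % N) + 1 / d (m % N)) * W m - (1 / d ((m - 1) % N)) * W (m - 1)
        - (1 / d (m % N)) * W (m + 1) = μ * W m := by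
    intro m h1 h2
    obtain ⟨k, r, hm, hrN⟩ : ∃ k r, m = N * k + r ∧ r < N :=
      ⟨m / N, m % N, (Nat.div_add_mod m N).symm, Nat.mod_lt _ hN0⟩
    have hmod : m % N = r := by rw [hm, Nat.mul_add_mod, Nat.mod_eq_of_lt hrN]
    rcases Nat.eq_zero_or_pos r with h0 | hr1
    · -- boundary between cells
      subst h0
      have hk1 : 1 ≤ k := by
        rcases Nat.eq_zero_or_pos k with hk | hk
        · subst hk; simp at hm; omega
        · exact hk
      have hk2 : k ≤ n - 1 := by
        have hlt : N * k < N * n := by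
          have h3 : n * N = N * n := Nat.mul_comm n N
          omega
        have := Nat.lt_of_mul_lt_mul_left hlt
        omega
      have e : N * (k - 1) + N = N * k := by
        rw [← Nat.mul_succ]
        congr 1
        omega
      have hm1 : m - 1 = N * (k - 1) + (N - 1) := by omega
      have hmod1 : (m - 1) % N = N - 1 := by
        rw [hm1, Nat.mul_add_mod, Nat.mod_eq_of_lt (by omega)]
      have hWm : W m = 0 := by
        rw [hm, hWval k 0 (Nat.zero_le N), hV0, mul_zero]
      have hWm1 : W (m - 1) = c (k - 1) * V (N - 1) := by
        rw [hm1]; exact hWval (k - 1) (N - 1) (by omega)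
      have hWp1 : W (m + 1) = c k * V 1 := by
        have e2 : m + 1 = N * k + 1 := by omega
        rw [e2]; exact hWval k 1 (by omega)
      rw [hmod1, hmod, hWm, hWm1, hWp1]
      have hc := hcrec k hk1 hk2
      linear_combination -hc
    · -- interior of a cell
      have hm1 : m - 1 = N * k + (r - 1) := by omega
      have hmp : m + 1 = N * k + (r + 1) := by omega
      have hmod1 : (m - 1) % N = r - 1 := by
        rw [hm1, Nat.mul_add_mod, Nat.mod_eq_of_lt (by omega)]
      have hWm : W m = c k * V r := by rw [hm]; exact hWval k r (le_of_lt hrN)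
      have hWm1 : W (m - 1) = c k * V (r - 1) := by
        rw [hm1]; exact hWval k (r - 1) (by omega)
      have hWp1 : W (m + 1) = c k * V (r + 1) := by
        rw [hmp]; exact hWval k (r + 1) (by omega)
      rw [hmod1, hmod, hWm, hWm1, hWp1]
      linear_combination (c k) * hrec r hr1 hrN
  -- assemble
  refine ⟨fun i => W ((i : ℕ) + 1), ?_, ?_⟩
  · -- nonzero
    obtain ⟨p, hp⟩ := Function.ne_iff.mp hv
    have hpN := p.isLt
    have hbound : N * k0 + (p : ℕ) < n * N - 1 := by
      have h1 : N * k0 ≤ N * (n - 1) := Nat.mul_le_mul_left N hk0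
      have h2 : N * (n - 1) + N = N * n := by
        rw [← Nat.mul_succ]; congr 1; omega
      have h3 : N * n = n * N := Nat.mul_comm N n
      omega
    intro hcontra
    have := congrFun hcontra ⟨N * k0 + (p : ℕ), hbound⟩
    simp only [Pi.zero_apply] at this
    have e : (N * k0 + (p : ℕ)) + 1 = N * k0 + ((p : ℕ) + 1) := by omega
    rw [e, hWval k0 ((p : ℕ) + 1) (by omega)] at this
    have hVp : V ((p : ℕ) + 1) = v p := by
      simp only [hVdef]
      rw [dif_pos (by omega)]
      congr 1
    rw [hVp] at this
    exact (mul_ne_zero hck0 hp) this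
  · -- eigen equation
    funext i
    have hi := i.isLt
    rw [Kmat_mulVec N hN d n hn W hW0 hWtop _ (fun _ => rfl) i]
    have hkey := key ((i : ℕ) + 1) (by omega) (by omega)
    simp only [Nat.add_sub_cancel] at hkey
    rw [show (i : ℕ) + 1 + 1 = (i : ℕ) + 2 by omega] at hkey
    simp only [Pi.smul_apply, smul_eq_mul]
    linarith [hkey]
end

section
/- With K, K_n the stiffness matrices of the mass-spring chain, the characteristic polynomials satisfy the recursion c_{K_n}(x) = (x - (1/d_0 + 1/d_{N-1})) c_K(x) c_{K_{n-1}}(x) - (1/d_{N-1}²) p(x) c_{K_{n-1}}(x) - (1/d_0²) c_K(x) q_{n-1}(x) for some real polynomials p and q_{n-1}; in particular c_K(x) divides c_{K_n}(x) for all n. -/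
open Polynomial Matrix

section Aux

variable {R : Type*} [CommRing R]

lemma det_last_row {k : ℕ} (M : Matrix (Fin (k+1)) (Fin (k+1)) R)
    (h : ∀ j : Fin k, M (Fin.last k) j.castSucc = 0) :
    M.det = M (Fin.last k) (Fin.last k) * (M.submatrix Fin.castSucc Fin.castSucc).det := by
  rw [Matrix.det_succ_row M (Fin.last k), Finset.sum_eq_single (Fin.last k)]
  · rw [Fin.succAbove_last, Fin.val_last, Even.neg_one_pow ⟨k, rfl⟩, one_mul]
  · intro j _ hj
    obtain ⟨j', rfl⟩ := Fin.exists_castSucc_eq.2 hj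
    rw [h j', mul_zero, zero_mul]
  · intro h'; exact absurd (Finset.mem_univ _) h'

lemma det_first_row {k : ℕ} (M : Matrix (Fin (k+1)) (Fin (k+1)) R)
    (h : ∀ j : Fin k, M 0 j.succ = 0) :
    M.det = M 0 0 * (M.submatrix Fin.succ Fin.succ).det := by
  rw [Matrix.det_succ_row_zero M, Finset.sum_eq_single 0]
  · simp [Fin.succAbove_zero]
  · intro j _ hj
    obtain ⟨j', rfl⟩ := Fin.exists_succ_eq.2 hj
    rw [h j', mul_zero, zero_mul]
  · intro h'; exact absurd (Finset.mem_univ _) h'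

set_option maxHeartbeats 1000000 in
lemma det_split {a b : ℕ}
    (M : Matrix (Fin (a+1) ⊕ Fin (b+1)) (Fin (a+1) ⊕ Fin (b+1)) R)
    (htr : ∀ (i : Fin (a+1)) (j : Fin (b+1)), ¬(i = Fin.last a ∧ j = 0) →
      M (Sum.inl i) (Sum.inr j) = 0)
    (hbl : ∀ (i : Fin (b+1)) (j : Fin (a+1)), ¬(i = 0 ∧ j = Fin.last a) →
      M (Sum.inr i) (Sum.inl j) = 0) :
    M.det = (M.toBlocks₁₁).det * (M.toBlocks₂₂).det
      - M (Sum.inl (Fin.last a)) (Sum.inr 0) * M (Sum.inr 0) (Sum.inl (Fin.last a))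
        * (M.toBlocks₁₁.submatrix Fin.castSucc Fin.castSucc).det
        * (M.toBlocks₂₂.submatrix Fin.succ Fin.succ).det := by
  set r : Fin (a+1) ⊕ Fin (b+1) := Sum.inl (Fin.last a) with hr
  set s : Fin (a+1) ⊕ Fin (b+1) := Sum.inr (0 : Fin (b+1)) with hs
  have hrs : r ≠ s := by simp [hr, hs]
  set x : (Fin (a+1) ⊕ Fin (b+1)) → R :=
    Sum.elim (fun j' => M r (Sum.inl j')) (fun _ => 0) with hx
  set y : (Fin (a+1) ⊕ Fin (b+1)) → R := fun j => if j = s then M r s else 0 with hy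
  have hrow : M = M.updateRow r (x + y) := by
    ext i j
    rcases eq_or_ne i r with rfl | hi
    · rw [Matrix.updateRow_self]
      rcases j with j | j
      · simp [hx, hy, hs]
      · rcases eq_or_ne j 0 with rfl | hj
        · simp [hx, hy, hs]
        · simp only [Pi.add_apply, hx, hy, Sum.elim_inr, hs]
          rw [htr _ _ (by simp [hj]), if_neg (by simp [hj])]
          simp
    · rw [Matrix.updateRow_ne hi]
  have hdet : M.det = (M.updateRow r x).det + (M.updateRow r y).det := by
    conv_lhs => rw [hrow]
    exact Matrix.det_updateRow_add M r x y
  -- first piece: block lower triangular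
  have h1 : (M.updateRow r x) = Matrix.fromBlocks M.toBlocks₁₁ 0 M.toBlocks₂₁ M.toBlocks₂₂ := by
    ext i j
    rcases i with i | i <;> rcases j with j | j
    · rcases eq_or_ne i (Fin.last a) with rfl | hi
      · rw [← hr, Matrix.updateRow_self]; simp [hx, Matrix.toBlocks₁₁, hr]
      · rw [Matrix.updateRow_ne (by simp [hr, hi])]; simp [Matrix.toBlocks₁₁]
    · rcases eq_or_ne i (Fin.last a) with rfl | hi
      · rw [← hr, Matrix.updateRow_self]; simp [hx, hr]
      · rw [Matrix.updateRow_ne (by simp [hr, hi])]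
        simp [htr i j (by tauto)]
    · rw [Matrix.updateRow_ne (by simp [hr])]; simp [Matrix.toBlocks₂₁]
    · rw [Matrix.updateRow_ne (by simp [hr])]; simp [Matrix.toBlocks₂₂]
  have hdet1 : (M.updateRow r x).det = (M.toBlocks₁₁).det * (M.toBlocks₂₂).det := by
    rw [h1, Matrix.det_fromBlocks_zero₁₂]
  -- second piece: swap rows r and s
  set P : Matrix (Fin (a+1) ⊕ Fin (b+1)) (Fin (a+1) ⊕ Fin (b+1)) R :=
    (M.updateRow r y).submatrix (Equiv.swap r s) id with hP
  have hdet2 : P.det = Equiv.Perm.sign (Equiv.swap r s) * (M.updateRow r y).det :=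
    Matrix.det_permute _ _
  rw [Equiv.Perm.sign_swap hrs] at hdet2
  have hdet2' : (M.updateRow r y).det = - P.det := by
    rw [hdet2]; simp
  -- P is block upper triangular
  have hP21 : ∀ (i : Fin (b+1)) (j : Fin (a+1)), P (Sum.inr i) (Sum.inl j) = 0 := by
    intro i j
    rcases eq_or_ne i 0 with rfl | hi
    · show (M.updateRow r y) (Equiv.swap r s (Sum.inr 0)) (Sum.inl j) = 0
      rw [← hs, Equiv.swap_apply_right, Matrix.updateRow_self]
      simp [hy, hs]
    · show (M.updateRow r y) (Equiv.swap r s (Sum.inr i)) (Sum.inl j) = 0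
      rw [Equiv.swap_apply_of_ne_of_ne (by simp [hr]) (by simp [hs, hi]),
        Matrix.updateRow_ne (by simp [hr])]
      exact hbl i j (by tauto)
  have hPblocks : P = Matrix.fromBlocks P.toBlocks₁₁ P.toBlocks₁₂ 0 P.toBlocks₂₂ := by
    ext i j
    rcases i with i | i <;> rcases j with j | j <;>
      simp [Matrix.fromBlocks, Matrix.toBlocks₁₁, Matrix.toBlocks₁₂, Matrix.toBlocks₂₂, hP21]
  have hdetP : P.det = P.toBlocks₁₁.det * P.toBlocks₂₂.det := by
    conv_lhs => rw [hPblocks]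
    rw [Matrix.det_fromBlocks_zero₂₁]
  -- compute det of the two diagonal blocks of P
  have hA : P.toBlocks₁₁.det
      = M s r * (M.toBlocks₁₁.submatrix Fin.castSucc Fin.castSucc).det := by
    rw [det_last_row]
    · congr 1
      · show (M.updateRow r y) (Equiv.swap r s r) (Sum.inl (Fin.last a)) = M s r
        rw [Equiv.swap_apply_left, Matrix.updateRow_ne (Ne.symm hrs)]
      · congr 1
        ext i j
        show (M.updateRow r y) (Equiv.swap r s (Sum.inl i.castSucc)) (Sum.inl j.castSucc) = _
        rw [Equiv.swap_apply_of_ne_of_ne (by simp [hr, (Fin.castSucc_lt_last i).ne])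
          (by simp [hs]), Matrix.updateRow_ne (by simp [hr, (Fin.castSucc_lt_last i).ne])]
        rfl
    · intro j
      show (M.updateRow r y) (Equiv.swap r s r) (Sum.inl j.castSucc) = 0
      rw [Equiv.swap_apply_left, Matrix.updateRow_ne (Ne.symm hrs)]
      exact hbl 0 j.castSucc (by simp [(Fin.castSucc_lt_last j).ne])
  have hB : P.toBlocks₂₂.det
      = M r s * (M.toBlocks₂₂.submatrix Fin.succ Fin.succ).det := by
    rw [det_first_row]
    · congr 1
      · show (M.updateRow r y) (Equiv.swap r s s) (Sum.inr 0) = M r s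
        rw [Equiv.swap_apply_right, Matrix.updateRow_self]
        try simp [hy]
        intro h; exact absurd hs.symm h
      all_goals try (congr 1
                     ext i j
                     show (M.updateRow r y) (Equiv.swap r s (Sum.inr i.succ)) (Sum.inr j.succ) = _
                     rw [Equiv.swap_apply_of_ne_of_ne (by simp [hr]) (by simp [hs, Fin.succ_ne_zero i]),
                       Matrix.updateRow_ne (by simp [hr])]
                     rfl)
    · intro j
      show (M.updateRow r y) (Equiv.swap r s s) (Sum.inr j.succ) = 0
      rw [Equiv.swap_apply_right, Matrix.updateRow_self]
      simp [hy, hs, Fin.succ_ne_zero j]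
  rw [hdet, hdet1, hdet2', hdetP, hA, hB]
  ring

lemma cm_apply (N : ℕ) (d : ℕ → ℝ) (n : ℕ) (i j : Fin (n*N-1)) :
    charmatrix (Kmat N d n) i j =
      if (i : ℕ) = (j : ℕ) then X - C (1 / d ((i:ℕ) % N) + 1 / d (((i:ℕ)+1) % N))
      else if (i:ℕ)+1 = (j:ℕ) then C (1 / d (((i:ℕ)+1) % N))
      else if (j:ℕ)+1 = (i:ℕ) then C (1 / d (((j:ℕ)+1) % N))
      else 0 := by
  rcases eq_or_ne i j with rfl | hij
  · rw [charmatrix_apply_eq, if_pos rfl]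
    unfold Kmat
    rw [if_pos rfl]
  · have hvij : (i:ℕ) ≠ (j:ℕ) := fun h => hij (Fin.ext h)
    rw [charmatrix_apply_ne _ _ _ hij, if_neg hvij]
    unfold Kmat
    rw [if_neg hvij]
    split_ifs <;> simp

set_option maxHeartbeats 1600000 in
lemma key (N : ℕ) (hN : 2 ≤ N) (d : ℕ → ℝ) (n : ℕ) (hn : 2 ≤ n) :
    ∃ p q : Polynomial ℝ,
      (Kmat N d n).charpoly =
        (X - C (1 / d 0 + 1 / d (N - 1))) * (Kmat N d 1).charpoly * (Kmat N d (n - 1)).charpoly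
          - C (1 / (d (N - 1)) ^ 2) * p * (Kmat N d (n - 1)).charpoly
          - C (1 / (d 0) ^ 2) * (Kmat N d 1).charpoly * q := by
  obtain ⟨a, rfl⟩ : ∃ a, N = a + 2 := ⟨N - 2, by omega⟩
  obtain ⟨c, rfl⟩ : ∃ c, n = c + 2 := ⟨n - 2, by omega⟩
  clear hN hn
  have hsub1 : a + 2 - 1 = a + 1 := rfl
  have hsub2 : c + 2 - 1 = c + 1 := rfl
  rw [hsub1, hsub2]
  have hu2 : (c+2)*(a+2) = (c+1)*(a+2) + (a+2) := by ring
  have hu3 : a+2 ≤ (c+1)*(a+2) := by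
    calc a + 2 = 1 * (a+2) := (one_mul _).symm
    _ ≤ (c+1)*(a+2) := Nat.mul_le_mul_right _ (by omega)
  set u := (c+1)*(a+2) with hu
  set b := u - 2 with hbdef
  have hm : ((a+1)+1) + (b+1) = (c+2)*(a+2)-1 := by rw [hu2]; omega
  set e : (Fin ((a+1)+1) ⊕ Fin (b+1)) ≃ Fin ((c+2)*(a+2)-1) :=
    finSumFinEquiv.trans (finCongr hm) with he
  set M' : Matrix (Fin ((a+1)+1) ⊕ Fin (b+1)) (Fin ((a+1)+1) ⊕ Fin (b+1)) (Polynomial ℝ) :=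
    (charmatrix (Kmat (a+2) d (c+2))).submatrix e e with hM'def
  have hval1 : ∀ i : Fin ((a+1)+1), ((e (Sum.inl i)) : ℕ) = i := by
    intro i; simp [he]
  have hval2 : ∀ j : Fin (b+1), ((e (Sum.inr j)) : ℕ) = (a+2) + j := by
    intro j; simp [he]
  have htr : ∀ (i : Fin ((a+1)+1)) (j : Fin (b+1)), ¬(i = Fin.last (a+1) ∧ j = 0) →
      M' (Sum.inl i) (Sum.inr j) = 0 := by
    intro i j hnot
    have hv : ¬((i:ℕ) = a+1 ∧ (j:ℕ) = 0) := by
      rintro ⟨h3, h4⟩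
      exact hnot ⟨Fin.ext h3, Fin.ext h4⟩
    show charmatrix (Kmat (a+2) d (c+2)) (e (Sum.inl i)) (e (Sum.inr j)) = 0
    rw [cm_apply, hval1, hval2]
    have c1 : ¬((i:ℕ) = a+2+(j:ℕ)) := by omega
    have c2 : ¬((i:ℕ)+1 = a+2+(j:ℕ)) := by omega
    have c3 : ¬(a+2+(j:ℕ)+1 = (i:ℕ)) := by omega
    rw [if_neg c1, if_neg c2, if_neg c3]
  have hbl : ∀ (i : Fin (b+1)) (j : Fin ((a+1)+1)), ¬(i = 0 ∧ j = Fin.last (a+1)) →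
      M' (Sum.inr i) (Sum.inl j) = 0 := by
    intro i j hnot
    have hv : ¬((i:ℕ) = 0 ∧ (j:ℕ) = a+1) := by
      rintro ⟨h3, h4⟩
      exact hnot ⟨Fin.ext h3, Fin.ext h4⟩
    show charmatrix (Kmat (a+2) d (c+2)) (e (Sum.inr i)) (e (Sum.inl j)) = 0
    rw [cm_apply, hval1, hval2]
    have c1 : ¬(a+2+(i:ℕ) = (j:ℕ)) := by omega
    have c2 : ¬(a+2+(i:ℕ)+1 = (j:ℕ)) := by omega
    have c3 : ¬((j:ℕ)+1 = a+2+(i:ℕ)) := by omega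
    rw [if_neg c1, if_neg c2, if_neg c3]
  have main := det_split M' htr hbl
  have hc1 : M' (Sum.inl (Fin.last (a+1))) (Sum.inr 0) = C (1 / d 0) := by
    show charmatrix (Kmat (a+2) d (c+2)) (e (Sum.inl (Fin.last (a+1)))) (e (Sum.inr 0)) = _
    rw [cm_apply, hval1, hval2, show ((Fin.last (a+1)) : ℕ) = a+1 from rfl,
      show ((0 : Fin (b+1)) : ℕ) = 0 from rfl]
    have c1 : ¬(a+1 = a+2+0) := by omega
    have c2 : a+1+1 = a+2+0 := by omega
    rw [if_neg c1, if_pos c2, show (a+1+1) % (a+2) = 0 from Nat.mod_self _]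
  have hc2 : M' (Sum.inr 0) (Sum.inl (Fin.last (a+1))) = C (1 / d 0) := by
    show charmatrix (Kmat (a+2) d (c+2)) (e (Sum.inr 0)) (e (Sum.inl (Fin.last (a+1)))) = _
    rw [cm_apply, hval1, hval2, show ((Fin.last (a+1)) : ℕ) = a+1 from rfl,
      show ((0 : Fin (b+1)) : ℕ) = 0 from rfl]
    have c1 : ¬(a+2+0 = a+1) := by omega
    have c2 : ¬(a+2+0+1 = a+1) := by omega
    have c3 : a+1+1 = a+2+0 := by omega
    rw [if_neg c1, if_neg c2, if_pos c3, show (a+1+1) % (a+2) = 0 from Nat.mod_self _]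
  have hb' : b + 1 = (c+1)*(a+2) - 1 := by rw [← hu]; omega
  have hT22 : M'.toBlocks₂₂ =
      (charmatrix (Kmat (a+2) d (c+1))).submatrix (finCongr hb') (finCongr hb') := by
    refine Matrix.ext fun i j => ?_
    show charmatrix (Kmat (a+2) d (c+2)) (e (Sum.inr i)) (e (Sum.inr j)) = _
    rw [Matrix.submatrix_apply, cm_apply, cm_apply, hval2, hval2]
    simp only [finCongr_apply, Fin.coe_cast]
    have k1 : a+2+(i:ℕ)+1 = a+2+((i:ℕ)+1) := by omega
    have k2 : a+2+(j:ℕ)+1 = a+2+((j:ℕ)+1) := by omega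
    rw [k1, k2]
    simp only [Nat.add_right_inj, Nat.add_mod_left]
  have h1' : (a+1) = 1*(a+2)-1 := by omega
  have hA' : (M'.toBlocks₁₁).submatrix Fin.castSucc Fin.castSucc
      = (charmatrix (Kmat (a+2) d 1)).submatrix (finCongr h1') (finCongr h1') := by
    refine Matrix.ext fun i j => ?_
    show charmatrix (Kmat (a+2) d (c+2)) (e (Sum.inl i.castSucc)) (e (Sum.inl j.castSucc)) = _
    rw [Matrix.submatrix_apply, cm_apply, cm_apply, hval1, hval1]
    simp only [finCongr_apply, Fin.coe_cast, Fin.coe_castSucc]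
  -- split the 1,1 block again
  set e2 : (Fin (a+1) ⊕ Fin (0+1)) ≃ Fin ((a+1)+(0+1)) := finSumFinEquiv with he2
  set M'' : Matrix (Fin (a+1) ⊕ Fin (0+1)) (Fin (a+1) ⊕ Fin (0+1)) (Polynomial ℝ) :=
    (M'.toBlocks₁₁).submatrix e2 e2 with hM''def
  have hval3 : ∀ i : Fin (a+1), ((e2 (Sum.inl i)) : ℕ) = i := by
    intro i; simp [he2]
  have hval4 : ∀ j : Fin (0+1), ((e2 (Sum.inr j)) : ℕ) = a+1 := by
    intro j
    have hj0 : (j : ℕ) = 0 := by omega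
    simp [he2, hj0]
  have htr2 : ∀ (i : Fin (a+1)) (j : Fin (0+1)), ¬(i = Fin.last a ∧ j = 0) →
      M'' (Sum.inl i) (Sum.inr j) = 0 := by
    intro i j hnot
    have hv : ¬((i:ℕ) = a) := by
      intro h3
      exact hnot ⟨Fin.ext h3, Fin.ext (by omega)⟩
    show charmatrix (Kmat (a+2) d (c+2)) (e (Sum.inl (e2 (Sum.inl i)))) (e (Sum.inl (e2 (Sum.inr j)))) = 0
    rw [cm_apply, hval1, hval1, hval3, hval4]
    have c1 : ¬((i:ℕ) = a+1) := by omega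
    have c2 : ¬((i:ℕ)+1 = a+1) := by omega
    have c3 : ¬(a+1+1 = (i:ℕ)) := by omega
    rw [if_neg c1, if_neg c2, if_neg c3]
  have hbl2 : ∀ (i : Fin (0+1)) (j : Fin (a+1)), ¬(i = 0 ∧ j = Fin.last a) →
      M'' (Sum.inr i) (Sum.inl j) = 0 := by
    intro i j hnot
    have hv : ¬((j:ℕ) = a) := by
      intro h3
      exact hnot ⟨Fin.ext (by omega), Fin.ext h3⟩
    show charmatrix (Kmat (a+2) d (c+2)) (e (Sum.inl (e2 (Sum.inr i)))) (e (Sum.inl (e2 (Sum.inl j)))) = 0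
    rw [cm_apply, hval1, hval1, hval3, hval4]
    have c1 : ¬(a+1 = (j:ℕ)) := by omega
    have c2 : ¬(a+1+1 = (j:ℕ)) := by omega
    have c3 : ¬((j:ℕ)+1 = a+1) := by omega
    rw [if_neg c1, if_neg c2, if_neg c3]
  have main2 := det_split M'' htr2 hbl2
  have hc3 : M'' (Sum.inl (Fin.last a)) (Sum.inr 0) = C (1 / d (a+1)) := by
    show charmatrix (Kmat (a+2) d (c+2)) (e (Sum.inl (e2 (Sum.inl (Fin.last a))))) (e (Sum.inl (e2 (Sum.inr 0)))) = _
    rw [cm_apply, hval1, hval1, hval3, hval4, show ((Fin.last a) : ℕ) = a from rfl]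
    have c1 : ¬(a = a+1) := by omega
    rw [if_neg c1, if_pos rfl, show (a+1) % (a+2) = a+1 from Nat.mod_eq_of_lt (by omega)]
  have hc4 : M'' (Sum.inr 0) (Sum.inl (Fin.last a)) = C (1 / d (a+1)) := by
    show charmatrix (Kmat (a+2) d (c+2)) (e (Sum.inl (e2 (Sum.inr 0)))) (e (Sum.inl (e2 (Sum.inl (Fin.last a))))) = _
    rw [cm_apply, hval1, hval1, hval3, hval4, show ((Fin.last a) : ℕ) = a from rfl]
    have c1 : ¬(a+1 = a) := by omega
    have c2 : ¬(a+1+1 = a) := by omega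
    rw [if_neg c1, if_neg c2, if_pos rfl, show (a+1) % (a+2) = a+1 from Nat.mod_eq_of_lt (by omega)]
  have hB22 : (M''.toBlocks₂₂).det = X - C (1 / d (a+1) + 1 / d 0) := by
    rw [Matrix.det_fin_one]
    show charmatrix (Kmat (a+2) d (c+2)) (e (Sum.inl (e2 (Sum.inr 0)))) (e (Sum.inl (e2 (Sum.inr 0)))) = _
    rw [cm_apply, hval1, hval4]
    rw [if_pos rfl, show (a+1) % (a+2) = a+1 from Nat.mod_eq_of_lt (by omega),
      show (a+1+1) % (a+2) = 0 from Nat.mod_self _]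
  have hB11 : M''.toBlocks₁₁
      = (charmatrix (Kmat (a+2) d 1)).submatrix (finCongr h1') (finCongr h1') := by
    refine Matrix.ext fun i j => ?_
    show charmatrix (Kmat (a+2) d (c+2)) (e (Sum.inl (e2 (Sum.inl i)))) (e (Sum.inl (e2 (Sum.inl j)))) = _
    rw [Matrix.submatrix_apply, cm_apply, cm_apply, hval1, hval1, hval3, hval3]
    simp only [finCongr_apply, Fin.coe_cast]
  -- assemble
  refine ⟨((M''.toBlocks₁₁).submatrix Fin.castSucc Fin.castSucc).det,
    ((M'.toBlocks₂₂).submatrix Fin.succ Fin.succ).det, ?_⟩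
  have hdetM' : (Kmat (a+2) d (c+2)).charpoly = M'.det := by
    rw [hM'def, Matrix.det_submatrix_equiv_self]; rfl
  have hdetT11 : (M'.toBlocks₁₁).det = M''.det := by
    rw [hM''def, Matrix.det_submatrix_equiv_self]
  have hdetT22 : (M'.toBlocks₂₂).det = (Kmat (a+2) d (c+1)).charpoly := by
    rw [hT22, Matrix.det_submatrix_equiv_self]; rfl
  have hdetA' : ((M'.toBlocks₁₁).submatrix Fin.castSucc Fin.castSucc).det
      = (Kmat (a+2) d 1).charpoly := by
    rw [hA', Matrix.det_submatrix_equiv_self]; rfl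
  have hdetB11 : (M''.toBlocks₁₁).det = (Kmat (a+2) d 1).charpoly := by
    rw [hB11, Matrix.det_submatrix_equiv_self]; rfl
  have hdetB22' : ((M''.toBlocks₂₂).submatrix Fin.succ Fin.succ).det = 1 :=
    Matrix.det_fin_zero
  have he1 : C (1 / d (a+1)) * C (1 / d (a+1)) = (C (1 / (d (a+1))^2) : Polynomial ℝ) := by
    rw [← C_mul, one_div_mul_one_div, ← pow_two]
  have he2' : C (1 / d 0) * C (1 / d 0) = (C (1 / (d 0)^2) : Polynomial ℝ) := by
    rw [← C_mul, one_div_mul_one_div, ← pow_two]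
  rw [hc1, hc2, hdetT22, hdetA'] at main
  rw [hc3, hc4, hB22, hdetB11, hdetB22'] at main2
  rw [hdetM', main, hdetT11, main2, he1, he2',
    add_comm (1 / d (a+1)) (1 / d 0)]
  ring

end Aux

/-- The characteristic polynomials of the stiffness matrices satisfy the recursion
`c_{K_n}(x) = (x - (1/d_0 + 1/d_{N-1})) c_K(x) c_{K_{n-1}}(x)
  - (1/d_{N-1}²) p(x) c_{K_{n-1}}(x) - (1/d_0²) c_K(x) q_{n-1}(x)`
for some real polynomials `p, q_{n-1}`; in particular `c_K ∣ c_{K_n}` for all `n ≥ 1`. -/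
theorem charpoly_recursion_and_divisibility
    (N : ℕ) (hN : 2 ≤ N) (d : ℕ → ℝ) (hd : ∀ i, 0 < d i) (n : ℕ) (hn : 2 ≤ n) :
    (∃ p q : Polynomial ℝ,
      (Kmat N d n).charpoly =
        (X - C (1 / d 0 + 1 / d (N - 1))) * (Kmat N d 1).charpoly * (Kmat N d (n - 1)).charpoly
          - C (1 / (d (N - 1)) ^ 2) * p * (Kmat N d (n - 1)).charpoly
          - C (1 / (d 0) ^ 2) * (Kmat N d 1).charpoly * q) ∧
    (∀ m : ℕ, 1 ≤ m → (Kmat N d 1).charpoly ∣ (Kmat N d m).charpoly) := by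
  refine ⟨key N hN d n hn, ?_⟩
  intro m hm
  induction m, hm using Nat.le_induction with
  | base => exact dvd_refl _
  | succ k hk ih =>
    obtain ⟨p, q, hrec⟩ := key N hN d (k+1) (by omega)
    try simp only [Nat.add_sub_cancel] at hrec
    rw [hrec]
    exact dvd_sub
      (dvd_sub ((dvd_mul_left _ _).mul_right _) (ih.mul_left _))
      ((dvd_mul_left _ _).mul_right _)
end

section
/- Let ω² be an eigenvalue of the single-unit-cell matrix K with eigenvector v = (v_1,...,v_{N-1}) satisfying v_1 ≠ 0, and define α(ω) = -(d_0/d_{N-1})·(v_{N-1}/v_1). Then for every n ≥ 1 the vector obtained by concatenating α(ω)^{j-1}·v for j = 1,...,n, with a zero entry inserted between consecutive copies, is an eigenvector of K_n with eigenvalue ω². -/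
noncomputable def Knat (N : ℕ) (d : ℕ → ℝ) (i j : ℕ) : ℝ :=
  if i = j then 1 / d (i % N) + 1 / d ((i + 1) % N)
  else if i + 1 = j then -(1 / d ((i + 1) % N))
  else if j + 1 = i then -(1 / d ((j + 1) % N))
  else 0

lemma row_sum (N : ℕ) (d : ℕ → ℝ) (M : ℕ) (W : ℕ → ℝ) (i : ℕ) (hi : i < M) :
    ∑ j ∈ Finset.range M, Knat N d i j * W j
      = (1 / d (i % N) + 1 / d ((i + 1) % N)) * W i
        - (if i + 1 < M then (1 / d ((i + 1) % N)) * W (i + 1) else 0)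
        - (if 1 ≤ i then (1 / d (i % N)) * W (i - 1) else 0) := by
  have key : ∀ j, Knat N d i j * W j =
      (if j = i then (1 / d (i % N) + 1 / d ((i + 1) % N)) * W i else 0)
      + (if j = i + 1 then -((1 / d ((i + 1) % N)) * W (i + 1)) else 0)
      + (if j + 1 = i then -((1 / d (i % N)) * W (i - 1)) else 0) := by
    intro j
    unfold Knat
    rcases eq_or_ne j i with rfl | h1
    · simp
    rcases eq_or_ne j (i + 1) with rfl | h2
    · simp only [if_neg (by omega : ¬ (i + 1 = i)), if_pos rfl,
        if_neg (by omega : ¬ (i + 1 + 1 = i)), if_pos (rfl : i + 1 = i + 1),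
        if_neg (by omega : ¬ (i = i + 1)), if_true]
      ring
    rcases eq_or_ne (j + 1) i with rfl | h3
    · simp only [if_neg (by omega : ¬ (j + 1 = j)), if_neg (by omega : ¬ (j + 1 + 1 = j)),
        if_pos (rfl : j + 1 = j + 1), if_neg (by omega : ¬ (j = j + 1)),
        if_neg (by omega : ¬ (j = j + 1 + 1)), Nat.add_sub_cancel, if_true]
      ring
    · simp only [if_neg (fun h : i = j => h1 h.symm), if_neg h1,
        if_neg h2, if_neg h3, if_neg (fun h : i + 1 = j => h2 h.symm)]
      ring
  rw [Finset.sum_congr rfl (fun j _ => key j)]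
  rw [Finset.sum_add_distrib, Finset.sum_add_distrib]
  rw [Finset.sum_ite_eq' (Finset.range M) i, Finset.sum_ite_eq' (Finset.range M) (i + 1)]
  have h3 : (∑ j ∈ Finset.range M, if j + 1 = i then -((1 / d (i % N)) * W (i - 1)) else 0)
      = if 1 ≤ i then -((1 / d (i % N)) * W (i - 1)) else 0 := by
    rcases i with _ | k
    · simp
    · simp only [Nat.add_right_cancel_iff]
      rw [Finset.sum_ite_eq' (Finset.range M) k]
      rw [if_pos (Finset.mem_range.mpr (by omega)), if_pos (by omega)]
  rw [h3, if_pos (Finset.mem_range.mpr hi)]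
  simp only [Finset.mem_range]
  split_ifs <;> ring

lemma Ecell (N : ℕ) (hN : 2 ≤ N) (d : ℕ → ℝ) (μ : ℝ) (v : ℕ → ℝ) (hv0 : v 0 = 0)
    (heig : (Kmat N d 1).mulVec (fun i => v ((i : ℕ) + 1)) =
      μ • fun i : Fin (1 * N - 1) => v ((i : ℕ) + 1))
    (k : ℕ) (hk : k < N - 1) :
    (1 / d k + 1 / d (k + 1)) * v (k + 1)
      - (if k + 1 < N - 1 then (1 / d (k + 1)) * v (k + 1 + 1) else 0)
      - (1 / d k) * v k = μ * v (k + 1) := by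
  have hk' : k < 1 * N - 1 := by omega
  have h := congrFun heig ⟨k, hk'⟩
  have hsum : (Kmat N d 1).mulVec (fun i => v ((i : ℕ) + 1)) ⟨k, hk'⟩
      = ∑ j ∈ Finset.range (1 * N - 1), Knat N d k j * v (j + 1) := by
    rw [← Fin.sum_univ_eq_sum_range (fun j => Knat N d k j * v (j + 1)) (1 * N - 1)]
    rfl
  rw [hsum, row_sum N d (1 * N - 1) (fun j => v (j + 1)) k hk'] at h
  simp only [Pi.smul_apply, smul_eq_mul] at h
  rw [Nat.mod_eq_of_lt (by omega : k < N), Nat.mod_eq_of_lt (by omega : k + 1 < N),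
    (show 1 * N - 1 = N - 1 by omega)] at h
  rcases Nat.eq_zero_or_pos k with rfl | hk1
  · rw [if_neg (show ¬ ((1:ℕ) ≤ 0) by omega)] at h
    simp only [hv0, mul_zero, sub_zero] at h ⊢
    exact h
  · rw [if_pos (show (1:ℕ) ≤ k from hk1), (show k - 1 + 1 = k by omega)] at h
    exact h

lemma REC (N : ℕ) (hN : 2 ≤ N) (d : ℕ → ℝ) (hd : ∀ i, 0 < d i) (μ : ℝ) (v : ℕ → ℝ)
    (hv0 : v 0 = 0) (hv1 : v 1 ≠ 0)
    (heig : (Kmat N d 1).mulVec (fun i => v ((i : ℕ) + 1)) =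
      μ • fun i : Fin (1 * N - 1) => v ((i : ℕ) + 1))
    (α : ℝ) (hα : α = -(d 0 / d (N - 1)) * (v (N - 1) / v 1)) (i : ℕ) :
    (1 / d (i % N) + 1 / d ((i + 1) % N)) * (α ^ ((i + 1) / N) * v ((i + 1) % N))
      - (1 / d ((i + 1) % N)) * (α ^ ((i + 1 + 1) / N) * v ((i + 1 + 1) % N))
      - (if 1 ≤ i then (1 / d (i % N)) * (α ^ ((i - 1 + 1) / N) * v ((i - 1 + 1) % N)) else 0)
      = μ * (α ^ ((i + 1) / N) * v ((i + 1) % N)) := by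
  have hE := Ecell N hN d μ v hv0 heig
  have hd0 : d 0 ≠ 0 := (hd 0).ne'
  have hdN : d (N - 1) ≠ 0 := (hd _).ne'
  have hαrel : (1 / d 0) * (α * v 1) = -((1 / d (N - 1)) * v (N - 1)) := by
    rw [hα]; field_simp
  have hmod : ∀ a b, b < N → (N * a + b) % N = b := fun a b hb => by
    rw [Nat.mul_add_mod, Nat.mod_eq_of_lt hb]
  have hdiv : ∀ a b, b < N → (N * a + b) / N = a := fun a b hb => by
    rw [Nat.mul_add_div (by omega), Nat.div_eq_of_lt hb, Nat.add_zero]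
  obtain ⟨q, r, hqr, hrN⟩ : ∃ q r, i + 1 = N * q + r ∧ r < N :=
    ⟨(i + 1) / N, (i + 1) % N, (Nat.div_add_mod _ _).symm, Nat.mod_lt _ (by omega)⟩
  rcases Nat.eq_zero_or_pos r with rfl | hr1
  · -- r = 0 : i + 1 is a multiple of N
    obtain ⟨q', rfl⟩ : ∃ q', q = q' + 1 := by
      rcases q with _ | q'
      · exfalso; omega
      · exact ⟨q', rfl⟩
    have hmul : N * (q' + 1) = N * q' + N := by ring
    obtain rfl : i = N * q' + (N - 1) := by omega
    have m1 : (N * q' + (N - 1)) % N = N - 1 := hmod _ _ (by omega)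
    have d1 : (N * q' + (N - 1)) / N = q' := hdiv _ _ (by omega)
    have e2 : N * q' + (N - 1) + 1 = N * (q' + 1) + 0 := by omega
    have m2 : (N * q' + (N - 1) + 1) % N = 0 := by rw [e2]; exact hmod _ _ (by omega)
    have d2 : (N * q' + (N - 1) + 1) / N = q' + 1 := by rw [e2]; exact hdiv _ _ (by omega)
    have hmul2 : N * (q' + 1) + 1 = N * q' + N + 1 := by ring
    have e3 : N * q' + (N - 1) + 1 + 1 = N * (q' + 1) + 1 := by omega
    have m3 : (N * q' + (N - 1) + 1 + 1) % N = 1 := by rw [e3]; exact hmod _ _ (by omega)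
    have d3 : (N * q' + (N - 1) + 1 + 1) / N = q' + 1 := by rw [e3]; exact hdiv _ _ (by omega)
    have e4 : N * q' + (N - 1) - 1 + 1 = N * q' + (N - 1) := by omega
    rw [if_pos (show (1:ℕ) ≤ N * q' + (N - 1) by omega), e4, m1, d1, m2, d2, m3, d3, hv0]
    linear_combination (-(α ^ q')) * hαrel
  · -- r ≥ 1
    obtain rfl : i = N * q + (r - 1) := by omega
    have m1 : (N * q + (r - 1)) % N = r - 1 := hmod _ _ (by omega)
    have d1 : (N * q + (r - 1)) / N = q := hdiv _ _ (by omega)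
    have e2 : N * q + (r - 1) + 1 = N * q + r := by omega
    have m2 : (N * q + (r - 1) + 1) % N = r := by rw [e2]; exact hmod _ _ hrN
    have d2 : (N * q + (r - 1) + 1) / N = q := by rw [e2]; exact hdiv _ _ hrN
    have hlow : (if 1 ≤ N * q + (r - 1) then
          (1 / d ((N * q + (r - 1)) % N)) *
            (α ^ ((N * q + (r - 1) - 1 + 1) / N) * v ((N * q + (r - 1) - 1 + 1) % N)) else 0)
        = (1 / d (r - 1)) * (α ^ q * v (r - 1)) := by
      rcases Nat.eq_zero_or_pos (N * q + (r - 1)) with h0 | hpos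
      · rw [if_neg (by omega), (show r - 1 = 0 by omega), hv0]
        ring
      · rw [if_pos (show (1:ℕ) ≤ N * q + (r - 1) from hpos),
          (show N * q + (r - 1) - 1 + 1 = N * q + (r - 1) by omega), m1, d1]
    rw [hlow, m1, m2, d2]
    rcases Nat.lt_or_ge r (N - 1) with hrlt | hrge
    · -- 1 ≤ r ≤ N - 2
      have e3 : N * q + (r - 1) + 1 + 1 = N * q + (r + 1) := by omega
      have m3 : (N * q + (r - 1) + 1 + 1) % N = r + 1 := by rw [e3]; exact hmod _ _ (by omega)
      have d3 : (N * q + (r - 1) + 1 + 1) / N = q := by rw [e3]; exact hdiv _ _ (by omega)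
      rw [m3, d3]
      have hEr := hE (r - 1) (by omega)
      rw [(show r - 1 + 1 = r by omega), if_pos (show r < N - 1 from hrlt)] at hEr
      linear_combination (α ^ q) * hEr
    · -- r = N - 1
      have hrNe : r = N - 1 := by omega
      have hmul : N * (q + 1) = N * q + N := by ring
      have e3 : N * q + (r - 1) + 1 + 1 = N * (q + 1) + 0 := by omega
      have m3 : (N * q + (r - 1) + 1 + 1) % N = 0 := by rw [e3]; exact hmod _ _ (by omega)
      have d3 : (N * q + (r - 1) + 1 + 1) / N = q + 1 := by rw [e3]; exact hdiv _ _ (by omega)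
      rw [m3, d3, hv0]
      have hEr := hE (r - 1) (by omega)
      rw [(show r - 1 + 1 = r by omega), if_neg (show ¬ (r < N - 1) by omega)] at hEr
      linear_combination (α ^ q) * hEr
/-- If `ω²` is an eigenvalue of the single unit cell matrix `K` with eigenvector
`v = (v_1, …, v_{N-1})`, `v_1 ≠ 0`, and `α(ω) = -(d_0/d_{N-1})(v_{N-1}/v_1)`, then for
every `n ≥ 1` the vector `w = (v, 0, α v, 0, α² v, …, α^{n-1} v)` (entries
`w_j = α^{⌊j/N⌋} v_{j mod N}`, with the convention `v_0 = 0` giving the inserted zeros)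
is an eigenvector of `K_n` with eigenvalue `ω²`. -/
theorem concatenated_vector_is_eigenvector
    (N : ℕ) (hN : 2 ≤ N) (d : ℕ → ℝ) (hd : ∀ i, 0 < d i)
    (μ : ℝ) (v : ℕ → ℝ) (hv0 : v 0 = 0) (hv1 : v 1 ≠ 0)
    (heig : (Kmat N d 1).mulVec (fun i => v ((i : ℕ) + 1)) =
      μ • fun i : Fin (1 * N - 1) => v ((i : ℕ) + 1))
    (α : ℝ) (hα : α = -(d 0 / d (N - 1)) * (v (N - 1) / v 1))
    (n : ℕ) (hn : 1 ≤ n) :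
    (fun i : Fin (n * N - 1) => α ^ (((i : ℕ) + 1) / N) * v (((i : ℕ) + 1) % N)) ≠ 0 ∧
    (Kmat N d n).mulVec
        (fun i : Fin (n * N - 1) => α ^ (((i : ℕ) + 1) / N) * v (((i : ℕ) + 1) % N)) =
      μ • fun i : Fin (n * N - 1) => α ^ (((i : ℕ) + 1) / N) * v (((i : ℕ) + 1) % N) := by
  have hM2 : 2 ≤ n * N := le_trans (by omega) (Nat.mul_le_mul hn hN)
  constructor
  · intro hcon
    apply hv1
    have h0 := congrFun hcon ⟨0, by omega⟩
    simp only [Pi.zero_apply] at h0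
    rw [Nat.div_eq_of_lt (by omega : 0 + 1 < N), Nat.mod_eq_of_lt (by omega : 0 + 1 < N),
      pow_zero, one_mul] at h0
    exact h0
  · funext i
    have hsum : (Kmat N d n).mulVec
          (fun i : Fin (n * N - 1) => α ^ (((i : ℕ) + 1) / N) * v (((i : ℕ) + 1) % N)) i
        = ∑ j ∈ Finset.range (n * N - 1),
            Knat N d (i : ℕ) j * (α ^ ((j + 1) / N) * v ((j + 1) % N)) := by
      rw [← Fin.sum_univ_eq_sum_range
        (fun j => Knat N d (i : ℕ) j * (α ^ ((j + 1) / N) * v ((j + 1) % N))) (n * N - 1)]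
      rfl
    rw [hsum, row_sum N d (n * N - 1) (fun j => α ^ ((j + 1) / N) * v ((j + 1) % N)) (i : ℕ) i.isLt]
    have hup : (if (i : ℕ) + 1 < n * N - 1 then
          (1 / d (((i : ℕ) + 1) % N)) * (α ^ (((i : ℕ) + 1 + 1) / N) * v (((i : ℕ) + 1 + 1) % N)) else 0)
        = (1 / d (((i : ℕ) + 1) % N)) * (α ^ (((i : ℕ) + 1 + 1) / N) * v (((i : ℕ) + 1 + 1) % N)) := by
      rcases Nat.lt_or_ge ((i : ℕ) + 1) (n * N - 1) with h | h
      · rw [if_pos h]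
      · have hi := i.isLt
        rw [if_neg (by omega), show (i : ℕ) + 1 + 1 = n * N from by omega,
          Nat.mul_mod_left, hv0]
        ring
    rw [hup]
    simp only [Pi.smul_apply, smul_eq_mul]
    exact REC N hN d hd μ v hv0 hv1 heig α hα (i : ℕ)
end

section
/- With ω², v, α(ω) as above, the ω²-eigenmode of K_n (normalized to unit sup-norm) is localised at an edge if and only if |α(ω)| ≠ 1: if |α(ω)| < 1 the last entry of the normalized eigenvector tends to 0 as n → ∞, and if |α(ω)| > 1 the first entry tends to 0 as n → ∞. -/
open Filter Topology

/-- Entry `i` (`0`-based) of `w_n`: position `i + 1` of the chain lies in cell `(i + 1) / N`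
at offset `(i + 1) % N`. -/
noncomputable def modeEntry (N : ℕ) (α : ℝ) (v : ℕ → ℝ) (n i : ℕ) : ℝ :=
  (1 / max 1 (|α| ^ (n - 1))) * (α ^ ((i + 1) / N) * v ((i + 1) % N))

lemma Nat.mul_sub_one_eq_add_mul (N : ℕ) {n : ℕ} (hn : 0 < n) :
    n * N - 1 = N - 1 + (n - 1) * N := by
  obtain ⟨m, rfl⟩ : ∃ m, n = m + 1 := ⟨n - 1, by omega⟩
  rcases N.eq_zero_or_pos with rfl | hN
  · simp
  rw [add_one_mul, Nat.add_sub_cancel]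
  omega

lemma Nat.mul_sub_one_div {N : ℕ} (hN : 0 < N) {n : ℕ} (hn : 0 < n) :
    (n * N - 1) / N = n - 1 := by
  rw [Nat.mul_sub_one_eq_add_mul N hn, Nat.add_mul_div_right _ _ hN,
    Nat.div_eq_of_lt (by omega), zero_add]

lemma Nat.mul_sub_one_mod {N : ℕ} (hN : 0 < N) {n : ℕ} (hn : 0 < n) :
    (n * N - 1) % N = N - 1 := by
  rw [Nat.mul_sub_one_eq_add_mul N hn, Nat.add_mul_mod_self_right, Nat.mod_eq_of_lt (by omega)]

section modeEntry

variable {N : ℕ} {α : ℝ} {v : ℕ → ℝ}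

lemma modeEntry_zero (hN : 2 ≤ N) (n : ℕ) :
    modeEntry N α v n 0 = (1 / max 1 (|α| ^ (n - 1))) * v 1 := by
  rw [modeEntry, zero_add, Nat.div_eq_of_lt (by omega), Nat.mod_eq_of_lt (by omega), pow_zero,
    one_mul]

lemma modeEntry_last (hN : 2 ≤ N) {n : ℕ} (hn : 0 < n) :
    modeEntry N α v n (n * N - 2) = (1 / max 1 (|α| ^ (n - 1))) * (α ^ (n - 1) * v (N - 1)) := by
  have hnN : N ≤ n * N := Nat.le_mul_of_pos_left N hn
  rw [modeEntry, show n * N - 2 + 1 = n * N - 1 by omega, Nat.mul_sub_one_div (by omega) hn,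
    Nat.mul_sub_one_mod (by omega) hn]

lemma tendsto_modeEntry_zero_of_one_lt_abs (hN : 2 ≤ N) (hα : 1 < |α|) :
    Tendsto (fun n => modeEntry N α v n 0) atTop (𝓝 0) := by
  have hinv : |(|α|)⁻¹| < 1 := by
    rw [abs_inv, abs_abs]
    exact inv_lt_one_of_one_lt₀ hα
  have hlim : Tendsto (fun n => (|α|⁻¹) ^ (n - 1) * v 1) atTop (𝓝 0) := by
    simpa using ((tendsto_pow_atTop_nhds_zero_of_abs_lt_one hinv).comp
      (tendsto_sub_atTop_nat 1)).mul_const (v 1)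
  refine hlim.congr fun n => ?_
  rw [modeEntry_zero hN, max_eq_right (one_le_pow₀ hα.le), one_div, inv_pow]

lemma tendsto_modeEntry_last_of_abs_lt_one (hN : 2 ≤ N) (hα : |α| < 1) :
    Tendsto (fun n => modeEntry N α v n (n * N - 2)) atTop (𝓝 0) := by
  have hlim : Tendsto (fun n => α ^ (n - 1) * v (N - 1)) atTop (𝓝 0) := by
    simpa using ((tendsto_pow_atTop_nhds_zero_of_abs_lt_one hα).comp
      (tendsto_sub_atTop_nat 1)).mul_const (v (N - 1))
  refine hlim.congr' ?_
  filter_upwards [eventually_gt_atTop 0] with n hn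
  rw [modeEntry_last hN hn, max_eq_left (pow_le_one₀ (abs_nonneg α) hα.le), div_one, one_mul]

lemma modeEntry_zero_of_abs_eq_one (hN : 2 ≤ N) (hα : |α| = 1) (n : ℕ) :
    modeEntry N α v n 0 = v 1 := by
  rw [modeEntry_zero hN, hα, one_pow, max_self, div_one, one_mul]

lemma abs_modeEntry_last_of_abs_eq_one (hN : 2 ≤ N) (hα : |α| = 1) {n : ℕ} (hn : 0 < n) :
    |modeEntry N α v n (n * N - 2)| = |v (N - 1)| := by
  rw [modeEntry_last hN hn, abs_mul, abs_mul, abs_pow, hα, one_pow, max_self, div_one, abs_one,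
    one_mul, one_mul]

end modeEntry

/-- With `ω² ∈ σ(K)`, eigenvector `v` (`v_1 ≠ 0`, `v_0 = 0` by convention) and
`α(ω) = -(d_0/d_{N-1}) v_{N-1}/v_1`, the `ω²`-eigenmode of `K_n` normalised by
`k_1 = 1/max{1,|α|^{n-1}}`, namely `w_n = k_1 (v, 0, α v, …, α^{n-1} v)`, is localised at
an edge if and only if `|α(ω)| ≠ 1`: if `|α| < 1` its last entry tends to `0` as
`n → ∞`, and if `|α| > 1` its first entry tends to `0` as `n → ∞`. -/
theorem mode_localised_iff_alpha_ne_one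
    (N : ℕ) (hN : 2 ≤ N) (d : ℕ → ℝ)
    (v : ℕ → ℝ) (hv1 : v 1 ≠ 0)
    (α : ℝ) (hα : α = -(d 0 / d (N - 1)) * (v (N - 1) / v 1))
    (w : ∀ n : ℕ, Fin (n * N - 1) → ℝ)
    (hw : ∀ n : ℕ, ∀ i : Fin (n * N - 1),
      w n i = (1 / max 1 (|α| ^ (n - 1))) * (α ^ (((i : ℕ) + 1) / N) * v (((i : ℕ) + 1) % N)))
    (firstEntry lastEntry : ℕ → ℝ)
    (hfirst : ∀ n : ℕ, firstEntry n = if h : 0 < n * N - 1 then w n ⟨0, h⟩ else 0)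
    (hlast : ∀ n : ℕ, lastEntry n =
      if h : 0 < n * N - 1 then w n ⟨n * N - 2, by omega⟩ else 0) :
    (|α| < 1 → Tendsto lastEntry atTop (nhds 0)) ∧
    (1 < |α| → Tendsto firstEntry atTop (nhds 0)) ∧
    (|α| ≠ 1 ↔ (Tendsto firstEntry atTop (nhds 0) ∨ Tendsto lastEntry atTop (nhds 0))) := by
  have hpos : ∀ n, 0 < n → 0 < n * N - 1 := fun n hn => by
    have := Nat.le_mul_of_pos_left N hn; omega
  have first_eq : (fun n => modeEntry N α v n 0) =ᶠ[atTop] firstEntry := by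
    filter_upwards [eventually_gt_atTop 0] with n hn
    rw [hfirst, dif_pos (hpos n hn), hw, modeEntry]
  have last_eq : (fun n => modeEntry N α v n (n * N - 2)) =ᶠ[atTop] lastEntry := by
    filter_upwards [eventually_gt_atTop 0] with n hn
    rw [hlast, dif_pos (hpos n hn), hw, modeEntry]
  have hsmall := fun h => (tendsto_modeEntry_last_of_abs_lt_one hN h).congr' last_eq
  have hlarge := fun h => (tendsto_modeEntry_zero_of_one_lt_abs hN h).congr' first_eq
  refine ⟨hsmall, hlarge, fun hne => (hne.lt_or_gt.imp hsmall hlarge).symm, ?_⟩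
  rintro (h | h) hone
  · have hconst : Tendsto firstEntry atTop (𝓝 (v 1)) := by
      refine tendsto_const_nhds.congr' ?_
      filter_upwards [first_eq] with n hn
      rw [← hn, modeEntry_zero_of_abs_eq_one hN hone]
    exact hv1 (tendsto_nhds_unique hconst h)
  · have hvN : v (N - 1) ≠ 0 := by
      rintro h0
      simp [hα, h0] at hone
    have hconst : Tendsto (fun n => |lastEntry n|) atTop (𝓝 |v (N - 1)|) := by
      refine tendsto_const_nhds.congr' ?_
      filter_upwards [eventually_gt_atTop 0, last_eq] with n hn hn'
      rw [← hn', abs_modeEntry_last_of_abs_eq_one hN hone hn]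
    exact hvN (abs_eq_zero.mp (tendsto_nhds_unique hconst (by simpa using h.abs)))
end

section
/- If ω² is an eigenvalue of the single-unit-cell matrix K with eigenvector v (v_1 ≠ 0), then (v_1, 0)^T is an eigenvector of the transfer matrix T(ω) with eigenvalue α(ω) = -(d_0/d_{N-1}) v_{N-1}/v_1; consequently the eigenvalues of T(ω) are α(ω) and α(ω)^{-1}. -/
open Polynomial

/-- The `2×2` transfer matrix `M_j(ω)`. -/
noncomputable def Mmat (d : ℕ → ℝ) (ω : ℝ) (j : ℕ) : Matrix (Fin 2) (Fin 2) ℝ :=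
  !![d j * (1 / d j + 1 / d (j - 1) - ω ^ 2), -(d j / d (j - 1)); 1, 0]

/-- `T(ω) = M_N(ω) ⋯ M_1(ω)`. -/
noncomputable def Tmat (N : ℕ) (d : ℕ → ℝ) (ω : ℝ) : Matrix (Fin 2) (Fin 2) ℝ :=
  ((List.range N).map fun i => Mmat d ω (N - i)).prod

lemma charpoly_fin_two' (M : Matrix (Fin 2) (Fin 2) ℝ) :
    M.charpoly = X ^ 2 - C M.trace * X + C M.det := by
  rw [Matrix.charpoly, Matrix.det_fin_two, Matrix.trace_fin_two, Matrix.det_fin_two]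
  simp [Matrix.charmatrix_apply]
  ring

/-- If `ω²` is an eigenvalue of the single-unit-cell matrix `K` with eigenvector `v`
(`v_1 ≠ 0`, `v_0 = 0`), then `(v_1, 0)ᵀ` is an eigenvector of the transfer matrix `T(ω)`
with eigenvalue `α(ω) = -(d_0/d_{N-1}) v_{N-1}/v_1`; consequently the eigenvalues of
`T(ω)` are `α(ω)` and `α(ω)⁻¹`. -/
theorem transfer_matrix_eigenvector_and_eigenvalues
    (N : ℕ) (hN : 2 ≤ N) (d : ℕ → ℝ) (hd : ∀ j, 0 < d j)
    (hper : ∀ j, d (j + N) = d j)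
    (ω : ℝ) (v : ℕ → ℝ) (hv0 : v 0 = 0) (hv1 : v 1 ≠ 0)
    (heig : (Kmat N d 1).mulVec (fun i => v ((i : ℕ) + 1)) =
      (ω ^ 2) • fun i : Fin (1 * N - 1) => v ((i : ℕ) + 1))
    (α : ℝ) (hα : α = -(d 0 / d (N - 1)) * (v (N - 1) / v 1)) :
    (Tmat N d ω).mulVec ![v 1, 0] = α • ![v 1, 0] ∧
    (Tmat N d ω).charpoly = (X - C α) * (X - C α⁻¹) := by
  have hNN : 1 * N - 1 = N - 1 := by omega
  set V : ℕ → ℝ := fun k => if k < N then v k else 0 with hV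
  -- the three-term row relations
  have hrow : ∀ k : ℕ, 1 ≤ k → k ≤ N - 1 →
      (1 / d (k - 1) + 1 / d k) * V k - (1 / d k) * V (k + 1)
        - (1 / d (k - 1)) * V (k - 1) = ω ^ 2 * V k := by
    intro k hk1 hk2
    have hik : k - 1 < 1 * N - 1 := by omega
    set i : Fin (1 * N - 1) := ⟨k - 1, hik⟩ with hi
    have h := congrFun heig i
    simp only [Matrix.mulVec, dotProduct, Pi.smul_apply, smul_eq_mul] at h
    have hsplit : ∀ j : Fin (1 * N - 1), Kmat N d 1 i j * v ((j : ℕ) + 1) =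
        (if (i : ℕ) = (j : ℕ) then
          (1 / d ((i : ℕ) % N) + 1 / d (((i : ℕ) + 1) % N)) * v ((j : ℕ) + 1) else 0)
        + (if (i : ℕ) + 1 = (j : ℕ) then
          -(1 / d (((i : ℕ) + 1) % N)) * v ((j : ℕ) + 1) else 0)
        + (if (j : ℕ) + 1 = (i : ℕ) then
          -(1 / d (((j : ℕ) + 1) % N)) * v ((j : ℕ) + 1) else 0) := by
      intro j
      unfold Kmat
      split_ifs <;> first | (exfalso; omega) | ring1
    rw [Finset.sum_congr rfl fun j _ => hsplit j] at h
    rw [Finset.sum_add_distrib, Finset.sum_add_distrib] at h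
    have hs1 : (∑ j : Fin (1 * N - 1), if (i : ℕ) = (j : ℕ) then
        (1 / d ((i : ℕ) % N) + 1 / d (((i : ℕ) + 1) % N)) * v ((j : ℕ) + 1) else 0)
        = (1 / d ((i : ℕ) % N) + 1 / d (((i : ℕ) + 1) % N)) * v ((i : ℕ) + 1) := by
      rw [Finset.sum_eq_single i]
      · simp
      · intro b _ hb
        have : ¬ ((i : ℕ) = (b : ℕ)) := fun hc => hb (Fin.ext hc.symm)
        simp [this]
      · simp
    have hs2 : (∑ j : Fin (1 * N - 1), if (i : ℕ) + 1 = (j : ℕ) then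
        -(1 / d (((i : ℕ) + 1) % N)) * v ((j : ℕ) + 1) else 0)
        = -(1 / d (((i : ℕ) + 1) % N)) * V ((i : ℕ) + 2) := by
      by_cases hlt : (i : ℕ) + 1 < 1 * N - 1
      · rw [Finset.sum_eq_single (⟨(i : ℕ) + 1, hlt⟩ : Fin (1 * N - 1))]
        · have hVlt : (i : ℕ) + 2 < N := by omega
          simp [V, hVlt]
        · intro b _ hb
          have : ¬ ((i : ℕ) + 1 = (b : ℕ)) := by
            intro hc
            exact hb (Fin.ext hc.symm)
          simp [this]
        · simp
      · rw [Finset.sum_eq_zero]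
        · have hVge : ¬ ((i : ℕ) + 2 < N) := by omega
          simp [V, hVge]
        · intro b _
          have : ¬ ((i : ℕ) + 1 = (b : ℕ)) := by
            have := b.isLt; omega
          simp [this]
    have hs3 : (∑ j : Fin (1 * N - 1), if (j : ℕ) + 1 = (i : ℕ) then
        -(1 / d (((j : ℕ) + 1) % N)) * v ((j : ℕ) + 1) else 0)
        = -(1 / d ((i : ℕ) % N)) * v (i : ℕ) := by
      by_cases hpos : 1 ≤ (i : ℕ)
      · have hilt : (i : ℕ) - 1 < 1 * N - 1 := by omega
        rw [Finset.sum_eq_single (⟨(i : ℕ) - 1, hilt⟩ : Fin (1 * N - 1))]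
        · have he : (i : ℕ) - 1 + 1 = (i : ℕ) := by omega
          simp [he]
        · intro b _ hb
          have : ¬ ((b : ℕ) + 1 = (i : ℕ)) := by
            intro hc
            apply hb
            apply Fin.ext
            show (b : ℕ) = (i : ℕ) - 1
            omega
          simp [this]
        · simp
      · have hi0 : (i : ℕ) = 0 := by omega
        rw [Finset.sum_eq_zero]
        · rw [hi0, hv0]; ring
        · intro b _
          have : ¬ ((b : ℕ) + 1 = (i : ℕ)) := by omega
          simp [this]
    rw [hs1, hs2, hs3] at h
    have hiv : (i : ℕ) = k - 1 := rfl
    rw [hiv] at h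
    rw [show k - 1 + 1 = k from by omega, show k - 1 + 2 = k + 1 from by omega,
      Nat.mod_eq_of_lt (show k - 1 < N by omega), Nat.mod_eq_of_lt (show k < N by omega)] at h
    have hVk : V k = v k := if_pos (by omega)
    have hVk1 : V (k - 1) = v (k - 1) := if_pos (by omega)
    rw [hVk, hVk1]
    linear_combination h
  -- the recurrence form
  have hrec : ∀ k : ℕ, 1 ≤ k → k ≤ N - 1 →
      V (k + 1) = d k * (1 / d k + 1 / d (k - 1) - ω ^ 2) * V k
        - (d k / d (k - 1)) * V (k - 1) := by
    intro k hk1 hk2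
    have h := hrow k hk1 hk2
    have hdk : d k ≠ 0 := (hd k).ne'
    have hstep : (1 / d k) * V (k + 1)
        = (1 / d k + 1 / d (k - 1) - ω ^ 2) * V k - (1 / d (k - 1)) * V (k - 1) := by
      linear_combination -h
    calc V (k + 1) = d k * ((1 / d k) * V (k + 1)) := by
          rw [one_div, ← mul_assoc, mul_inv_cancel₀ hdk, one_mul]
      _ = d k * ((1 / d k + 1 / d (k - 1) - ω ^ 2) * V k - (1 / d (k - 1)) * V (k - 1)) := by
          rw [hstep]
      _ = d k * (1 / d k + 1 / d (k - 1) - ω ^ 2) * V k - (d k / d (k - 1)) * V (k - 1) := by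
          ring
  -- the partial products
  set P : ℕ → Matrix (Fin 2) (Fin 2) ℝ :=
    fun k => ((List.range k).map fun i => Mmat d ω (k - i)).prod with hP
  have hPsucc : ∀ k, P (k + 1) = Mmat d ω (k + 1) * P k := by
    intro k
    have hl : ((List.range (k + 1)).map fun i => Mmat d ω (k + 1 - i))
        = Mmat d ω (k + 1) :: ((List.range k).map fun i => Mmat d ω (k - i)) := by
      rw [List.range_succ_eq_map, List.map_cons, List.map_map, Nat.sub_zero]
      refine congrArg _ (List.map_congr_left fun i _ => ?_)
      show Mmat d ω (k + 1 - (i + 1)) = Mmat d ω (k - i)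
      rw [show k + 1 - (i + 1) = k - i from by omega]
    show ((List.range (k + 1)).map fun i => Mmat d ω (k + 1 - i)).prod = _
    rw [hl, List.prod_cons]
  have key : ∀ k, k ≤ N - 1 → (P k).mulVec ![v 1, 0] = ![V (k + 1), V k] := by
    intro k
    induction k with
    | zero =>
      intro _
      have h1 : V 1 = v 1 := if_pos (by omega)
      have h0 : V 0 = 0 := by
        show (if 0 < N then v 0 else 0) = 0
        rw [if_pos (by omega), hv0]
      show (([] : List (Matrix (Fin 2) (Fin 2) ℝ)).prod).mulVec ![v 1, 0] = _
      rw [List.prod_nil, Matrix.one_mulVec]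
      ext i
      fin_cases i
      · simp [h1]
      · simp [h0]
    | succ k ih =>
      intro hk
      rw [hPsucc, ← Matrix.mulVec_mulVec, ih (by omega)]
      have hr := hrec (k + 1) (by omega) hk
      simp only [Nat.add_sub_cancel] at hr
      ext j
      fin_cases j <;>
        simp [Mmat, Matrix.mulVec, dotProduct, Fin.sum_univ_two, Nat.add_sub_cancel]
      · linear_combination -hr
  have hTP : Tmat N d ω = P N := rfl
  have hdN : d N = d 0 := by
    have := hper 0
    simpa using this
  have hPN : P N = Mmat d ω N * P (N - 1) := by
    have hNe : N = (N - 1) + 1 := by omega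
    calc P N = P ((N - 1) + 1) := by rw [← hNe]
      _ = Mmat d ω ((N - 1) + 1) * P (N - 1) := hPsucc _
      _ = Mmat d ω N * P (N - 1) := by rw [← hNe]
  have hVN : V ((N - 1) + 1) = 0 := by
    rw [show (N - 1) + 1 = N from by omega]
    exact if_neg (lt_irrefl N)
  have hVN1 : V (N - 1) = v (N - 1) := if_pos (by omega)
  -- Part 1
  have part1 : (Tmat N d ω).mulVec ![v 1, 0] = α • ![v 1, 0] := by
    rw [hTP, hPN, ← Matrix.mulVec_mulVec, key (N - 1) le_rfl]
    ext i
    fin_cases i <;>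
      simp [Mmat, Matrix.mulVec, dotProduct, Fin.sum_univ_two, hVN, hVN1, hα, hdN]
    field_simp
  -- determinant
  have hdetM : ∀ j : ℕ, (Mmat d ω j).det = d j / d (j - 1) := by
    intro j
    simp [Mmat, Matrix.det_fin_two_of]
  have hdetP : ∀ k : ℕ, (P k).det = d k / d 0 := by
    intro k
    induction k with
    | zero =>
      show (([] : List (Matrix (Fin 2) (Fin 2) ℝ)).prod).det = _
      rw [List.prod_nil, Matrix.det_one, div_self (hd 0).ne']
    | succ k ih =>
      rw [hPsucc, Matrix.det_mul, ih, hdetM]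
      rw [show k + 1 - 1 = k from by omega]
      field_simp [(hd k).ne', (hd 0).ne']
  have hdetT : (Tmat N d ω).det = 1 := by
    rw [hTP, hdetP, hdN, div_self (hd 0).ne']
  -- entries of T
  have hT00 : Tmat N d ω 0 0 = α := by
    have h0 := congrFun part1 0
    simp [Matrix.mulVec, dotProduct, Fin.sum_univ_two] at h0
    rcases h0 with h | h
    · exact h
    · exact absurd h hv1
  have hT10 : Tmat N d ω 1 0 = 0 := by
    have h0 := congrFun part1 1
    simp [Matrix.mulVec, dotProduct, Fin.sum_univ_two] at h0
    rcases h0 with h | h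
    · exact h
    · exact absurd h hv1
  have hdet2 : α * Tmat N d ω 1 1 = 1 := by
    have h := hdetT
    rw [Matrix.det_fin_two, hT00, hT10] at h
    linarith
  have hα0 : α ≠ 0 := by
    intro h
    rw [h, zero_mul] at hdet2
    exact zero_ne_one hdet2
  have hT11 : Tmat N d ω 1 1 = α⁻¹ := by
    field_simp
    linear_combination hdet2
  constructor
  · exact part1
  · rw [charpoly_fin_two', hdetT, Matrix.trace_fin_two, hT00, hT11, map_add, map_one]
    have hC : (C α : ℝ[X]) * C α⁻¹ = 1 := by
      rw [← C_mul, mul_inv_cancel₀ hα0, map_one]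
    linear_combination -hC
end

section
/- Fix ω² ∈ σ(K). There exists a Floquet (Bloch) solution of the infinite periodic mass-spring chain at frequency ω, i.e., a nonzero sequence (v_j)_{j∈Z} satisfying v_{j+1} = d_j(1/d_j + 1/d_{j-1} - ω²)v_j - (d_j/d_{j-1})v_{j-1} and v_{j+N} = e^{iNk} v_j for some real k, if and only if |α(ω)| = 1. -/
/-- The `(N-1)×(N-1)` Dirichlet stiffness matrix of one unit cell, for distances
`d : ℤ → ℝ` (row `i` (0-based) corresponds to mass `j = i+1`). -/
noncomputable def KdirZ (N : ℕ) (d : ℤ → ℝ) : Matrix (Fin (N - 1)) (Fin (N - 1)) ℝ :=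
  fun i j =>
    if (i : ℕ) = (j : ℕ) then 1 / d ((i : ℕ) : ℤ) + 1 / d (((i : ℕ) : ℤ) + 1)
    else if (i : ℕ) + 1 = (j : ℕ) then -(1 / d (((i : ℕ) : ℤ) + 1))
    else if (j : ℕ) + 1 = (i : ℕ) then -(1 / d (((j : ℕ) : ℤ) + 1))
    else 0

/-- Forward solution of the three-term recurrence with initial data `a, b`. -/
noncomputable def flqSeq (d : ℤ → ℝ) (ω : ℝ) (a b : ℝ) : ℕ → ℝ
  | 0 => a
  | 1 => b
  | (n+2) => d ((n:ℤ)+1) * (1/d ((n:ℤ)+1) + 1/d (n:ℤ) - ω^2) * flqSeq d ω a b (n+1)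
              - (d ((n:ℤ)+1) / d (n:ℤ)) * flqSeq d ω a b n

lemma flqSeq_rec (d : ℤ → ℝ) (ω : ℝ) (a b : ℝ) (n : ℕ) :
    flqSeq d ω a b (n+2) =
      d ((n:ℤ)+1) * (1/d ((n:ℤ)+1) + 1/d (n:ℤ) - ω^2) * flqSeq d ω a b (n+1)
        - (d ((n:ℤ)+1) / d (n:ℤ)) * flqSeq d ω a b n := rfl

/-- Two solutions of the same linear recurrence agreeing at `0, 1` agree everywhere. -/
lemma flq_unique {C E : ℕ → ℂ} {u w : ℕ → ℂ}
    (hu : ∀ n : ℕ, u (n+2) = C n * u (n+1) - E n * u n)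
    (hw : ∀ n : ℕ, w (n+2) = C n * w (n+1) - E n * w n)
    (h0 : u 0 = w 0) (h1 : u 1 = w 1) : ∀ n, u n = w n := by
  have key : ∀ n, u n = w n ∧ u (n+1) = w (n+1) := by
    intro n
    induction n with
    | zero => exact ⟨h0, h1⟩
    | succ m ih => exact ⟨ih.2, by rw [hu m, hw m, ih.1, ih.2]⟩
  exact fun n => (key n).1

/-- Periodicity of `d` : invariance under adding any multiple of `N`. -/
lemma d_per_mul {N : ℕ} {d : ℤ → ℝ} (hper : ∀ j : ℤ, d (j + N) = d j)
    (j : ℤ) (q : ℤ) : d (j + q * N) = d j := by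
  induction q using Int.induction_on with
  | zero => simp
  | succ q ih => rw [show j + (q+1) * N = (j + q*N) + N by ring, hper, ih]
  | pred q ih =>
      have := hper (j + (-(q:ℤ)-1) * N)
      rw [show j + (-(q:ℤ)-1) * N + N = j + -(q:ℤ) * N by ring] at this
      rw [← this, ih]

lemma KdirZ_row (N : ℕ) (d : ℤ → ℝ) (x : Fin (N-1) → ℝ) (i : Fin (N-1)) :
    Matrix.mulVec (KdirZ N d) x i
      = (1 / d ((i:ℕ) : ℤ) + 1 / d (((i:ℕ) : ℤ) + 1)) * x i
        + (if h : (i:ℕ)+1 < N-1 then -(1 / d (((i:ℕ) : ℤ) + 1)) * x ⟨(i:ℕ)+1, h⟩ else 0)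
        + (if h : 0 < (i:ℕ) then
            -(1 / d ((((i:ℕ)-1 : ℕ) : ℤ) + 1)) * x ⟨(i:ℕ)-1, lt_of_le_of_lt (Nat.sub_le _ _) i.isLt⟩
          else 0) := by
  have hsplit : ∀ j : Fin (N-1), KdirZ N d i j * x j =
      (if i = j then (1 / d ((i:ℕ) : ℤ) + 1 / d (((i:ℕ) : ℤ) + 1)) * x j else 0)
      + (if (i:ℕ)+1 = (j:ℕ) then -(1 / d (((i:ℕ) : ℤ) + 1)) * x j else 0)
      + (if (j:ℕ)+1 = (i:ℕ) then -(1 / d (((j:ℕ) : ℤ) + 1)) * x j else 0) := by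
    intro j
    by_cases h1 : (i:ℕ) = (j:ℕ) <;> by_cases h2 : (i:ℕ)+1 = (j:ℕ) <;>
      by_cases h3 : (j:ℕ)+1 = (i:ℕ) <;>
      simp_all [KdirZ, Fin.ext_iff] <;> omega
  have hmv : Matrix.mulVec (KdirZ N d) x i = ∑ j, KdirZ N d i j * x j := rfl
  rw [hmv, Finset.sum_congr rfl (fun j _ => hsplit j), Finset.sum_add_distrib,
    Finset.sum_add_distrib]
  congr 1
  · congr 1
    · simp [Finset.sum_ite_eq]
    · by_cases h : (i:ℕ)+1 < N-1
      · rw [dif_pos h]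
        have hc : ∀ j : Fin (N-1), ((i:ℕ)+1 = (j:ℕ)) ↔ ((⟨(i:ℕ)+1, h⟩ : Fin (N-1)) = j) := by
          intro j; simp [Fin.ext_iff]
        calc ∑ j : Fin (N-1), (if (i:ℕ)+1 = (j:ℕ) then -(1 / d (((i:ℕ) : ℤ) + 1)) * x j else 0)
            = ∑ j : Fin (N-1), (if (⟨(i:ℕ)+1, h⟩ : Fin (N-1)) = j then -(1 / d (((i:ℕ) : ℤ) + 1)) * x j else 0) := by
              exact Finset.sum_congr rfl (fun j _ => if_congr (hc j) rfl rfl)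
          _ = _ := by simp [Finset.sum_ite_eq]
      · rw [dif_neg h]
        refine Finset.sum_eq_zero (fun j _ => if_neg ?_)
        have := j.isLt; omega
  · by_cases h : 0 < (i:ℕ)
    · rw [dif_pos h]
      have hc : ∀ j : Fin (N-1), ((j:ℕ)+1 = (i:ℕ)) ↔
          ((⟨(i:ℕ)-1, lt_of_le_of_lt (Nat.sub_le _ _) i.isLt⟩ : Fin (N-1)) = j) := by
        intro j; simp [Fin.ext_iff]; omega
      calc ∑ j : Fin (N-1), (if (j:ℕ)+1 = (i:ℕ) then -(1 / d (((j:ℕ) : ℤ) + 1)) * x j else 0)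
          = ∑ j : Fin (N-1), (if (⟨(i:ℕ)-1, lt_of_le_of_lt (Nat.sub_le _ _) i.isLt⟩ : Fin (N-1)) = j then
              -(1 / d ((((i:ℕ)-1 : ℕ) : ℤ) + 1)) * x j else 0) := by
            refine Finset.sum_congr rfl (fun j _ => ?_)
            by_cases hj : (j:ℕ)+1 = (i:ℕ)
            · rw [if_pos hj, if_pos ((hc j).mp hj)]
              have : (j:ℕ) = (i:ℕ)-1 := by omega
              rw [← this]
            · rw [if_neg hj, if_neg (fun hh => hj ((hc j).mpr hh))]
        _ = _ := by simp [Finset.sum_ite_eq]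
    · rw [dif_neg h]
      exact Finset.sum_eq_zero (fun j _ => if_neg (by omega))

lemma row_eq (N : ℕ) (hN : 2 ≤ N) (d : ℤ → ℝ) (hd : ∀ j, 0 < d j)
    (ω : ℝ) (v : ℕ → ℝ) (hv0 : v 0 = 0)
    (heig : (KdirZ N d).mulVec (fun i => v ((i : ℕ) + 1)) =
      (ω ^ 2) • fun i : Fin (N - 1) => v ((i : ℕ) + 1))
    (n : ℕ) (h1 : 1 ≤ n) (h2 : n ≤ N - 1) :
    (if n + 1 < N then v (n+1) else 0)
      = d (n:ℤ) * (1/d (n:ℤ) + 1/d ((n:ℤ) - 1) - ω^2) * v n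
        - (d (n:ℤ) / d ((n:ℤ) - 1)) * v (n-1) := by
  have hi : n - 1 < N - 1 := by omega
  have h := congrFun heig (⟨n-1, hi⟩ : Fin (N-1))
  rw [KdirZ_row] at h
  have h' : (1 / d ((n-1 : ℕ) : ℤ) + 1 / d (((n-1 : ℕ) : ℤ) + 1)) * v ((n-1)+1)
      + (if hh : (n-1)+1 < N-1 then -(1 / d (((n-1:ℕ) : ℤ) + 1)) * v (((n-1)+1)+1) else 0)
      + (if hh : 0 < n-1 then -(1 / d ((((n-1)-1 : ℕ) : ℤ) + 1)) * v (((n-1)-1)+1) else 0)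
      = ω^2 * v ((n-1)+1) := h
  clear h heig
  have e1 : n - 1 + 1 = n := by omega
  have e2 : ((n-1 : ℕ) : ℤ) = (n : ℤ) - 1 := by omega
  have e3 : ((n-1:ℕ) : ℤ) + 1 = (n:ℤ) := by omega
  rw [e1] at h'
  rw [e3, e2] at h'
  have ha : d ((n:ℤ) - 1) ≠ 0 := (hd _).ne'
  have hb : d (n:ℤ) ≠ 0 := (hd _).ne'
  have hT : (if hh : 0 < n-1 then -(1 / d ((((n-1)-1 : ℕ) : ℤ) + 1)) * v (((n-1)-1)+1) else 0)
      = -(1 / d ((n:ℤ) - 1)) * v (n-1) := by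
    by_cases hn1 : 1 < n
    · rw [dif_pos (by omega : 0 < n - 1)]
      have e5 : (((n-1)-1 : ℕ) : ℤ) + 1 = (n:ℤ) - 1 := by omega
      have e6 : ((n-1)-1)+1 = n - 1 := by omega
      rw [e5, e6]
    · have hn : n = 1 := by omega
      subst hn
      rw [dif_neg (by omega : ¬ (0 < 1 - 1))]
      simp [hv0]
  rw [hT] at h'
  have hD : (if hh : n < N-1 then -(1 / d (n:ℤ)) * v (n+1) else 0)
      = -(1 / d (n:ℤ)) * (if n+1 < N then v (n+1) else 0) := by
    by_cases hsup : n + 1 < N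
    · rw [dif_pos (by omega : n < N - 1), if_pos hsup]
    · rw [dif_neg (by omega : ¬ (n < N - 1)), if_neg hsup]
      ring
  rw [hD] at h'
  set V' := (if n+1 < N then v (n+1) else 0) with hV'
  have hiso : (1 / d (n:ℤ)) * V'
      = (1 / d ((n:ℤ)-1) + 1 / d (n:ℤ) - ω^2) * v n - (1 / d ((n:ℤ)-1)) * v (n-1) := by
    linarith [h']
  have hfin : V' = d (n:ℤ) * ((1 / d ((n:ℤ)-1) + 1 / d (n:ℤ) - ω^2) * v n
      - (1 / d ((n:ℤ)-1)) * v (n-1)) := by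
    rw [← hiso]
    field_simp
  rw [hfin]
  ring

lemma flq_wronskian (d : ℤ → ℝ) (hd : ∀ j, 0 < d j) (ω : ℝ) (a b a' b' : ℝ) :
    ∀ n : ℕ, flqSeq d ω a b n * flqSeq d ω a' b' (n+1)
        - flqSeq d ω a b (n+1) * flqSeq d ω a' b' n
      = (d (n:ℤ) / d 0) * (a * b' - b * a') := by
  intro n
  induction n with
  | zero =>
      show a * b' - b * a' = (d ((0:ℕ):ℤ) / d 0) * (a * b' - b * a')
      norm_num [div_self (hd 0).ne']
  | succ m ih =>
      have hc : (d ((m:ℤ)+1) / d (m:ℤ)) * (d (m:ℤ) / d 0) = d ((m:ℤ)+1) / d 0 := by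
        field_simp
        rw [mul_comm (d (m:ℤ)) (d 0)]
        exact mul_div_mul_right _ _ (hd (m:ℤ)).ne'
      show flqSeq d ω a b (m+1) * flqSeq d ω a' b' (m+2)
          - flqSeq d ω a b (m+2) * flqSeq d ω a' b' (m+1)
        = (d (((m+1:ℕ)):ℤ) / d 0) * (a * b' - b * a')
      rw [flqSeq_rec d ω a b m, flqSeq_rec d ω a' b' m]
      have hcast : (((m+1:ℕ)):ℤ) = (m:ℤ)+1 := by push_cast; ring
      rw [hcast]
      linear_combination (d ((m:ℤ)+1) / d (m:ℤ)) * ih + (a * b' - b * a') * hc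

lemma s_eq_v (N : ℕ) (hN : 2 ≤ N) (d : ℤ → ℝ) (hd : ∀ j, 0 < d j)
    (ω : ℝ) (v : ℕ → ℝ) (hv0 : v 0 = 0)
    (heig : (KdirZ N d).mulVec (fun i => v ((i : ℕ) + 1)) =
      (ω ^ 2) • fun i : Fin (N - 1) => v ((i : ℕ) + 1)) :
    ∀ n, n ≤ N → flqSeq d ω 0 (v 1) n = (if n < N then v n else 0) := by
  have key : ∀ n, (n ≤ N → flqSeq d ω 0 (v 1) n = (if n < N then v n else 0))
      ∧ ((n+1) ≤ N → flqSeq d ω 0 (v 1) (n+1) = (if n+1 < N then v (n+1) else 0)) := by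
    intro n
    induction n with
    | zero =>
        constructor
        · intro _
          rw [if_pos (by omega : 0 < N)]
          exact hv0.symm
        · intro _
          rw [if_pos (by omega : 0 + 1 < N)]
          rfl
    | succ m ih =>
        refine ⟨ih.2, ?_⟩
        intro hm2
        have hrow := row_eq N hN d hd ω v hv0 heig (m+1) (by omega) (by omega)
        have h1 : flqSeq d ω 0 (v 1) (m+1) = v (m+1) := by
          rw [ih.2 (by omega), if_pos (by omega)]
        have h2 : flqSeq d ω 0 (v 1) m = v m := by
          rw [ih.1 (by omega), if_pos (by omega)]
        show flqSeq d ω 0 (v 1) (m+2) = if m+1+1 < N then v (m+1+1) else 0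
        rw [flqSeq_rec, h1, h2]
        have c1 : (((m+1:ℕ)):ℤ) = (m:ℤ)+1 := by push_cast; ring
        have c2 : (((m+1:ℕ)):ℤ) - 1 = (m:ℤ) := by push_cast; ring
        have c3 : (m+1) - 1 = m := by omega
        rw [c1, c3] at hrow
        rw [show ((m:ℤ)+1-1) = (m:ℤ) from by ring] at hrow
        rw [show (m+1)+1 = m+2 from rfl] at hrow
        rw [← hrow]
  exact fun n => (key n).1

/-- Fix `ω² ∈ σ(K)`.  There exists a Floquet (Bloch) solution of the infinite periodic
mass-spring chain at frequency `ω` — a nonzero sequence `(u_j)_{j∈ℤ}` with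
`u_{j+1} = d_j(1/d_j + 1/d_{j-1} - ω²) u_j - (d_j/d_{j-1}) u_{j-1}` and
`u_{j+N} = e^{iNk} u_j` for some real `k` — if and only if `|α(ω)| = 1`. -/
theorem floquet_solution_exists_iff_alpha_unimodular
    (N : ℕ) (hN : 2 ≤ N) (d : ℤ → ℝ) (hd : ∀ j, 0 < d j)
    (hper : ∀ j : ℤ, d (j + N) = d j)
    (ω : ℝ) (v : ℕ → ℝ) (hv0 : v 0 = 0) (hv1 : v 1 ≠ 0)
    (heig : (KdirZ N d).mulVec (fun i => v ((i : ℕ) + 1)) =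
      (ω ^ 2) • fun i : Fin (N - 1) => v ((i : ℕ) + 1))
    (α : ℝ) (hα : α = -(d 0 / d ((N : ℤ) - 1)) * (v (N - 1) / v 1)) :
    (∃ (u : ℤ → ℂ) (k : ℝ),
        (∃ j, u j ≠ 0) ∧
        (∀ j : ℤ, u (j + 1) =
          ((d j * (1 / d j + 1 / d (j - 1) - ω ^ 2) : ℝ) : ℂ) * u j
            - ((d j / d (j - 1) : ℝ) : ℂ) * u (j - 1)) ∧
        (∀ j : ℤ, u (j + N) = Complex.exp (Complex.I * N * k) * u j)) ↔
      |α| = 1 := by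

  have hM0 : 0 < (N:ℤ) := by exact_mod_cast (by omega : 0 < N)
  have hsv := s_eq_v N hN d hd ω v hv0 heig
  have hsN : flqSeq d ω 0 (v 1) N = 0 := by
    rw [hsv N le_rfl, if_neg (lt_irrefl N)]
  have hsn : ∀ n, n < N → flqSeq d ω 0 (v 1) n = v n := fun n h => by
    rw [hsv n (le_of_lt h), if_pos h]
  have hdN : d (N:ℤ) = d 0 := by have := hper 0; rwa [zero_add] at this
  have hαv : -(d 0 / d ((N:ℤ) - 1)) * v (N-1) = α * v 1 := by
    rw [hα, mul_assoc, div_mul_cancel₀ _ hv1]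
  have hsN1 : flqSeq d ω 0 (v 1) (N+1) = α * v 1 := by
    have hr := flqSeq_rec d ω 0 (v 1) (N-2)
    have c0 : (N-2) + 2 = N := by omega
    have c1 : (N-2) + 1 = N-1 := by omega
    have c2 : (((N-2:ℕ)):ℤ) = (N:ℤ) - 2 := by omega
    rw [c0, c1, c2] at hr
    rw [show ((N:ℤ) - 2 + 1) = (N:ℤ) - 1 from by ring] at hr
    have hr' := flqSeq_rec d ω 0 (v 1) (N-1)
    have c3 : (N-1) + 2 = N+1 := by omega
    have c4 : (N-1) + 1 = N := by omega
    have c5 : (((N-1:ℕ)):ℤ) = (N:ℤ) - 1 := by omega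
    rw [c3, c4, c5] at hr'
    rw [show ((N:ℤ) - 1 + 1) = (N:ℤ) from by ring, hdN, hsN] at hr'
    rw [hr', hsn (N-1) (by omega), ← hαv]
    ring
  have hrecN0 : (0:ℝ) = d ((N:ℤ)-1) * (1/d ((N:ℤ)-1) + 1/d ((N:ℤ)-2) - ω^2) * v (N-1)
      - (d ((N:ℤ)-1)/d ((N:ℤ)-2)) * v (N-2) := by
    have hr := flqSeq_rec d ω 0 (v 1) (N-2)
    have c0 : (N-2) + 2 = N := by omega
    have c1 : (N-2) + 1 = N-1 := by omega
    have c2 : (((N-2:ℕ)):ℤ) = (N:ℤ) - 2 := by omega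
    rw [c0, c1, c2, show ((N:ℤ) - 2 + 1) = (N:ℤ) - 1 from by ring, hsN,
      hsn (N-1) (by omega), hsn (N-2) (by omega)] at hr
    exact hr
  have hv1C : ((v 1 : ℝ) : ℂ) ≠ 0 := Complex.ofReal_ne_zero.mpr hv1
  constructor
  · rintro ⟨u, k, ⟨j0, hj0⟩, hrec, hflo⟩
    set μ := Complex.exp (Complex.I * N * k) with hμ
    have hμ1 : ‖μ‖ = 1 := by
      rw [hμ, Complex.norm_exp]
      have : (Complex.I * N * k).re = 0 := by simp
      rw [this, Real.exp_zero]
    have hμ0 : μ ≠ 0 := Complex.exp_ne_zero _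
    -- recurrence in ℕ form
    have hurecN : ∀ n : ℕ, (fun m : ℕ => u (m:ℤ)) (n+2)
        = ((d ((n:ℤ)+1) * (1/d ((n:ℤ)+1) + 1/d (n:ℤ) - ω^2) : ℝ) : ℂ) * (fun m : ℕ => u (m:ℤ)) (n+1)
          - ((d ((n:ℤ)+1) / d (n:ℤ) : ℝ) : ℂ) * (fun m : ℕ => u (m:ℤ)) n := by
      intro n
      have h := hrec ((n:ℤ)+1)
      rw [show ((n:ℤ)+1+1) = (((n+2:ℕ)):ℤ) from by push_cast; ring,
        show ((n:ℤ)+1-1) = ((n:ℕ):ℤ) from by push_cast; ring] at h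
      simpa using h
    set comb : ℕ → ℂ := fun n => u 0 * ((flqSeq d ω 1 0 n : ℝ) : ℂ)
        + (u 1 / ((v 1 : ℝ):ℂ)) * ((flqSeq d ω 0 (v 1) n : ℝ) : ℂ) with hcomb
    have hcombrec : ∀ n : ℕ, comb (n+2)
        = ((d ((n:ℤ)+1) * (1/d ((n:ℤ)+1) + 1/d (n:ℤ) - ω^2) : ℝ) : ℂ) * comb (n+1)
          - ((d ((n:ℤ)+1) / d (n:ℤ) : ℝ) : ℂ) * comb n := by
      intro n
      rw [hcomb]
      simp only [flqSeq_rec d ω 1 0 n, flqSeq_rec d ω 0 (v 1) n]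
      push_cast
      ring
    have hu_eq : ∀ n : ℕ, u (n:ℤ) = comb n := by
      refine flq_unique hurecN hcombrec ?_ ?_
      · show u ((0:ℕ):ℤ) = comb 0
        rw [hcomb]
        show u 0 = u 0 * ((1:ℝ):ℂ) + (u 1 / ((v 1:ℝ):ℂ)) * (((0:ℝ)):ℂ)
        simp
      · show u ((1:ℕ):ℤ) = comb 1
        rw [hcomb]
        show u 1 = u 0 * (((0:ℝ)):ℂ) + (u 1 / ((v 1:ℝ):ℂ)) * ((v 1 : ℝ):ℂ)
        rw [div_mul_cancel₀ _ hv1C]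
        simp
    have hflo0 : u (N:ℤ) = μ * u 0 := by
      have := hflo 0; rwa [zero_add] at this
    have hflo1 : u (((N+1:ℕ)):ℤ) = μ * u 1 := by
      have := hflo 1
      rwa [show ((1:ℤ) + (N:ℤ)) = (((N+1:ℕ)):ℤ) from by push_cast; ring] at this
    have eq1 : μ * u 0 = u 0 * ((flqSeq d ω 1 0 N : ℝ) : ℂ) := by
      rw [← hflo0, hu_eq N, hcomb]
      simp [hsN]
    have eq2 : μ * u 1 = u 0 * ((flqSeq d ω 1 0 (N+1) : ℝ) : ℂ) + ((α:ℝ):ℂ) * u 1 := by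
      rw [← hflo1, hu_eq (N+1), hcomb]
      simp only [hsN1]
      push_cast
      rw [div_mul_eq_mul_div, mul_comm ((α:ℝ):ℂ) (u 1)]
      congr 1
      field_simp
    have hne : ¬(u 0 = 0 ∧ u 1 = 0) := by
      rintro ⟨h0, h1⟩
      have hzero : ∀ n : ℕ, u (n:ℤ) = 0 := by
        have := flq_unique
          (C := fun n : ℕ => ((d ((n:ℤ)+1) * (1/d ((n:ℤ)+1) + 1/d (n:ℤ) - ω^2) : ℝ) : ℂ))
          (E := fun n : ℕ => ((d ((n:ℤ)+1) / d (n:ℤ) : ℝ) : ℂ))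
          (u := fun m : ℕ => u (m:ℤ)) (w := fun _ => 0) hurecN (by intro n; simp) ?_ ?_
        · exact this
        · show u ((0:ℕ):ℤ) = 0; simpa using h0
        · show u ((1:ℕ):ℤ) = 0; simpa using h1
      have hmul : ∀ m : ℕ, u (j0 + m * (N:ℤ)) = μ^m * u j0 := by
        intro m
        induction m with
        | zero => simp
        | succ p ih =>
            have := hflo (j0 + p * (N:ℤ))
            rw [show (j0 + (p:ℤ) * (N:ℤ) + (N:ℤ)) = j0 + ((p+1:ℕ):ℤ) * (N:ℤ) from by push_cast; ring] at this
            rw [this, ih]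
            ring
      have hpos : 0 ≤ j0 + (j0.natAbs : ℤ) * (N:ℤ) := by
        have h1' := neg_abs_le j0
        rw [Int.abs_eq_natAbs] at h1'
        nlinarith [(by positivity : (0:ℤ) ≤ (j0.natAbs : ℤ)), hM0]
      obtain ⟨n0, hn0⟩ := Int.eq_ofNat_of_zero_le hpos
      have := hmul j0.natAbs
      rw [hn0, hzero n0] at this
      exact hj0 (by
        rcases mul_eq_zero.mp this.symm with h | h
        · exact absurd h (pow_ne_zero _ hμ0)
        · exact h)
    have hW := flq_wronskian d hd ω 1 0 0 (v 1) N
    rw [hsN, hsN1, hdN, div_self (hd 0).ne'] at hW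
    have htNα : flqSeq d ω 1 0 N * α = 1 := by
      have : (flqSeq d ω 1 0 N * α) * v 1 = 1 * v 1 := by
        rw [one_mul]; nlinarith [hW]
      exact mul_right_cancel₀ hv1 this
    by_cases h0 : u 0 = 0
    · have h1 : u 1 ≠ 0 := fun h => hne ⟨h0, h⟩
      rw [h0, zero_mul, zero_add] at eq2
      have hμα : μ = ((α:ℝ):ℂ) := by
        have := eq2
        field_simp at this
        exact mul_right_cancel₀ h1 eq2
      rw [hμα, Complex.norm_real, Real.norm_eq_abs] at hμ1
      exact hμ1
    · have hμt : μ = ((flqSeq d ω 1 0 N : ℝ) : ℂ) := by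
        rw [mul_comm (u 0)] at eq1
        exact mul_right_cancel₀ h0 eq1
      rw [hμt, Complex.norm_real, Real.norm_eq_abs] at hμ1
      have : |flqSeq d ω 1 0 N| * |α| = 1 := by
        rw [← abs_mul, htNα, abs_one]
      rw [hμ1, one_mul] at this
      exact this
  · intro habs
    have hα1 : α = 1 ∨ α = -1 := (abs_eq (by norm_num : (0:ℝ) ≤ 1)).mp habs
    have hα0C : ((α:ℝ):ℂ) ≠ 0 := by
      simp only [ne_eq, Complex.ofReal_eq_zero]
      intro h
      rw [h] at habs
      norm_num at habs
    obtain ⟨k, hk⟩ : ∃ k : ℝ, Complex.exp (Complex.I * N * k) = ((α : ℝ) : ℂ) := by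
      rcases hα1 with h | h
      · exact ⟨0, by simp [h]⟩
      · refine ⟨Real.pi / N, ?_⟩
        have hN0' : (0:ℝ) < N := by exact_mod_cast (by omega : 0 < N)
        have hNC : ((N:ℕ):ℂ) ≠ 0 := Nat.cast_ne_zero.mpr (by omega)
        have harg : (Complex.I * (N:ℂ) * ((Real.pi / N : ℝ):ℂ)) = (Real.pi:ℂ) * Complex.I := by
          push_cast
          field_simp
        rw [harg, Complex.exp_pi_mul_I, h]
        norm_num
    set U : ℤ → ℂ := fun j =>
      ((α:ℝ):ℂ)^(j / (N:ℤ)) * ((flqSeq d ω 0 (v 1) ((j % (N:ℤ)).toNat) : ℝ) : ℂ) with hUdef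
    have hU : ∀ q r : ℤ, 0 ≤ r → r < (N:ℤ) →
        U (r + q * (N:ℤ)) = ((α:ℝ):ℂ)^q * ((flqSeq d ω 0 (v 1) (r.toNat) : ℝ) : ℂ) := by
      intro q r hr0 hrN
      have h1 : (r + q*(N:ℤ)) / (N:ℤ) = q := by
        rw [Int.add_mul_ediv_right _ _ (by omega : (N:ℤ) ≠ 0),
          Int.ediv_eq_zero_of_lt hr0 hrN, zero_add]
      have h2 : (r + q*(N:ℤ)) % (N:ℤ) = r := by
        rw [Int.add_mul_emod_self_right, Int.emod_eq_of_lt hr0 hrN]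
      show ((α:ℝ):ℂ)^((r + q*(N:ℤ)) / (N:ℤ))
          * ((flqSeq d ω 0 (v 1) (((r + q*(N:ℤ)) % (N:ℤ)).toNat) : ℝ) : ℂ) = _
      rw [h1, h2]
    have hdec : ∀ j : ℤ, ∃ q r, 0 ≤ r ∧ r < (N:ℤ) ∧ j = r + q * (N:ℤ) := fun j =>
      ⟨j / (N:ℤ), j % (N:ℤ), Int.emod_nonneg j (by omega), Int.emod_lt_of_pos j hM0,
        (Int.emod_add_ediv_mul j (N:ℤ)).symm⟩
    refine ⟨U, k, ⟨1, ?_⟩, ?_, ?_⟩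
    · have h1 := hU 0 1 (by norm_num) (by omega)
      rw [show (1:ℤ) + 0 * (N:ℤ) = 1 from by ring] at h1
      rw [h1, zpow_zero, one_mul]
      rw [show ((1:ℤ).toNat) = 1 from rfl]
      exact hv1C
    · intro j
      obtain ⟨q, r, hr0, hrN, rfl⟩ := hdec j
      by_cases hr00 : r = 0
      · subst hr00
        rw [show (0:ℤ) + q*(N:ℤ) + 1 = 1 + q * (N:ℤ) from by ring,
          show (0:ℤ) + q*(N:ℤ) - 1 = ((N:ℤ)-1) + (q-1) * (N:ℤ) from by ring]
        rw [hU q 1 (by norm_num) (by omega), hU (q-1) ((N:ℤ)-1) (by omega) (by omega),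
          hU q 0 le_rfl hM0]
        rw [d_per_mul hper 0 q, d_per_mul hper ((N:ℤ)-1) (q-1)]
        rw [show ((1:ℤ).toNat) = 1 from rfl, show ((0:ℤ).toNat) = 0 from rfl,
          show (((N:ℤ)-1).toNat) = N-1 from by omega]
        rw [show flqSeq d ω 0 (v 1) 0 = 0 from rfl, hsn (N-1) (by omega),
          show flqSeq d ω 0 (v 1) 1 = v 1 from rfl]
        have hz : ((α:ℝ):ℂ)^q = ((α:ℝ):ℂ)^(q-1) * ((α:ℝ):ℂ) := by
          rw [← zpow_add_one₀ hα0C, sub_add_cancel]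
        have hαvC : -(((d 0 : ℝ):ℂ) / ((d ((N:ℤ)-1) : ℝ):ℂ)) * ((v (N-1) : ℝ):ℂ)
            = ((α:ℝ):ℂ) * ((v 1 : ℝ):ℂ) := by
          exact_mod_cast congrArg (fun x : ℝ => (x:ℂ)) hαv
        push_cast
        linear_combination (-(((α:ℝ):ℂ))^(q-1)) * hαvC + ((v 1 : ℝ):ℂ) * hz
      · by_cases hrtop : r + 1 = (N:ℤ)
        · have hrval : r = (N:ℤ) - 1 := by omega
          subst hrval
          rw [show ((N:ℤ)-1) + q*(N:ℤ) + 1 = 0 + (q+1) * (N:ℤ) from by ring,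
            show ((N:ℤ)-1) + q*(N:ℤ) - 1 = ((N:ℤ)-2) + q * (N:ℤ) from by ring]
          rw [hU (q+1) 0 le_rfl hM0, hU q ((N:ℤ)-2) (by omega) (by omega),
            hU q ((N:ℤ)-1) (by omega) (by omega)]
          rw [d_per_mul hper ((N:ℤ)-1) q, d_per_mul hper ((N:ℤ)-2) q]
          rw [show ((0:ℤ).toNat) = 0 from rfl, show (((N:ℤ)-1).toNat) = N-1 from by omega,
            show (((N:ℤ)-2).toNat) = N-2 from by omega]
          rw [show flqSeq d ω 0 (v 1) 0 = 0 from rfl, hsn (N-1) (by omega), hsn (N-2) (by omega)]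
          have hC := congrArg (fun x : ℝ => (x:ℂ)) hrecN0
          push_cast at hC ⊢
          linear_combination (((α:ℝ):ℂ))^q * hC
        · obtain ⟨p, hp⟩ : ∃ p, r.toNat = p + 1 := ⟨r.toNat - 1, by omega⟩
          rw [show r + q*(N:ℤ) + 1 = (r+1) + q * (N:ℤ) from by ring,
            show r + q*(N:ℤ) - 1 = (r-1) + q * (N:ℤ) from by ring]
          rw [hU q (r+1) (by omega) (by omega), hU q (r-1) (by omega) (by omega),
            hU q r hr0 hrN]
          rw [d_per_mul hper r q, d_per_mul hper (r-1) q]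
          rw [show ((r+1).toNat) = p + 2 from by omega, show ((r-1).toNat) = p from by omega,
            show (r.toNat) = p + 1 from hp]
          rw [show r = ((p:ℕ):ℤ) + 1 from by omega]
          rw [show ((p:ℕ):ℤ) + 1 - 1 = ((p:ℕ):ℤ) from by ring]
          have hC := congrArg (fun x : ℝ => (x:ℂ)) (flqSeq_rec d ω 0 (v 1) p)
          push_cast at hC ⊢
          linear_combination (((α:ℝ):ℂ))^q * hC
    · intro j
      obtain ⟨q, r, hr0, hrN, rfl⟩ := hdec j
      rw [hk, show r + q*(N:ℤ) + (N:ℤ) = r + (q+1) * (N:ℤ) from by ring,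
        hU (q+1) r hr0 hrN, hU q r hr0 hrN, zpow_add_one₀ hα0C]
      ring
end

section
/- The infinite sequence defined by v_j = α(ω)^{⌊j/N⌋} v^ω_{j - N⌊j/N⌋} (with the convention v^ω_0 = 0) satisfies the infinite recursion v_{j+1} = d_j(1/d_j + 1/d_{j-1} - ω²)v_j - (d_j/d_{j-1})v_{j-1} for all j ∈ Z, where v^ω is the ω²-eigenvector of K. -/
lemma sum_tri (n i : ℕ) (hi : i < n) (A B : ℝ) (c x : ℕ → ℝ) :
    ∑ k ∈ Finset.range n,
        (if i = k then A else if i + 1 = k then B else if k + 1 = i then c k else 0) * x k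
      = A * x i + (if i + 1 < n then B * x (i + 1) else 0)
        + (if 1 ≤ i then c (i - 1) * x (i - 1) else 0) := by
  have hsplit : ∀ k, (if i = k then A else if i + 1 = k then B else if k + 1 = i then c k else 0) * x k
      = (if k = i then A * x k else 0) + (if k = i + 1 then B * x k else 0)
        + (if 1 ≤ i ∧ k = i - 1 then c k * x k else 0) := by
    intro k
    split_ifs <;> first | ring1 | (exfalso; omega)
  rw [Finset.sum_congr rfl (fun k _ => hsplit k), Finset.sum_add_distrib,
    Finset.sum_add_distrib, Finset.sum_ite_eq' , Finset.sum_ite_eq']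
  have h3 : (∑ k ∈ Finset.range n, if 1 ≤ i ∧ k = i - 1 then c k * x k else 0)
      = if 1 ≤ i then c (i - 1) * x (i - 1) else 0 := by
    by_cases h1 : 1 ≤ i
    · simp only [h1, true_and, if_true]
      rw [Finset.sum_ite_eq']
      simp [Finset.mem_range]; omega
    · simp [h1]
  rw [h3]
  simp [Finset.mem_range, hi]

/-- The infinite sequence `u_j = α(ω)^⌊j/N⌋ v^ω_{j - N⌊j/N⌋}` (with the convention
`v^ω_0 = 0`), built from the `ω²`-eigenvector `v^ω` of `K`, satisfies the infinite
recursion `u_{j+1} = d_j(1/d_j + 1/d_{j-1} - ω²) u_j - (d_j/d_{j-1}) u_{j-1}` for all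
`j ∈ ℤ`. -/
theorem extended_sequence_satisfies_recursion
    (N : ℕ) (hN : 2 ≤ N) (d : ℤ → ℝ) (hd : ∀ j, 0 < d j)
    (hper : ∀ j : ℤ, d (j + N) = d j)
    (ω : ℝ) (v : ℕ → ℝ) (hv0 : v 0 = 0) (hv1 : v 1 ≠ 0)
    (heig : (KdirZ N d).mulVec (fun i => v ((i : ℕ) + 1)) =
      (ω ^ 2) • fun i : Fin (N - 1) => v ((i : ℕ) + 1))
    (α : ℝ) (hα : α = -(d 0 / d ((N : ℤ) - 1)) * (v (N - 1) / v 1))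
    (u : ℤ → ℝ)
    (hu : ∀ j : ℤ, u j = α ^ (Int.fdiv j N) * v (Int.fmod j N).toNat) :
    ∀ j : ℤ, u (j + 1) =
      d j * (1 / d j + 1 / d (j - 1) - ω ^ 2) * u j - (d j / d (j - 1)) * u (j - 1) := by
  have hdne : ∀ j, d j ≠ 0 := fun j => (hd j).ne'
  have hNpos : (0 : ℤ) < (N : ℤ) := by exact_mod_cast (by omega : 0 < N)
  have hP : ∀ (k x : ℤ), d (x + N * k) = d x := by
    intro k
    induction k using Int.induction_on with
    | zero => intro x; simp
    | succ n ih =>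
      intro x
      rw [show x + (N : ℤ) * ((n : ℤ) + 1) = (x + N * n) + N by ring, hper, ih]
    | pred n ih =>
      intro x
      have h2 := hper (x + (N : ℤ) * (-(n : ℤ) - 1))
      rw [show x + (N : ℤ) * (-(n : ℤ) - 1) + N = x + N * (-(n : ℤ)) by ring] at h2
      rw [← h2, ih]
  have hrow : ∀ i : ℕ, i < N - 1 →
      (1 / d i + 1 / d ((i : ℤ) + 1)) * v (i + 1)
        + (if i + 1 < N - 1 then -(1 / d ((i : ℤ) + 1)) * v (i + 2) else 0)
        + -(1 / d (i : ℤ)) * v i = ω ^ 2 * v (i + 1) := by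
    intro i hi
    have h := congrFun heig ⟨i, hi⟩
    simp only [Matrix.mulVec, dotProduct, KdirZ, Pi.smul_apply, smul_eq_mul] at h
    rw [Fin.sum_univ_eq_sum_range (fun k : ℕ =>
      (if i = k then 1 / d (i : ℤ) + 1 / d ((i : ℤ) + 1)
        else if i + 1 = k then -(1 / d ((i : ℤ) + 1))
        else if k + 1 = i then -(1 / d ((k : ℤ) + 1)) else 0) * v (k + 1))] at h
    rw [sum_tri (N - 1) i hi _ _ _ _] at h
    by_cases h1 : 1 ≤ i
    · rw [if_pos h1] at h
      rw [show ((i - 1 : ℕ) : ℤ) + 1 = (i : ℤ) by omega, show i - 1 + 1 = i from by omega] at h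
      exact h
    · have hi0 : i = 0 := by omega
      subst hi0
      simp only [if_neg h1] at h ⊢
      rw [hv0]
      simpa using h
  have key : ∀ i : ℕ, i < N - 1 →
      (if i + 1 < N - 1 then v (i + 2) else 0)
        = d ((i : ℤ) + 1) * (1 / d ((i : ℤ) + 1) + 1 / d (i : ℤ) - ω ^ 2) * v (i + 1)
          - (d ((i : ℤ) + 1) / d (i : ℤ)) * v i := by
    intro i hi
    have h := hrow i hi
    have ha := hdne (i : ℤ)
    have hb := hdne ((i : ℤ) + 1)
    by_cases hc : i + 1 < N - 1
    · rw [if_pos hc] at h ⊢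
      field_simp at h ⊢
      first
      | linear_combination -h
      | linear_combination h
      | linear_combination (d ((i : ℤ))) * h
      | linear_combination -(d ((i : ℤ))) * h
      | linear_combination (d ((i : ℤ) + 1)) * h
      | linear_combination -(d ((i : ℤ) + 1)) * h
      | linear_combination (d ((i : ℤ)) * d ((i : ℤ) + 1)) * h
      | linear_combination -(d ((i : ℤ)) * d ((i : ℤ) + 1)) * h
    · rw [if_neg hc] at h ⊢
      field_simp at h ⊢
      first
      | linear_combination -(d ((i : ℤ) + 1)) * h
      | linear_combination (d ((i : ℤ) + 1)) * h
      | linear_combination -h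
      | linear_combination h
      | linear_combination (d ((i : ℤ))) * h
      | linear_combination -(d ((i : ℤ))) * h
      | linear_combination (d ((i : ℤ)) * d ((i : ℤ) + 1)) * h
      | linear_combination -(d ((i : ℤ)) * d ((i : ℤ) + 1)) * h
  have hvanish : v (N - 1) = 0 → ∀ k, k ≤ N - 1 → v (N - 1 - k) = 0 := by
    intro h0 k
    induction k using Nat.strong_induction_on with
    | _ k ih =>
      intro hk
      match k with
      | 0 => simpa using h0
      | (k + 1) =>
        have hik : N - 1 - k - 1 < N - 1 := by omega
        have h := key (N - 1 - k - 1) hik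
        have e1 : N - 1 - k - 1 + 1 = N - 1 - k := by omega
        rw [e1] at h
        rw [ih k (by omega) (by omega)] at h
        have hz : (if N - 1 - k - 1 + 1 < N - 1 then v (N - 1 - k - 1 + 2) else 0) = 0 := by
          by_cases hc : N - 1 - k - 1 + 1 < N - 1
          · rw [if_pos hc]
            have e3 : N - 1 - k - 1 + 2 = N - 1 - (k - 1) := by omega
            rw [e3]
            exact ih (k - 1) (by omega) (by omega)
          · rw [if_neg hc]
        rw [e1] at hz
        rw [hz] at h
        have hba : d (((N - 1 - k - 1 : ℕ) : ℤ) + 1) / d ((N - 1 - k - 1 : ℕ) : ℤ) ≠ 0 :=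
          div_ne_zero (hdne _) (hdne _)
        have hx : d (((N - 1 - k - 1 : ℕ) : ℤ) + 1) / d ((N - 1 - k - 1 : ℕ) : ℤ)
            * v (N - 1 - k - 1) = 0 := by linear_combination h
        have hv : v (N - 1 - k - 1) = 0 := (mul_eq_zero.mp hx).resolve_left hba
        rw [show N - 1 - (k + 1) = N - 1 - k - 1 by omega]
        exact hv
  have hvN1 : v (N - 1) ≠ 0 := by
    intro h0
    have := hvanish h0 (N - 2) (by omega)
    rw [show N - 1 - (N - 2) = 1 by omega] at this
    exact hv1 this
  have hα0 : α ≠ 0 := by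
    rw [hα]
    exact mul_ne_zero (neg_ne_zero.mpr (div_ne_zero (hdne 0) (hdne _)))
      (div_ne_zero hvN1 hv1)
  have hαv : α * v 1 = -(d 0 / d ((N : ℤ) - 1)) * v (N - 1) := by
    rw [hα, mul_assoc, div_mul_cancel₀ _ hv1]
  have hdm : ∀ q r : ℤ, 0 ≤ r → r < N → (Int.fdiv ((N : ℤ) * q + r) N = q ∧
      Int.fmod ((N : ℤ) * q + r) N = r) := by
    intro q r h0 h1
    constructor
    · rw [Int.fdiv_eq_ediv_of_nonneg _ hNpos.le, show (N : ℤ) * q + r = r + (N : ℤ) * q by ring,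
        Int.add_mul_ediv_left r q hNpos.ne', Int.ediv_eq_zero_of_lt h0 h1, zero_add]
    · rw [Int.fmod_eq_emod_of_nonneg _ hNpos.le, show (N : ℤ) * q + r = r + (N : ℤ) * q by ring,
        Int.add_mul_emod_self_left, Int.emod_eq_of_lt h0 h1]
  have hu' : ∀ (q r : ℤ), 0 ≤ r → r < N → u ((N : ℤ) * q + r) = α ^ q * v r.toNat := by
    intro q r h0 h1
    rw [hu, (hdm q r h0 h1).1, (hdm q r h0 h1).2]
  intro j
  set q := Int.fdiv j (N : ℤ) with hq
  have hmod0 : 0 ≤ Int.fmod j (N : ℤ) := by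
    rw [Int.fmod_eq_emod_of_nonneg _ hNpos.le]; exact Int.emod_nonneg j hNpos.ne'
  have hmodN : Int.fmod j (N : ℤ) < N := Int.fmod_lt_of_pos j hNpos
  obtain ⟨m, hm⟩ : ∃ m : ℕ, Int.fmod j (N : ℤ) = (m : ℤ) :=
    ⟨(Int.fmod j (N : ℤ)).toNat, (Int.toNat_of_nonneg hmod0).symm⟩
  have hj : j = (N : ℤ) * q + m := by
    have := Int.fmod_add_fdiv_mul j (N : ℤ)
    rw [hm, ← hq] at this; linarith
  have hmN : m < N := by exact_mod_cast hm ▸ hmodN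
  rcases Nat.eq_zero_or_pos m with h0 | h1
  · -- m = 0 : cell boundary
    rw [h0] at hj
    norm_num at hj
    have e1 : j + 1 = (N : ℤ) * q + 1 := by rw [hj]
    have e2 : j - 1 = (N : ℤ) * (q - 1) + ((N : ℤ) - 1) := by rw [hj]; ring
    have hu1 : u (j + 1) = α ^ q * v 1 := by
      rw [e1, hu' q 1 (by omega) (by omega)]
      norm_num
    have hu2 : u j = 0 := by
      rw [hj, show (N : ℤ) * q = (N : ℤ) * q + 0 by ring, hu' q 0 le_rfl hNpos]
      simp [hv0]
    have hu3 : u (j - 1) = α ^ (q - 1) * v (N - 1) := by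
      rw [e2, hu' (q - 1) _ (by omega) (by omega)]
      congr 2 <;> omega
    have hdj : d j = d 0 := by
      rw [hj, show (N : ℤ) * q = 0 + (N : ℤ) * q by ring, hP]
    have hdj1 : d (j - 1) = d ((N : ℤ) - 1) := by
      rw [e2, show (N : ℤ) * (q - 1) + ((N : ℤ) - 1) = ((N : ℤ) - 1) + (N : ℤ) * (q - 1) by ring,
        hP]
    rw [hu1, hu2, hu3, hdj, hdj1]
    have hzp : α ^ q = α ^ (q - 1) * α := by
      rw [← zpow_add_one₀ hα0 (q - 1)]; norm_num
    rw [hzp]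
    calc α ^ (q - 1) * α * v 1 = α ^ (q - 1) * (α * v 1) := by ring
    _ = α ^ (q - 1) * (-(d 0 / d ((N : ℤ) - 1)) * v (N - 1)) := by rw [hαv]
    _ = _ := by ring
  · rcases eq_or_lt_of_le (Nat.succ_le_of_lt hmN) with h2 | h2
    · -- m = N - 1 : end of cell
      have hmn : (m : ℤ) = (N : ℤ) - 1 := by omega
      have e1 : j + 1 = (N : ℤ) * (q + 1) + 0 := by rw [hj, hmn]; ring
      have e2 : j - 1 = (N : ℤ) * q + ((N : ℤ) - 2) := by rw [hj, hmn]; ring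
      have hu1 : u (j + 1) = 0 := by
        rw [e1, hu' (q + 1) 0 le_rfl hNpos]
        simp [hv0]
      have hu2 : u j = α ^ q * v (N - 1) := by
        rw [hj, hmn, hu' q ((N : ℤ) - 1) (by omega) (by omega)]
        congr 2 <;> omega
      have hu3 : u (j - 1) = α ^ q * v (N - 2) := by
        rw [e2, hu' q ((N : ℤ) - 2) (by omega) (by omega)]
        congr 2 <;> omega
      have hdj : d j = d ((N : ℤ) - 1) := by
        rw [hj, hmn, show (N : ℤ) * q + ((N : ℤ) - 1) = ((N : ℤ) - 1) + (N : ℤ) * q by ring, hP]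
      have hdj1 : d (j - 1) = d ((N : ℤ) - 2) := by
        rw [e2, show (N : ℤ) * q + ((N : ℤ) - 2) = ((N : ℤ) - 2) + (N : ℤ) * q by ring, hP]
      rw [hu1, hu2, hu3, hdj, hdj1]
      have h := key (N - 2) (by omega)
      rw [if_neg (by omega)] at h
      rw [show ((N - 2 : ℕ) : ℤ) + 1 = (N : ℤ) - 1 by omega,
        show ((N - 2 : ℕ) : ℤ) = (N : ℤ) - 2 by omega,
        show N - 2 + 1 = N - 1 by omega] at h
      linear_combination (α ^ q) * h
    · -- middle of the cell : 1 ≤ m ≤ N - 2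
      have hm2 : m + 1 < N := h2
      have e1 : j + 1 = (N : ℤ) * q + ((m : ℤ) + 1) := by omega
      have e2 : j - 1 = (N : ℤ) * q + ((m : ℤ) - 1) := by omega
      have hu1 : u (j + 1) = α ^ q * v (m + 1) := by
        rw [e1, hu' q ((m : ℤ) + 1) (by omega) (by omega)]
        congr 2 <;> omega
      have hu2 : u j = α ^ q * v m := by
        rw [hj, hu' q (m : ℤ) (by omega) (by omega)]
        congr 2 <;> omega
      have hu3 : u (j - 1) = α ^ q * v (m - 1) := by
        rw [e2, hu' q ((m : ℤ) - 1) (by omega) (by omega)]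
        congr 2 <;> omega
      have hdj : d j = d (m : ℤ) := by
        rw [hj, show (N : ℤ) * q + (m : ℤ) = (m : ℤ) + (N : ℤ) * q by ring, hP]
      have hdj1 : d (j - 1) = d ((m : ℤ) - 1) := by
        rw [e2, show (N : ℤ) * q + ((m : ℤ) - 1) = ((m : ℤ) - 1) + (N : ℤ) * q by ring, hP]
      rw [hu1, hu2, hu3, hdj, hdj1]
      have h := key (m - 1) (by omega)
      rw [if_pos (by omega)] at h
      rw [show ((m - 1 : ℕ) : ℤ) + 1 = (m : ℤ) by omega,
        show ((m - 1 : ℕ) : ℤ) = (m : ℤ) - 1 by omega,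
        show m - 1 + 1 = m by omega, show m - 1 + 2 = m + 1 by omega] at h
      linear_combination (α ^ q) * h
end

section
/- (Three-gap structure of the generated set) For any N ≥ 2 and θ ∈ (0,1), the set of gaps {x_{i+1} − x_i : i = 0,...,N−1} (with x_N = 1) of the sorted points {frac(jθ) : j = 0,...,N−1} has at most 3 distinct elements. -/
lemma tg_eq_of_sub_int {u v : ℝ} {z : ℤ} (h : u - v = z)
    (hu0 : 0 ≤ u) (hu1 : u < 1) (hv0 : 0 ≤ v) (hv1 : v < 1) : u = v := by
  have h1 : (z : ℝ) < 1 := by linarith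
  have h2 : (-1 : ℝ) < z := by linarith
  have h3 : z < 1 := by exact_mod_cast h1
  have h4 : -1 < z := by exact_mod_cast h2
  have : z = 0 := by omega
  rw [this] at h; push_cast at h; linarith

lemma tg_gap_eq {u w s c : ℝ} (hu : 0 ≤ u) (hw : w < 1) (hs0 : 0 ≤ s) (hs1 : s < 1)
    (huw : u < w) (hc : 0 < c) (hc2 : c < 2) (hcG : c ≤ w - u)
    (hsucc : u < s → w ≤ s) (hz : ∃ z : ℤ, s - u - c = z) : w - u = c := by
  obtain ⟨z, hz⟩ := hz
  have hu1 : u < 1 := lt_trans huw hw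
  have hz0 : z = 0 ∨ z = -1 ∨ z = -2 := by
    have h1 : (z : ℝ) < 1 := by linarith
    have h2 : (-3 : ℝ) < z := by linarith
    have h3 : z < 1 := by exact_mod_cast h1
    have h4 : -3 < z := by exact_mod_cast h2
    omega
  rcases hz0 with h | h | h
  · rw [h] at hz; push_cast at hz
    have hs : s = u + c := by linarith
    have := hsucc (by linarith)
    linarith
  · rw [h] at hz; push_cast at hz
    by_cases hus : u < s
    · have := hsucc hus; linarith
    · push_neg at hus; linarith
  · rw [h] at hz; push_cast at hz
    linarith

lemma tg_congr {θ : ℝ} (m n : ℕ) {c : ℝ} (hz : ∃ z : ℤ, ((m : ℝ) - n) * θ - c = z) :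
    ∃ z : ℤ, Int.fract ((m : ℝ) * θ) - Int.fract ((n : ℝ) * θ) - c = z := by
  obtain ⟨z, hz⟩ := hz
  exact ⟨z - ⌊(m : ℝ) * θ⌋ + ⌊(n : ℝ) * θ⌋, by simp only [Int.fract]; push_cast; linarith⟩

lemma tg_caseI (N : ℕ) (hN : 2 ≤ N) (θ : ℝ) (hθ : θ ∈ Set.Ioo (0 : ℝ) 1)
    (hnz : ∀ k : ℕ, 1 ≤ k → k < N → Int.fract ((k : ℝ) * θ) ≠ 0) :
    ∃ v1 v2 v3 : ℝ,
      (∀ j k : ℕ, j < N → k < N → Int.fract ((j : ℝ) * θ) < Int.fract ((k : ℝ) * θ) →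
        (∀ m : ℕ, m < N → Int.fract ((j : ℝ) * θ) < Int.fract ((m : ℝ) * θ) →
          Int.fract ((k : ℝ) * θ) ≤ Int.fract ((m : ℝ) * θ)) →
        (Int.fract ((k : ℝ) * θ) - Int.fract ((j : ℝ) * θ) = v1 ∨
         Int.fract ((k : ℝ) * θ) - Int.fract ((j : ℝ) * θ) = v2 ∨
         Int.fract ((k : ℝ) * θ) - Int.fract ((j : ℝ) * θ) = v3)) ∧
      (∀ j : ℕ, j < N → (∀ m : ℕ, m < N → Int.fract ((m : ℝ) * θ) ≤ Int.fract ((j : ℝ) * θ)) →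
        (1 - Int.fract ((j : ℝ) * θ) = v1 ∨ 1 - Int.fract ((j : ℝ) * θ) = v2 ∨
         1 - Int.fract ((j : ℝ) * θ) = v3)) := by
  classical
  obtain ⟨hθ0, hθ1⟩ := hθ
  -- the minimizers
  obtain ⟨a0, ha0T, ha0min⟩ := Finset.exists_min_image (Finset.Ico 1 N)
    (fun k : ℕ => Int.fract ((k : ℝ) * θ)) ⟨1, by simp [Finset.mem_Ico]; omega⟩
  have hexa : ∃ k, k ∈ Finset.Ico 1 N ∧
      Int.fract ((k : ℝ) * θ) = Int.fract ((a0 : ℝ) * θ) := ⟨a0, ha0T, rfl⟩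
  set a := Nat.find hexa with hadef
  obtain ⟨haT, hae⟩ := Nat.find_spec hexa
  rw [Finset.mem_Ico] at haT
  obtain ⟨ha1, haN⟩ := haT
  set mp := Int.fract ((a : ℝ) * θ) with hmpdef
  have hmpmin : ∀ k : ℕ, 1 ≤ k → k < N → mp ≤ Int.fract ((k : ℝ) * θ) := by
    intro k h1 h2
    exact hae.trans_le (ha0min k (Finset.mem_Ico.mpr ⟨h1, h2⟩))
  have hmpleast : ∀ k : ℕ, 1 ≤ k → k < a → mp < Int.fract ((k : ℝ) * θ) := by
    intro k h1 h2
    have hne := Nat.find_min hexa h2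
    have hkN : k < N := by omega
    have : Int.fract ((k : ℝ) * θ) ≠ Int.fract ((a0 : ℝ) * θ) := by
      intro h; exact hne ⟨Finset.mem_Ico.mpr ⟨h1, hkN⟩, h⟩
    have h3 := hmpmin k h1 hkN
    exact lt_of_le_of_ne h3 (fun hh => this (hh.symm.trans hae))
  have hmp0 : 0 < mp := lt_of_le_of_ne (Int.fract_nonneg _) (Ne.symm (hnz a ha1 haN))
  have hmp1 : mp < 1 := Int.fract_lt_one _
  obtain ⟨b0, hb0T, hb0min⟩ := Finset.exists_min_image (Finset.Ico 1 N)
    (fun k : ℕ => 1 - Int.fract ((k : ℝ) * θ)) ⟨1, by simp [Finset.mem_Ico]; omega⟩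
  have hexb : ∃ k, k ∈ Finset.Ico 1 N ∧
      1 - Int.fract ((k : ℝ) * θ) = 1 - Int.fract ((b0 : ℝ) * θ) := ⟨b0, hb0T, rfl⟩
  set b := Nat.find hexb with hbdef
  obtain ⟨hbT, hbe⟩ := Nat.find_spec hexb
  rw [Finset.mem_Ico] at hbT
  obtain ⟨hb1, hbN⟩ := hbT
  set mm := 1 - Int.fract ((b : ℝ) * θ) with hmmdef
  have hmmmin : ∀ k : ℕ, 1 ≤ k → k < N → mm ≤ 1 - Int.fract ((k : ℝ) * θ) := by
    intro k h1 h2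
    exact hbe.trans_le (hb0min k (Finset.mem_Ico.mpr ⟨h1, h2⟩))
  have hmmleast : ∀ k : ℕ, 1 ≤ k → k < b → mm < 1 - Int.fract ((k : ℝ) * θ) := by
    intro k h1 h2
    have hne := Nat.find_min hexb h2
    have hkN : k < N := by omega
    have : 1 - Int.fract ((k : ℝ) * θ) ≠ 1 - Int.fract ((b0 : ℝ) * θ) := by
      intro h; exact hne ⟨Finset.mem_Ico.mpr ⟨h1, hkN⟩, h⟩
    have h3 := hmmmin k h1 hkN
    exact lt_of_le_of_ne h3 (fun hh => this (hh.symm.trans hbe))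
  have hmm0 : 0 < mm := by
    rw [hmmdef]; linarith [Int.fract_lt_one ((b : ℝ) * θ)]
  have hmm1 : mm ≤ 1 := by
    rw [hmmdef]; linarith [Int.fract_nonneg ((b : ℝ) * θ)]
  -- strengthened lower bounds
  have P3 : ∀ d : ℕ, 1 ≤ d → d < a → mp + mm ≤ Int.fract ((d : ℝ) * θ) := by
    intro d h1 h2
    have hlt : mp < Int.fract ((d : ℝ) * θ) := hmpleast d h1 h2
    have hsub : ((a - d : ℕ) : ℝ) = (a : ℝ) - d := by
      push_cast [Nat.cast_sub h2.le]; ring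
    obtain ⟨z, hz⟩ := tg_congr (θ := θ) d a
      (c := 1 - Int.fract (((a - d : ℕ) : ℝ) * θ))
      ⟨-1 - ⌊((a - d : ℕ) : ℝ) * θ⌋, by simp only [Int.fract]; rw [hsub]; push_cast; ring⟩
    have heq : Int.fract ((d : ℝ) * θ) - Int.fract ((a : ℝ) * θ)
        = 1 - Int.fract (((a - d : ℕ) : ℝ) * θ) := by
      refine tg_eq_of_sub_int hz ?_ ?_ ?_ ?_
      · rw [← hmpdef]; linarith
      · linarith [Int.fract_lt_one ((d : ℝ) * θ), Int.fract_nonneg ((a : ℝ) * θ), hmp0,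
          hmpdef]
      · linarith [Int.fract_lt_one (((a - d : ℕ) : ℝ) * θ)]
      · have := hnz (a - d) (by omega) (by omega)
        have h0 := Int.fract_nonneg (((a - d : ℕ) : ℝ) * θ)
        rcases lt_or_eq_of_le h0 with h | h
        · linarith
        · exact absurd h.symm this
    have := hmmmin (a - d) (by omega) (by omega)
    rw [← hmpdef] at heq
    linarith
  have P4 : ∀ e : ℕ, 1 ≤ e → e < b → mp + mm ≤ 1 - Int.fract ((e : ℝ) * θ) := by
    intro e h1 h2
    have hlt : mm < 1 - Int.fract ((e : ℝ) * θ) := hmmleast e h1 h2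
    have hsub : ((b - e : ℕ) : ℝ) = (b : ℝ) - e := by
      push_cast [Nat.cast_sub h2.le]; ring
    obtain ⟨z, hz⟩ := tg_congr (θ := θ) b e
      (c := Int.fract (((b - e : ℕ) : ℝ) * θ))
      ⟨⌊((b - e : ℕ) : ℝ) * θ⌋, by simp only [Int.fract]; rw [hsub]; push_cast; ring⟩
    have heq : Int.fract ((b : ℝ) * θ) - Int.fract ((e : ℝ) * θ)
        = Int.fract (((b - e : ℕ) : ℝ) * θ) := by
      refine tg_eq_of_sub_int hz ?_ ?_ (Int.fract_nonneg _) (Int.fract_lt_one _)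
      · rw [hmmdef] at hlt; linarith
      · linarith [Int.fract_lt_one ((b : ℝ) * θ), Int.fract_nonneg ((e : ℝ) * θ)]
    have := hmpmin (b - e) (by omega) (by omega)
    rw [hmmdef]
    linarith
  -- the "middle" step
  have middle : ∀ j k : ℕ, j < N → k < N →
      Int.fract ((j : ℝ) * θ) < Int.fract ((k : ℝ) * θ) →
      (∀ m : ℕ, m < N → Int.fract ((j : ℝ) * θ) < Int.fract ((m : ℝ) * θ) →
        Int.fract ((k : ℝ) * θ) ≤ Int.fract ((m : ℝ) * θ)) →
      mp + mm ≤ Int.fract ((k : ℝ) * θ) - Int.fract ((j : ℝ) * θ) →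
      (Int.fract ((k : ℝ) * θ) - Int.fract ((j : ℝ) * θ) = mp ∨
       Int.fract ((k : ℝ) * θ) - Int.fract ((j : ℝ) * θ) = mm ∨
       Int.fract ((k : ℝ) * θ) - Int.fract ((j : ℝ) * θ) = mp + mm) := by
    intro j k hj hk hlt hsucc hlow
    by_cases hja : j + a < N
    · left
      refine tg_gap_eq (Int.fract_nonneg _) (Int.fract_lt_one _) (Int.fract_nonneg _)
        (Int.fract_lt_one _) hlt hmp0 (by linarith) (by linarith)
        (fun h => hsucc (j + a) hja h) ?_
      refine tg_congr (j + a) j ⟨⌊(a : ℝ) * θ⌋, ?_⟩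
      rw [hmpdef]; simp only [Int.fract]; push_cast; ring
    · push_neg at hja
      by_cases hjb : b ≤ j
      · right; left
        have hsubj : ((j - b : ℕ) : ℝ) = (j : ℝ) - b := by
          push_cast [Nat.cast_sub hjb]; ring
        refine tg_gap_eq (Int.fract_nonneg _) (Int.fract_lt_one _) (Int.fract_nonneg _)
          (Int.fract_lt_one _) hlt hmm0 (by linarith) (by linarith)
          (fun h => hsucc (j - b) (by omega) h) ?_
        refine tg_congr (j - b) j ⟨-1 - ⌊(b : ℝ) * θ⌋, ?_⟩
        rw [hmmdef]; simp only [Int.fract]; rw [hsubj]; push_cast; ring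
      · push_neg at hjb
        right; right
        have hbja : b ≤ j + a := by omega
        have hidx : j + a - b < N := by omega
        have hsubj : ((j + a - b : ℕ) : ℝ) = (j : ℝ) + a - b := by
          push_cast [Nat.cast_sub hbja]; ring
        refine tg_gap_eq (Int.fract_nonneg _) (Int.fract_lt_one _) (Int.fract_nonneg _)
          (Int.fract_lt_one _) hlt (by linarith) (by linarith) hlow
          (fun h => hsucc (j + a - b) hidx h) ?_
        refine tg_congr (j + a - b) j ⟨⌊(a : ℝ) * θ⌋ - 1 - ⌊(b : ℝ) * θ⌋, ?_⟩
        rw [hmmdef, hmpdef]; simp only [Int.fract]; rw [hsubj]; push_cast; ring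
  refine ⟨mp, mm, mp + mm, ?_, ?_⟩
  · intro j k hj hk hlt hsucc
    have hG0 : 0 < Int.fract ((k : ℝ) * θ) - Int.fract ((j : ℝ) * θ) := by linarith
    have hG1 : Int.fract ((k : ℝ) * θ) - Int.fract ((j : ℝ) * θ) < 1 := by
      linarith [Int.fract_lt_one ((k : ℝ) * θ), Int.fract_nonneg ((j : ℝ) * θ)]
    rcases Nat.lt_or_ge j k with hjk | hjk
    · -- d = k - j
      have hsub : ((k - j : ℕ) : ℝ) = (k : ℝ) - j := by
        push_cast [Nat.cast_sub hjk.le]; ring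
      have hGd : Int.fract ((k : ℝ) * θ) - Int.fract ((j : ℝ) * θ)
          = Int.fract (((k - j : ℕ) : ℝ) * θ) := by
        obtain ⟨z, hz⟩ := tg_congr (θ := θ) k j
          (c := Int.fract (((k - j : ℕ) : ℝ) * θ))
          ⟨⌊((k - j : ℕ) : ℝ) * θ⌋, by simp only [Int.fract]; rw [hsub]; push_cast; ring⟩
        exact tg_eq_of_sub_int hz hG0.le hG1 (Int.fract_nonneg _) (Int.fract_lt_one _)
      by_cases hda : a ≤ k - j
      · left
        have hlow : mp ≤ Int.fract ((k : ℝ) * θ) - Int.fract ((j : ℝ) * θ) := by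
          rw [hGd]; exact hmpmin (k - j) (by omega) (by omega)
        refine tg_gap_eq (Int.fract_nonneg _) (Int.fract_lt_one _) (Int.fract_nonneg _)
          (Int.fract_lt_one _) hlt hmp0 (by linarith) hlow
          (fun h => hsucc (j + a) (by omega) h) ?_
        refine tg_congr (j + a) j ⟨⌊(a : ℝ) * θ⌋, ?_⟩
        rw [hmpdef]; simp only [Int.fract]; push_cast; ring
      · push_neg at hda
        have hlow : mp + mm ≤ Int.fract ((k : ℝ) * θ) - Int.fract ((j : ℝ) * θ) := by
          rw [hGd]; exact P3 (k - j) (by omega) hda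
        exact middle j k hj hk hlt hsucc hlow
    · -- k < j, e = j - k
      have hkj : k < j := by
        rcases Nat.eq_or_lt_of_le hjk with h | h
        · subst h; exact absurd hlt (lt_irrefl _)
        · exact h
      have hsub : ((j - k : ℕ) : ℝ) = (j : ℝ) - k := by
        push_cast [Nat.cast_sub hkj.le]; ring
      have hGe : Int.fract (((j - k : ℕ) : ℝ) * θ)
          = 1 - (Int.fract ((k : ℝ) * θ) - Int.fract ((j : ℝ) * θ)) := by
        have hz : Int.fract (((j - k : ℕ) : ℝ) * θ)
            - (1 - (Int.fract ((k : ℝ) * θ) - Int.fract ((j : ℝ) * θ)))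
            = ((⌊(j : ℝ) * θ⌋ - ⌊(k : ℝ) * θ⌋ - ⌊((j - k : ℕ) : ℝ) * θ⌋ - 1 : ℤ) : ℝ) := by
          simp only [Int.fract]; rw [hsub]; push_cast; ring
        exact tg_eq_of_sub_int hz (Int.fract_nonneg _) (Int.fract_lt_one _)
          (by linarith) (by linarith)
      by_cases heb : b ≤ j - k
      · right; left
        have hlow : mm ≤ Int.fract ((k : ℝ) * θ) - Int.fract ((j : ℝ) * θ) := by
          have := hmmmin (j - k) (by omega) (by omega)
          linarith [hGe]
        have hbj : b ≤ j := by omega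
        have hsubj : ((j - b : ℕ) : ℝ) = (j : ℝ) - b := by
          push_cast [Nat.cast_sub hbj]; ring
        refine tg_gap_eq (Int.fract_nonneg _) (Int.fract_lt_one _) (Int.fract_nonneg _)
          (Int.fract_lt_one _) hlt hmm0 (by linarith) hlow
          (fun h => hsucc (j - b) (by omega) h) ?_
        refine tg_congr (j - b) j ⟨-1 - ⌊(b : ℝ) * θ⌋, ?_⟩
        rw [hmmdef]; simp only [Int.fract]; rw [hsubj]; push_cast; ring
      · push_neg at heb
        have hlow : mp + mm ≤ Int.fract ((k : ℝ) * θ) - Int.fract ((j : ℝ) * θ) := by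
          have := P4 (j - k) (by omega) heb
          linarith [hGe]
        exact middle j k hj hk hlt hsucc hlow
  · intro j hj hmax
    have hjb := hmax b (by omega)
    have hj1 : 1 ≤ j := by
      by_contra h
      push_neg at h
      interval_cases j
      have h1 := hmax 1 (by omega)
      simp only [Nat.cast_zero, zero_mul, Int.fract_zero, Nat.cast_one, one_mul] at h1
      rw [Int.fract_eq_self.mpr ⟨hθ0.le, hθ1⟩] at h1
      linarith
    have h2 := hmmmin j hj1 hj
    right; left
    rw [hmmdef] at h2 ⊢
    linarith

lemma tg_caseR (N : ℕ) (hN : 2 ≤ N) (θ : ℝ)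
    (hzero : ∃ k : ℕ, (1 ≤ k ∧ k < N) ∧ Int.fract ((k : ℝ) * θ) = 0) :
    ∃ v : ℝ,
      (∀ j k : ℕ, j < N → k < N → Int.fract ((j : ℝ) * θ) < Int.fract ((k : ℝ) * θ) →
        (∀ m : ℕ, m < N → Int.fract ((j : ℝ) * θ) < Int.fract ((m : ℝ) * θ) →
          Int.fract ((k : ℝ) * θ) ≤ Int.fract ((m : ℝ) * θ)) →
        Int.fract ((k : ℝ) * θ) - Int.fract ((j : ℝ) * θ) = v) ∧
      (∀ j : ℕ, j < N → (∀ m : ℕ, m < N → Int.fract ((m : ℝ) * θ) ≤ Int.fract ((j : ℝ) * θ)) →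
        1 - Int.fract ((j : ℝ) * θ) = v) := by
  classical
  set q := Nat.find hzero with hqdef
  obtain ⟨⟨hq1, hqN⟩, hq0⟩ := Nat.find_spec hzero
  have hqmin : ∀ k : ℕ, 1 ≤ k → k < q → Int.fract ((k : ℝ) * θ) ≠ 0 := by
    intro k h1 h2 h3
    exact Nat.find_min hzero h2 ⟨⟨h1, by omega⟩, h3⟩
  have hqpos : (0 : ℝ) < q := by exact_mod_cast hq1
  have hqne : (q : ℝ) ≠ 0 := ne_of_gt hqpos
  have hqz : (q : ℝ) * θ = (⌊(q : ℝ) * θ⌋ : ℝ) := by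
    have : Int.fract ((q : ℝ) * θ) = (q : ℝ) * θ - ⌊(q : ℝ) * θ⌋ := rfl
    linarith [hq0, this]
  -- every point is a multiple of 1/q
  have C1 : ∀ j : ℕ, ∃ c : ℕ, c < q ∧ Int.fract ((j : ℝ) * θ) = (c : ℝ) / q := by
    intro j
    have hfr : Int.fract ((j : ℝ) * θ) = (j : ℝ) * θ - ⌊(j : ℝ) * θ⌋ := rfl
    set z : ℤ := (j : ℤ) * ⌊(q : ℝ) * θ⌋ - (q : ℤ) * ⌊(j : ℝ) * θ⌋ with hzd
    have hz : (q : ℝ) * Int.fract ((j : ℝ) * θ) = (z : ℝ) := by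
      rw [hfr, hzd]; push_cast; linear_combination (j : ℝ) * hqz
    have h0 : (0 : ℝ) ≤ (z : ℝ) := by
      rw [← hz]
      have := Int.fract_nonneg ((j : ℝ) * θ)
      nlinarith
    have h1 : (z : ℝ) < (q : ℝ) := by
      rw [← hz]
      have := Int.fract_lt_one ((j : ℝ) * θ)
      nlinarith
    have hz0 : 0 ≤ z := by exact_mod_cast h0
    have hz1 : z < (q : ℤ) := by exact_mod_cast h1
    refine ⟨z.toNat, by omega, ?_⟩
    have hcast : ((z.toNat : ℕ) : ℝ) = (z : ℝ) := by exact_mod_cast Int.toNat_of_nonneg hz0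
    rw [hcast, eq_div_iff hqne]
    linear_combination hz
  -- injectivity on [0, q)
  have hdiff : ∀ j k : ℕ, j < k → k < q →
      Int.fract ((j : ℝ) * θ) = Int.fract ((k : ℝ) * θ) → False := by
    intro j k hjk hkq heq
    have hsub : ((k - j : ℕ) : ℝ) = (k : ℝ) - j := by
      push_cast [Nat.cast_sub hjk.le]; ring
    obtain ⟨z, hz⟩ := tg_congr (θ := θ) (k - j) 0
      (c := Int.fract ((k : ℝ) * θ) - Int.fract ((j : ℝ) * θ))
      ⟨⌊(k : ℝ) * θ⌋ - ⌊(j : ℝ) * θ⌋, by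
        rw [hsub]; simp only [Int.fract]; push_cast; ring⟩
    rw [heq] at hz
    simp only [Nat.cast_zero, zero_mul, Int.fract_zero, sub_zero, sub_self] at hz
    have hf0 : Int.fract (((k - j : ℕ) : ℝ) * θ) = (z : ℝ) := by linarith
    have h0 : (0:ℝ) ≤ (z:ℝ) := hf0 ▸ Int.fract_nonneg _
    have h1 : (z:ℝ) < 1 := hf0 ▸ Int.fract_lt_one _
    have hz0 : z = 0 := by
      have : 0 ≤ z := by exact_mod_cast h0
      have : z < 1 := by exact_mod_cast h1
      omega
    exact hqmin (k - j) (by omega) (by omega) (by rw [hf0, hz0]; simp)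
  -- surjectivity onto multiples of 1/q
  have hsurj : ∀ c : ℕ, c < q → ∃ j : ℕ, j < N ∧ Int.fract ((j : ℝ) * θ) = (c : ℝ) / q := by
    intro c hc
    set A := (Finset.range q).image (fun j : ℕ => Int.fract ((j : ℝ) * θ)) with hA
    set B := (Finset.range q).image (fun c : ℕ => (c : ℝ) / q) with hB
    have hAB : A ⊆ B := by
      intro s hs
      simp only [hA, Finset.mem_image, Finset.mem_range] at hs
      obtain ⟨j, hj, rfl⟩ := hs
      obtain ⟨c', h1, h2⟩ := C1 j
      simp only [hB, Finset.mem_image, Finset.mem_range]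
      exact ⟨c', h1, h2.symm⟩
    have hcardA : A.card = q := by
      rw [hA, Finset.card_image_of_injOn, Finset.card_range]
      intro j hj k hk hjk
      simp only [Finset.mem_coe, Finset.mem_range] at hj hk
      by_contra hne
      rcases Nat.lt_or_ge j k with h | h
      · exact hdiff j k h hk hjk
      · exact hdiff k j (by omega) hj hjk.symm
    have hcardB : B.card ≤ q := le_trans (Finset.card_image_le) (by simp)
    have hBA : B = A := (Finset.eq_of_subset_of_card_le hAB (by omega)).symm
    have hmem : (c : ℝ) / q ∈ B := by
      simp only [hB, Finset.mem_image, Finset.mem_range]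
      exact ⟨c, hc, rfl⟩
    rw [hBA] at hmem
    simp only [hA, Finset.mem_image, Finset.mem_range] at hmem
    obtain ⟨j, hj, hje⟩ := hmem
    exact ⟨j, by omega, hje⟩
  refine ⟨1 / q, ?_, ?_⟩
  · intro j k hj hk hlt hsucc
    obtain ⟨c, hc, hcu⟩ := C1 j
    obtain ⟨c', hc', hcu'⟩ := C1 k
    rw [hcu, hcu'] at hlt ⊢
    have hcc' : c < c' := by
      have h1 : (c : ℝ) < c' := by
        rw [div_lt_div_iff₀ hqpos hqpos] at hlt
        nlinarith
      exact_mod_cast h1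
    obtain ⟨j₁, hj₁, hj₁e⟩ := hsurj (c + 1) (by omega)
    have hlt2 : Int.fract ((j : ℝ) * θ) < Int.fract ((j₁ : ℝ) * θ) := by
      rw [hcu, hj₁e, div_lt_div_iff₀ hqpos hqpos]
      push_cast
      nlinarith
    have hkle := hsucc j₁ hj₁ hlt2
    rw [hcu', hj₁e, div_le_div_iff₀ hqpos hqpos] at hkle
    have hle : (c' : ℝ) ≤ ((c + 1 : ℕ) : ℝ) := by nlinarith
    have hle' : c' ≤ c + 1 := by exact_mod_cast hle
    have hc'' : c' = c + 1 := by omega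
    subst hc''
    push_cast
    field_simp
    ring
  · intro j hj hmax
    obtain ⟨c, hc, hcu⟩ := C1 j
    obtain ⟨j₁, hj₁, hj₁e⟩ := hsurj (q - 1) (by omega)
    have := hmax j₁ hj₁
    rw [hcu, hj₁e, div_le_div_iff₀ hqpos hqpos] at this
    have hle : ((q - 1 : ℕ) : ℝ) ≤ (c : ℝ) := by nlinarith
    have hle' : q - 1 ≤ c := by exact_mod_cast hle
    have hc'' : c = q - 1 := by omega
    subst hc''
    rw [hcu]
    push_cast [Nat.cast_sub hq1]
    field_simp
    rw [Nat.cast_sub (by omega : 1 ≤ q)]; ring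

/-- The three-gap (Steinhaus) theorem for the generated set: for any `N ≥ 2` and
`θ ∈ (0,1)`, the gaps `x_{i+1} - x_i` (with `x_N = 1`) of the increasingly sorted points
`frac(jθ)`, `j = 0,…,N-1`, take at most 3 distinct values. -/
theorem three_gap_theorem
    (N : ℕ) (hN : 2 ≤ N) (θ : ℝ) (hθ : θ ∈ Set.Ioo (0 : ℝ) 1)
    (l : List ℝ)
    (hl : l = ((List.range N).map fun j : ℕ => Int.fract ((j : ℝ) * θ)).mergeSort (· ≤ ·))
    (x : ℕ → ℝ) (hx : ∀ i, x i = if i < N then l.getD i 0 else 1) :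
    ((Finset.range N).image fun i => x (i + 1) - x i).card ≤ 3 := by
  classical
  have hperm : l.Perm ((List.range N).map fun j : ℕ => Int.fract ((j : ℝ) * θ)) := by
    rw [hl]; exact List.mergeSort_perm _ _
  have hlen : l.length = N := by
    rw [hperm.length_eq, List.length_map, List.length_range]
  have hpair : List.Pairwise (fun u v : ℝ => u ≤ v) l := by
    rw [hl]
    refine List.Pairwise.imp ?_ (List.pairwise_mergeSort ?_ ?_ _)
    · intro u v h; exact of_decide_eq_true h
    · intro u v w h1 h2
      simp only [decide_eq_true_eq] at *
      exact le_trans h1 h2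
    · intro u v
      simp only [Bool.or_eq_true, decide_eq_true_eq]
      exact le_total u v
  have hgetle : ∀ i1 i2 : ℕ, ∀ (h1 : i1 < l.length) (h2 : i2 < l.length), i1 ≤ i2 →
      l[i1]'h1 ≤ l[i2]'h2 := by
    intro i1 i2 h1 h2 h12
    rcases Nat.eq_or_lt_of_le h12 with h | h
    · subst h; exact le_refl _
    · exact List.pairwise_iff_getElem.mp hpair i1 i2 h1 h2 h
  have hmem : ∀ s : ℝ, s ∈ l ↔ ∃ j : ℕ, j < N ∧ Int.fract ((j : ℝ) * θ) = s := by
    intro s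
    rw [hperm.mem_iff, List.mem_map]
    constructor
    · rintro ⟨j, hj, hje⟩; exact ⟨j, List.mem_range.mp hj, hje⟩
    · rintro ⟨j, hj, hje⟩; exact ⟨j, List.mem_range.mpr hj, hje⟩
  -- structure of each gap
  have gapstruct : ∀ i : ℕ, i < N →
      (i + 1 < N ∧ l.getD i 0 = l.getD (i + 1) 0 ∧ x (i + 1) - x i = 0) ∨
      (∃ j k : ℕ, j < N ∧ k < N ∧
        Int.fract ((j : ℝ) * θ) < Int.fract ((k : ℝ) * θ) ∧
        (∀ m : ℕ, m < N → Int.fract ((j : ℝ) * θ) < Int.fract ((m : ℝ) * θ) →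
          Int.fract ((k : ℝ) * θ) ≤ Int.fract ((m : ℝ) * θ)) ∧
        x (i + 1) - x i = Int.fract ((k : ℝ) * θ) - Int.fract ((j : ℝ) * θ)) ∨
      (∃ j : ℕ, j < N ∧
        (∀ m : ℕ, m < N → Int.fract ((m : ℝ) * θ) ≤ Int.fract ((j : ℝ) * θ)) ∧
        x (i + 1) - x i = 1 - Int.fract ((j : ℝ) * θ)) := by
    intro i hi
    have hiL : i < l.length := by omega
    have hxi : x i = l[i]'hiL := by
      rw [hx i, if_pos hi]; exact List.getD_eq_getElem l 0 hiL
    obtain ⟨j, hjN, hje⟩ := (hmem _).mp (List.getElem_mem hiL)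
    by_cases hi1 : i + 1 < N
    · have hi1L : i + 1 < l.length := by omega
      have hxi1 : x (i + 1) = l[i + 1]'hi1L := by
        rw [hx (i + 1), if_pos hi1]; exact List.getD_eq_getElem l 0 hi1L
      obtain ⟨k, hkN, hke⟩ := (hmem _).mp (List.getElem_mem hi1L)
      have hle : l[i]'hiL ≤ l[i + 1]'hi1L := hgetle i (i + 1) hiL hi1L (by omega)
      rcases eq_or_lt_of_le hle with heq | hlt
      · left
        refine ⟨hi1, ?_, ?_⟩
        · rw [List.getD_eq_getElem l 0 hiL, List.getD_eq_getElem l 0 hi1L]; exact heq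
        · rw [hxi, hxi1, heq]; ring
      · right; left
        refine ⟨j, k, hjN, hkN, ?_, ?_, ?_⟩
        · rw [hje, hke]; exact hlt
        · intro m hm hltm
          rw [hje] at hltm
          rw [hke]
          obtain ⟨idx, hidxL, hidxe⟩ := List.mem_iff_getElem.mp
            ((hmem _).mpr ⟨m, hm, rfl⟩)
          rcases Nat.lt_or_ge idx (i + 1) with hc | hc
          · exfalso
            have : l[idx]'hidxL ≤ l[i]'hiL := hgetle idx i hidxL hiL (by omega)
            rw [hidxe] at this
            linarith
          · have : l[i + 1]'hi1L ≤ l[idx]'hidxL := hgetle (i + 1) idx hi1L hidxL hc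
            rw [hidxe] at this
            exact this
        · rw [hxi, hxi1, hje, hke]
    · -- i + 1 = N : last gap
      right; right
      refine ⟨j, hjN, ?_, ?_⟩
      · intro m hm
        rw [hje]
        obtain ⟨idx, hidxL, hidxe⟩ := List.mem_iff_getElem.mp
          ((hmem _).mpr ⟨m, hm, rfl⟩)
        have : l[idx]'hidxL ≤ l[i]'hiL := hgetle idx i hidxL hiL (by omega)
        rw [hidxe] at this
        exact this
      · rw [hx (i + 1), if_neg (by omega), hxi, hje]
  by_cases hzero : ∃ k : ℕ, (1 ≤ k ∧ k < N) ∧ Int.fract ((k : ℝ) * θ) = 0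
  · obtain ⟨v, hv1, hv2⟩ := tg_caseR N hN θ hzero
    have hsub : ((Finset.range N).image fun i => x (i + 1) - x i) ⊆ ({0, v} : Finset ℝ) := by
      rw [Finset.image_subset_iff]
      intro i hi
      rw [Finset.mem_range] at hi
      simp only [Finset.mem_insert, Finset.mem_singleton]
      rcases gapstruct i hi with ⟨_, _, h⟩ | ⟨j, k, hj, hk, hlt, hsucc, h⟩ | ⟨j, hj, hmax, h⟩
      · left; exact h
      · right; rw [h]; exact hv1 j k hj hk hlt hsucc
      · right; rw [h]; exact hv2 j hj hmax
    refine le_trans (Finset.card_le_card hsub) ?_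
    refine le_trans (Finset.card_insert_le _ _) ?_
    simp
  · have hnz : ∀ k : ℕ, 1 ≤ k → k < N → Int.fract ((k : ℝ) * θ) ≠ 0 :=
      fun k h1 h2 h3 => hzero ⟨k, ⟨h1, h2⟩, h3⟩
    obtain ⟨v1, v2, v3, hstep, hlast⟩ := tg_caseI N hN θ hθ hnz
    have key0 : ∀ j k : ℕ, j < k → k < N → Int.fract ((j : ℝ) * θ) = Int.fract ((k : ℝ) * θ) → False := by
      intro j k hc hk hjk
      have hsubc : ((k - j : ℕ) : ℝ) = (k : ℝ) - j := by push_cast [Nat.cast_sub hc.le]; ring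
      have hz : Int.fract (((k - j : ℕ) : ℝ) * θ) - 0
          = ((⌊(k : ℝ) * θ⌋ - ⌊(j : ℝ) * θ⌋ - ⌊((k - j : ℕ) : ℝ) * θ⌋ : ℤ) : ℝ) := by
        simp only [Int.fract] at hjk ⊢; rw [hsubc]; push_cast; linarith
      have := tg_eq_of_sub_int hz (Int.fract_nonneg _) (Int.fract_lt_one _) le_rfl zero_lt_one
      exact hnz (k - j) (by omega) (by omega) this
    have hnodup : l.Nodup := by
      rw [hperm.nodup_iff]
      refine List.Nodup.map_on ?_ List.nodup_range
      intro j hj k hk hjk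
      rw [List.mem_range] at hj hk
      by_contra hne
      rcases Nat.lt_or_ge j k with hc | hc
      · exact key0 j k hc hk hjk
      · exact key0 k j (by omega) hj hjk.symm
    have hne01 : ∀ i : ℕ, i + 1 < N → l.getD i 0 ≠ l.getD (i + 1) 0 := by
      intro i hi1 heq
      have hiL : i < l.length := by omega
      have hi1L : i + 1 < l.length := by omega
      rw [List.getD_eq_getElem l 0 hiL, List.getD_eq_getElem l 0 hi1L] at heq
      have := (hnodup.getElem_inj_iff).mp heq
      omega
    have hsub : ((Finset.range N).image fun i => x (i + 1) - x i) ⊆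
        ({v1, v2, v3} : Finset ℝ) := by
      rw [Finset.image_subset_iff]
      intro i hi
      rw [Finset.mem_range] at hi
      simp only [Finset.mem_insert, Finset.mem_singleton]
      rcases gapstruct i hi with ⟨h1, h2, _⟩ | ⟨j, k, hj, hk, hlt, hsucc, h⟩ | ⟨j, hj, hmax, h⟩
      · exact absurd h2 (hne01 i h1)
      · rw [h]; exact hstep j k hj hk hlt hsucc
      · rw [h]; exact hlast j hj hmax
    refine le_trans (Finset.card_le_card hsub) ?_
    refine le_trans (Finset.card_insert_le _ _) ?_
    have := Finset.card_insert_le v2 ({v3} : Finset ℝ)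
    simp only [Finset.card_singleton] at this ⊢
    omega
end

section
/- The sorted fractional parts {frac(jθ) : j = 0,...,N−1} form an SSH-2 model (i.e., the gap sequence is 2-periodic with exactly two distinct alternating gap values) if and only if N = 2 and θ ≠ 1/2. -/
theorem fract_nat_div (n M : ℕ) (hM : 0 < M) : Int.fract ((n:ℝ)/M) = ((n % M : ℕ):ℝ)/M := by
  conv_lhs => rw [show n = M*(n/M) + n % M from (Nat.div_add_mod n M).symm]
  push_cast
  rw [mul_comm, add_div, mul_div_assoc, div_self (by positivity), mul_one,
    Int.fract_natCast_add, Int.fract_eq_self.2]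
  constructor
  · positivity
  · rw [div_lt_one (by positivity)]
    exact_mod_cast Nat.mod_lt n hM

set_option maxHeartbeats 2000000 in
/-- The sorted fractional parts `{frac(jθ) : j = 0,…,N-1}` (assumed distinct) form an
SSH-2 model — the gap sequence `d_i = x_{i+1} - x_i` (with `x_N = 1`) is 2-periodic with
two distinct alternating values — if and only if `N = 2` and `θ ≠ 1/2`. -/
theorem ssh2_iff
    (N : ℕ) (hN : 2 ≤ N) (θ : ℝ) (hθ : θ ∈ Set.Ioo (0 : ℝ) 1)
    (S : Finset ℝ) (hS : S = (Finset.range N).image fun j : ℕ => Int.fract ((j : ℝ) * θ))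
    (hcard : S.card = N)
    (l : List ℝ) (hl : l = S.sort (· ≤ ·))
    (x : ℕ → ℝ) (hx : ∀ i, x i = if i < N then l.getD i 0 else 1)
    (d : ℕ → ℝ) (hd : ∀ i, d i = x (i + 1) - x i) :
    (2 ∣ N ∧ (∀ i, i + 2 < N → d (i + 2) = d i) ∧ d 0 ≠ d 1) ↔ (N = 2 ∧ θ ≠ 1 / 2) := by
  obtain ⟨hθ0, hθ1⟩ := hθ
  have hlen : l.length = N := by rw [hl, Finset.length_sort, hcard]
  have hslt : l.Pairwise (· < ·) := by rw [hl]; exact (Finset.sortedLT_sort S).pairwise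
  have hxlt : ∀ i (hi : i < N), x i = l.get ⟨i, hlen ▸ hi⟩ := by
    intro i hi
    rw [hx, if_pos hi, List.getD_eq_getElem l 0 (hlen ▸ hi)]
    rfl
  have hmemS : ∀ r, r ∈ S ↔ ∃ j, j < N ∧ Int.fract ((j : ℝ) * θ) = r := by
    intro r
    simp [hS, Finset.mem_image, Finset.mem_range]
  have hmem : ∀ i, i < N → x i ∈ S := by
    intro i hi
    rw [hxlt i hi, ← Finset.mem_sort (α := ℝ) (· ≤ ·), ← hl]
    exact l.get_mem _
  have hsurj : ∀ r ∈ S, ∃ t, t < N ∧ x t = r := by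
    intro r hr
    have : r ∈ l := by rw [hl, Finset.mem_sort]; exact hr
    obtain ⟨⟨t, ht⟩, hrt⟩ := List.mem_iff_get.mp this
    exact ⟨t, hlen ▸ ht, by rw [hxlt t (hlen ▸ ht)]; exact hrt⟩
  have hmono : ∀ i j, i < j → j < N → x i < x j := by
    intro i j hij hj
    rw [hxlt i (lt_trans hij hj), hxlt j hj]
    exact hslt.sortedLT.strictMono_get (by simpa using hij)
  have hinj : ∀ j k, j < N → k < N →
      Int.fract ((j : ℝ) * θ) = Int.fract ((k : ℝ) * θ) → j = k := by
    intro j k hj hk hjk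
    have := (Finset.card_image_iff.mp (by rw [← hS, hcard, Finset.card_range]))
    exact this (Finset.mem_range.mpr hj) (Finset.mem_range.mpr hk) hjk
  have hx0 : x 0 = 0 := by
    have h0S : (0:ℝ) ∈ S := (hmemS 0).mpr ⟨0, by omega, by simp⟩
    obtain ⟨t, ht, hxt⟩ := hsurj 0 h0S
    rcases Nat.eq_zero_or_pos t with rfl | htpos
    · exact hxt
    · exfalso
      have h1 := hmono 0 t htpos ht
      rw [hxt] at h1
      obtain ⟨j, hj, hjx⟩ := (hmemS _).mp (hmem 0 (by omega))
      have := Int.fract_nonneg ((j:ℝ) * θ)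
      rw [hjx] at this; linarith
  have hlt1 : ∀ i, i < N → x i < 1 := by
    intro i hi
    obtain ⟨j, hj, hjx⟩ := (hmemS _).mp (hmem i hi)
    rw [← hjx]; exact Int.fract_lt_one _
  have hxN : x N = 1 := by rw [hx]; simp
  have hmono' : ∀ i j, i < j → j ≤ N → x i < x j := by
    intro i j hij hj
    rcases lt_or_eq_of_le hj with h | h
    · exact hmono i j hij h
    · have hxj : x j = 1 := by rw [hx, if_neg (by omega)]
      rw [hxj]
      exact hlt1 i (by omega)
  have hdpos : ∀ i, i < N → 0 < d i := by
    intro i hi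
    rw [hd]
    have := hmono' i (i+1) (by omega) (by omega)
    linarith
  have hN2case : N = 2 → d 0 = θ ∧ d 1 = 1 - θ := by
    intro h2
    have hx1 : x 1 = θ := by
      obtain ⟨j, hj, hjx⟩ := (hmemS _).mp (hmem 1 (by omega))
      have hj2 : j < 2 := by omega
      interval_cases j
      · exfalso
        have hp : (0:ℝ) < x 1 := hx0 ▸ hmono' 0 1 (by omega) (by omega)
        rw [← hjx] at hp
        simp at hp
      · rw [← hjx]
        push_cast
        rw [one_mul, Int.fract_eq_self.2 ⟨le_of_lt hθ0, hθ1⟩]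
    have hx2 : x 2 = 1 := by rw [hx]; simp [h2]
    constructor
    · rw [hd, hx1, hx0]; ring
    · rw [hd, hx1, hx2]
  constructor
  · rintro ⟨hdvd, hper, hne⟩
    have hmain : N = 2 := by
      by_contra hne2
      obtain ⟨h, hNh⟩ := hdvd
      have hh2 : 2 ≤ h := by omega
      have hN4 : 4 ≤ N := by omega
      -- gaps alternate with period 2
      have hpar : ∀ i, i < N → d i = if i % 2 = 0 then d 0 else d 1 := by
        intro i
        induction i using Nat.strong_induction_on with
        | _ i ih =>
          intro hi
          rcases Nat.lt_or_ge i 2 with h2 | h2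
          · interval_cases i <;> simp
          · obtain ⟨j, rfl⟩ : ∃ j, i = j + 2 := ⟨i - 2, by omega⟩
            rw [hper j hi, ih j (by omega) (by omega)]
            have e : (j+2) % 2 = j % 2 := by omega
            rw [e]
      have hxeven : ∀ w, 2*w ≤ N → x (2*w) = w * (d 0 + d 1) := by
        intro w
        induction w with
        | zero => intro _; simpa using hx0
        | succ w ih =>
          intro hw
          have e1 : x (2*w+1) = x (2*w) + d (2*w) := by have := hd (2*w); linarith
          have e2 : x (2*w+2) = x (2*w+1) + d (2*w+1) := by have := hd (2*w+1); linarith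
          have hda : d (2*w) = d 0 := by
            rw [hpar _ (by omega)]
            have e : (2*w) % 2 = 0 := by omega
            rw [e]; simp
          have hdb : d (2*w+1) = d 1 := by
            rw [hpar _ (by omega)]
            have e : (2*w+1) % 2 = 1 := by omega
            rw [e]; simp
          have e3 : 2*(w+1) = 2*w+2 := by ring
          rw [e3, e2, e1, ih (by omega), hda, hdb]
          push_cast
          ring
      have hgsum : (h:ℝ) * (d 0 + d 1) = 1 := by
        have h1 := hxeven h (by omega)
        rw [← hNh, show x N = 1 by rw [hx]; simp] at h1
        exact h1.symm
      have hx2 : x 2 = d 0 + d 1 := by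
        have := hxeven 1 (by omega)
        simpa using this
      have hx2pos : (0:ℝ) < x 2 := hx0 ▸ hmono' 0 2 (by omega) (by omega)
      obtain ⟨m, hm, hmx⟩ := (hmemS _).mp (hmem 2 (by omega))
      have hxN2 : x (N-2) = 1 - (d 0 + d 1) := by
        have h1 := hxeven (h-1) (by omega)
        have e : 2*(h-1) = N - 2 := by omega
        rw [e] at h1
        rw [h1, Nat.cast_sub (by omega)]
        push_cast
        linarith
      obtain ⟨k, hk, hkx⟩ := (hmemS _).mp (hmem (N-2) (by omega))
      have hxN2pos : (0:ℝ) < x (N-2) := hx0 ▸ hmono' 0 (N-2) (by omega) (by omega)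
      have hmpos : 0 < m := by
        rcases Nat.eq_zero_or_pos m with rfl | hp
        · exfalso; rw [show ((0:ℕ):ℝ) = 0 by norm_num, zero_mul, Int.fract_zero] at hmx; linarith
        · exact hp
      have hkpos : 0 < k := by
        rcases Nat.eq_zero_or_pos k with rfl | hp
        · exfalso; rw [show ((0:ℕ):ℝ) = 0 by norm_num, zero_mul, Int.fract_zero] at hkx; linarith
        · exact hp
      set M := m + k with hM
      have hM2 : 2 ≤ M := by omega
      have hMint : ((M:ℕ):ℝ)*θ = ((⌊(m:ℝ)*θ⌋ + ⌊(k:ℝ)*θ⌋ + 1 : ℤ):ℝ) := by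
        have em : (m:ℝ)*θ = ⌊(m:ℝ)*θ⌋ + Int.fract ((m:ℝ)*θ) := (Int.floor_add_fract _).symm
        have ek : (k:ℝ)*θ = ⌊(k:ℝ)*θ⌋ + Int.fract ((k:ℝ)*θ) := (Int.floor_add_fract _).symm
        have hsum1 : Int.fract ((m:ℝ)*θ) + Int.fract ((k:ℝ)*θ) = 1 := by
          rw [hmx, hkx, hx2, hxN2]; ring
        push_cast
        rw [hM]
        push_cast
        nlinarith [em, ek, hsum1]
      have hMθpos : (0:ℝ) < (M:ℕ)*θ := by positivity
      set z : ℤ := ⌊(m:ℝ)*θ⌋ + ⌊(k:ℝ)*θ⌋ + 1 with hz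
      have hzpos : 0 < z := by
        have : (0:ℝ) < (z:ℤ) := by rw [← hMint]; exact hMθpos
        exact_mod_cast this
      set c : ℕ := z.toNat with hc
      have hcM : ((M:ℕ):ℝ)*θ = (c:ℝ) := by
        rw [hMint, hc]
        norm_cast
        omega
      have hcpos : 0 < c := by omega
      have hMR : (0:ℝ) < (M:ℕ) := by exact_mod_cast hM2.trans_lt' (by omega)
      have hθeq : θ = (c:ℝ)/M := by
        field_simp
        linarith [hcM]
      have hfract : ∀ j:ℕ, Int.fract ((j:ℝ)*θ) = (((j*c) % M : ℕ):ℝ)/M := by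
        intro j
        have e : (j:ℝ)*θ = ((j*c : ℕ):ℝ)/M := by
          rw [hθeq]; push_cast; ring
        rw [e, fract_nat_div _ _ (by omega)]
      have hNM : N ≤ M := by
        by_contra hlt
        push_neg at hlt
        have h0 : Int.fract ((M:ℝ)*θ) = 0 := by
          rw [show ((M:ℕ):ℝ)*θ = (c:ℝ) from hcM, Int.fract_natCast]
        have := hinj M 0 (by omega) (by omega)
          (by rw [h0]; rw [show ((0:ℕ):ℝ) = 0 by norm_num, zero_mul, Int.fract_zero])
        omega
      have hMle : M ≤ 2*N - 2 := by omega
      set r : ℕ := (m*c) % M with hr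
      have hrx : ((r:ℕ):ℝ)/M = d 0 + d 1 := by rw [hr, ← hfract, hmx, hx2]
      have hrh : r * h = M := by
        have h1 : (r:ℝ) = (d 0 + d 1) * M := by
          rw [div_eq_iff (ne_of_gt hMR)] at hrx
          exact hrx
        have h2 : ((r:ℝ)) * h = (M:ℝ) * ((h:ℝ) * (d 0 + d 1)) := by rw [h1]; ring
        rw [hgsum, mul_one] at h2
        exact_mod_cast h2
      have hr23 : r = 2 ∨ r = 3 := by
        by_contra hcon
        push_neg at hcon
        rcases Nat.lt_or_ge r 2 with hrl | hrl
        · have : r*h ≤ 1*h := Nat.mul_le_mul_right h (by omega)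
          omega
        rcases Nat.lt_or_ge r 4 with hr4 | hr4
        · omega
        · have : 4*h ≤ r*h := Nat.mul_le_mul_right h hr4
          omega
      obtain ⟨j1, hj1, hj1x⟩ := (hmemS _).mp (hmem 1 (by omega))
      set α : ℕ := (j1*c) % M with hα
      have hαx : x 1 = (α:ℝ)/M := by rw [hα, ← hfract, hj1x]
      have hx1pos : (0:ℝ) < x 1 := hx0 ▸ hmono' 0 1 (by omega) (by omega)
      have hαpos : 0 < α := by
        rcases Nat.eq_zero_or_pos α with h0 | hp
        · exfalso; rw [hαx, h0] at hx1pos; simp at hx1pos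
        · exact hp
      have hd0 : d 0 = (α:ℝ)/M := by rw [hd, hx0, hαx]; ring
      have hd1 : d 1 = ((r:ℝ) - α)/M := by
        have e1 : d 1 = x 2 - x 1 := hd 1
        rw [e1, hx2, ← hrx, hαx]
        ring
      have hd1pos : 0 < d 1 := hdpos 1 (by omega)
      have hαr : α < r := by
        have h2 : d 1 * M = (r:ℝ) - α := by
          rw [hd1, div_mul_cancel₀ _ (ne_of_gt hMR)]
        have h3 : (α:ℝ) < r := by nlinarith [mul_pos hd1pos hMR]
        exact_mod_cast h3
      rcases hr23 with hr2 | hr3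
      · -- r = 2, M = N : all gaps 1/M, contradiction
        rw [hr2] at hαr
        have hα1 : α = 1 := by omega
        apply hne
        rw [hd0, hd1, hα1, hr2]
        norm_num
      · -- r = 3, M = 3h
        have hM3h : M = 3*h := by rw [hr3] at hrh; omega
        have hα3 : α < 3 := by rw [hr3] at hαr; omega
        have hstruct : ∀ t, t < N → ∃ i:ℕ, x t = (i:ℝ)/M ∧ (i % 3 = 0 ∨ i % 3 = α) := by
          intro t ht
          have hsumM : d 0 + d 1 = (3:ℝ)/M := by rw [← hrx, hr3]; norm_num
          rcases Nat.even_or_odd t with ⟨w, hw⟩ | ⟨w, hw⟩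
          · refine ⟨3*w, ?_, Or.inl (by omega)⟩
            rw [show t = 2*w by omega, hxeven w (by omega), hsumM]
            push_cast
            ring
          · refine ⟨3*w + α, ?_, Or.inr (by omega)⟩
            have e1 : x (2*w+1) = x (2*w) + d (2*w) := by have := hd (2*w); linarith
            have hda : d (2*w) = d 0 := by
              rw [hpar _ (by omega)]
              have e : (2*w) % 2 = 0 := by omega
              rw [e]; simp
            rw [show t = 2*w+1 by omega, e1, hxeven w (by omega), hsumM, hda, hd0]
            push_cast
            ring
        -- θ itself is in S
        have hθS : θ ∈ S := (hmemS θ).mpr ⟨1, by omega, by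
          push_cast
          rw [one_mul, Int.fract_eq_self.2 ⟨le_of_lt hθ0, hθ1⟩]⟩
        obtain ⟨t1, ht1, ht1x⟩ := hsurj θ hθS
        obtain ⟨i1, hi1x, hi1m⟩ := hstruct t1 ht1
        have hi1c : i1 = c := by
          have h5 : (i1:ℝ)/M = (c:ℝ)/M := by rw [← hi1x, ht1x, hθeq]
          field_simp at h5
          exact_mod_cast h5
        have h3c : ¬ (3 ∣ c) := by
          rintro ⟨c', hcc⟩
          have hhθ : (h:ℝ)*θ = (c':ℝ) := by
            have hh0 : (h:ℝ) ≠ 0 := by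
              have : h ≠ 0 := by omega
              exact_mod_cast this
            rw [hθeq, hM3h, hcc]
            push_cast
            field_simp
          have h0 : Int.fract ((h:ℝ)*θ) = 0 := by rw [hhθ, Int.fract_natCast]
          have := hinj h 0 (by omega) (by omega)
            (by rw [h0, show ((0:ℕ):ℝ) = 0 by norm_num, zero_mul, Int.fract_zero])
          omega
        have hcα : c % 3 = α := by omega
        -- 2θ
        have h2S : Int.fract ((2:ℝ)*θ) ∈ S := (hmemS _).mpr ⟨2, by omega, by push_cast; ring_nf⟩
        obtain ⟨t2, ht2, ht2x⟩ := hsurj _ h2S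
        obtain ⟨i2, hi2x, hi2m⟩ := hstruct t2 ht2
        have hi2 : i2 = (2*c) % M := by
          have e := hfract 2
          have e2 : (i2:ℝ)/M = (((2*c) % M : ℕ):ℝ)/M := by
            rw [← hi2x, ht2x]
            push_cast at e ⊢
            rw [← e]
          field_simp at e2
          exact_mod_cast e2
        have hkey : ((2*c) % M) % 3 = (2*c) % 3 := by
          have hdm := Nat.div_add_mod (2*c) M
          set Q := h * (2*c/M) with hQ
          have : 3*Q + (2*c) % M = 2*c := by
            rw [hQ, ← Nat.mul_assoc, ← hM3h]
            exact hdm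
          omega
        omega
    refine ⟨hmain, ?_⟩
    obtain ⟨e0, e1⟩ := hN2case hmain
    intro hhalf
    apply hne
    rw [e0, e1, hhalf]
    norm_num
  · rintro ⟨hN2, hθhalf⟩
    obtain ⟨e0, e1⟩ := hN2case hN2
    refine ⟨by omega, fun i hi => absurd hi (by omega), ?_⟩
    rw [e0, e1]
    intro hE
    apply hθhalf
    linarith
end

section
/- The sorted fractional parts {frac(jθ) : j = 0,...,N−1} form an SSH-3 model (gap sequence 3-periodic and not all gaps equal) if and only if N = 3 and θ ∉ {1/3, 2/3}. -/
lemma fract_fract_add (a b : ℝ) : Int.fract (Int.fract a + b) = Int.fract (a + b) := by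
  rw [show Int.fract a + b = a + b - (⌊a⌋ : ℤ) by rw [Int.fract]; ring,
    Int.fract_sub_intCast]

lemma fract_mul_fract (m : ℤ) (z : ℝ) :
    Int.fract ((m : ℝ) * Int.fract z) = Int.fract ((m : ℝ) * z) := by
  rw [show (m : ℝ) * Int.fract z = m * z - ((m * ⌊z⌋ : ℤ) : ℝ) by
    rw [Int.fract]; push_cast; ring, Int.fract_sub_intCast]

lemma aux_sub (N M : ℕ) (θ : ℝ) (m : ℤ) (hM : 0 < M) (hm : (M : ℝ) * θ = (m : ℝ)) :
    ((Finset.range N).image fun j : ℕ => Int.fract ((j : ℝ) * θ)) ⊆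
      (Finset.range M).image fun i : ℕ => (i : ℝ) / M := by
  have hMR : (0:ℝ) < (M:ℝ) := by exact_mod_cast hM
  intro y hy
  simp only [Finset.mem_image, Finset.mem_range] at hy ⊢
  obtain ⟨j, hj, rfl⟩ := hy
  have hM' : (0:ℤ) < (M:ℤ) := by exact_mod_cast hM
  have h1 := Int.emod_nonneg ((j:ℤ)*m) (by omega : (M:ℤ) ≠ 0)
  have h2 := Int.emod_lt_of_pos ((j:ℤ)*m) hM'
  refine ⟨((j:ℤ) * m % M).toNat, by omega, ?_⟩
  have hθ : θ = (m:ℝ)/M := by field_simp at hm ⊢; linarith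
  have key : ((j:ℤ)*m % M + M * ((j:ℤ)*m / M) : ℤ) = (j:ℤ)*m := Int.emod_add_mul_ediv _ _
  have keyR : (((j:ℤ)*m % M : ℤ):ℝ) + (M:ℝ) * (((j:ℤ)*m / M : ℤ):ℝ) = (j:ℝ)*(m:ℝ) := by
    exact_mod_cast congrArg (Int.cast : ℤ → ℝ) key
  have hdiv : (j:ℝ) * θ = (((j:ℤ)*m % M : ℤ) : ℝ)/M + (((j:ℤ)*m / M : ℤ) : ℝ) := by
    rw [hθ]; field_simp; linarith
  rw [hdiv, Int.fract_add_intCast, Int.fract_eq_self.mpr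
    ⟨by positivity, by rw [div_lt_one hMR]; exact_mod_cast h2⟩]
  congr 1
  exact_mod_cast Int.toNat_of_nonneg h1

lemma aux_card (N M : ℕ) (θ : ℝ) (m : ℤ) (hM : 0 < M) (hm : (M : ℝ) * θ = (m : ℝ))
    (hcard : ((Finset.range N).image fun j : ℕ => Int.fract ((j : ℝ) * θ)).card = N) :
    N ≤ M := by
  have hMR : (0:ℝ) < (M:ℝ) := by exact_mod_cast hM
  have hinj : Function.Injective fun i : ℕ => (i : ℝ) / M := by
    intro a b hab
    field_simp [hMR.ne'] at hab
    exact_mod_cast hab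
  calc N = _ := hcard.symm
    _ ≤ ((Finset.range M).image fun i : ℕ => (i:ℝ)/M).card :=
        Finset.card_le_card (aux_sub N M θ m hM hm)
    _ = M := by rw [Finset.card_image_of_injective _ hinj, Finset.card_range]

lemma aux3 (a b u v : ℝ) (h01 : 0 < a) (h12 : a < b)
    (huv : (u = 1/3 ∧ v = 2/3) ∨ (u = 2/3 ∧ v = 1/3))
    (hm1 : a = 0 ∨ a = u ∨ a = v) (hm2 : b = 0 ∨ b = u ∨ b = v) :
    a = 1/3 ∧ b = 2/3 := by
  rcases huv with ⟨rfl, rfl⟩ | ⟨rfl, rfl⟩ <;>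
    rcases hm1 with rfl | rfl | rfl <;> rcases hm2 with h | h | h <;>
      first
        | (exact ⟨by linarith, by linarith⟩)
        | (exfalso; linarith)

/-- The sorted fractional parts `{frac(jθ) : j = 0,…,N-1}` (assumed distinct) form an
SSH-3 model — the gap sequence `d_i = x_{i+1} - x_i` (with `x_N = 1`) is 3-periodic and
not all gaps equal — if and only if `N = 3` and `θ ∉ {1/3, 2/3}`. -/
theorem ssh3_iff
    (N : ℕ) (hN : 2 ≤ N) (θ : ℝ) (hθ : θ ∈ Set.Ioo (0 : ℝ) 1)
    (S : Finset ℝ) (hS : S = (Finset.range N).image fun j : ℕ => Int.fract ((j : ℝ) * θ))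
    (hcard : S.card = N)
    (l : List ℝ) (hl : l = S.sort (· ≤ ·))
    (x : ℕ → ℝ) (hx : ∀ i, x i = if i < N then l.getD i 0 else 1)
    (d : ℕ → ℝ) (hd : ∀ i, d i = x (i + 1) - x i) :
    (3 ∣ N ∧ (∀ i, i + 3 < N → d (i + 3) = d i) ∧ ¬(d 0 = d 1 ∧ d 1 = d 2)) ↔
      (N = 3 ∧ θ ≠ 1 / 3 ∧ θ ≠ 2 / 3) := by
  obtain ⟨hθ0, hθ1⟩ := hθ
  have hlen : l.length = N := by rw [hl, Finset.length_sort, hcard]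
  have hmem : ∀ i, i < N → x i ∈ S := by
    intro i h
    rw [hx, if_pos h, hl]
    have h' : i < (S.sort (· ≤ ·)).length := by
      rw [Finset.length_sort, hcard]; exact h
    rw [List.getD_eq_getElem _ 0 h']
    exact (Finset.mem_sort _).1 (List.getElem_mem h')
  have hsurj : ∀ y ∈ S, ∃ i, i < N ∧ x i = y := by
    intro y hy
    have : y ∈ l := hl ▸ (Finset.mem_sort _).2 hy
    obtain ⟨i, hi, rfl⟩ := List.mem_iff_getElem.1 this
    exact ⟨i, hlen ▸ hi, by rw [hx, if_pos (hlen ▸ hi), List.getD_eq_getElem l 0 hi]⟩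
  have hS01 : ∀ y ∈ S, 0 ≤ y ∧ y < 1 := by
    intro y hy
    rw [hS] at hy
    simp only [Finset.mem_image, Finset.mem_range] at hy
    obtain ⟨j, _, rfl⟩ := hy
    exact ⟨Int.fract_nonneg _, Int.fract_lt_one _⟩
  have hslt : l.Pairwise (· < ·) := hl ▸ (Finset.sortedLT_sort S).pairwise
  have hlt : ∀ i j, i < j → j ≤ N → x i < x j := by
    intro i j hij hjN
    rcases Nat.lt_or_ge j N with hj | hjge
    · have hi' : i < l.length := hlen ▸ (hij.trans hj)
      have hj' : j < l.length := hlen ▸ hj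
      rw [hx, hx, if_pos (hij.trans hj), if_pos hj,
        List.getD_eq_getElem l 0 hi', List.getD_eq_getElem l 0 hj']
      exact List.pairwise_iff_get.1 hslt ⟨i, hi'⟩ ⟨j, hj'⟩ hij
    · have hjN' : j = N := le_antisymm hjN hjge
      have hiN : i < N := by omega
      rw [hjN', hx N, if_neg (lt_irrefl N)]
      exact (hS01 _ (hmem i hiN)).2
  have hle : ∀ i j, i ≤ j → j ≤ N → x i ≤ x j := by
    intro i j hij hjN
    rcases eq_or_lt_of_le hij with rfl | h
    · exact le_refl _
    · exact (hlt i j h hjN).le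
  have hfr : Int.fract θ = θ := Int.fract_eq_self.mpr ⟨hθ0.le, hθ1⟩
  have hθS : θ ∈ S := by
    rw [hS]
    simp only [Finset.mem_image, Finset.mem_range]
    exact ⟨1, by omega, by rw [Nat.cast_one, one_mul, hfr]⟩
  have hx0 : x 0 = 0 := by
    have h0S : (0:ℝ) ∈ S := by
      rw [hS]; simp only [Finset.mem_image, Finset.mem_range]
      exact ⟨0, by omega, by simp⟩
    obtain ⟨i, hi, hxi⟩ := hsurj 0 h0S
    have h1 : 0 ≤ x 0 := (hS01 _ (hmem 0 (by omega))).1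
    rcases Nat.eq_zero_or_pos i with rfl | hip
    · exact hxi
    · have h2 := hlt 0 i hip (by omega)
      rw [hxi] at h2
      linarith
  have hxN : x N = 1 := by rw [hx, if_neg (lt_irrefl N)]
  constructor
  · rintro ⟨hdvd, hper, hne⟩
    obtain ⟨k, hk⟩ := hdvd
    have hN3 : N = 3 := by
      rcases Nat.lt_or_ge k 2 with hk2 | hk2
      · omega
      · exfalso
        have hk0 : (0:ℝ) < (k:ℝ) := by exact_mod_cast Nat.pos_of_ne_zero (by omega)
        have hshift : ∀ i, i + 3 ≤ N → x (i+3) = x i + x 3 := by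
          intro i
          induction i with
          | zero => intro _; rw [hx0]; ring
          | succ n ih =>
            intro h
            have h1 := ih (by omega)
            have h2 := hper n (by omega)
            rw [hd, hd] at h2
            have e1 : n + 1 + 3 = n + 3 + 1 := by omega
            rw [e1]
            linarith
        have hmul : ∀ q, q ≤ k → x (3*q) = q * x 3 := by
          intro q
          induction q with
          | zero => intro _; simpa using hx0
          | succ n ih =>
            intro h
            have h1 := ih (by omega)
            have h2 := hshift (3*n) (by omega)
            have he : 3*(n+1) = 3*n+3 := by ring
            rw [he, h2, h1]
            push_cast; ring
        have hkx3 : (k:ℝ) * x 3 = 1 := by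
          have h1 := hmul k le_rfl
          rw [← hk, hxN] at h1
          linarith
        have hx3pos : 0 < x 3 := by
          have := hlt 0 3 (by omega) (by omega)
          rw [hx0] at this; exact this
        have hdecomp : ∀ q r, 3*q + r ≤ N → x (3*q + r) = q * x 3 + x r := by
          intro q
          induction q with
          | zero => intro r h; simp
          | succ n ih =>
            intro r h
            have he : 3*(n+1) + r = (3*n + r) + 3 := by ring
            rw [he, hshift (3*n+r) (by omega), ih r (by omega)]
            push_cast; ring
        have hres : ∀ y ∈ S, ∃ r, r < 3 ∧ Int.fract ((k:ℝ) * y) = (k:ℝ) * x r := by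
          intro y hy
          obtain ⟨i, hiN, rfl⟩ := hsurj y hy
          refine ⟨i % 3, by omega, ?_⟩
          have hxi : x i = ((i/3 : ℕ):ℝ) * x 3 + x (i%3) := by
            conv_lhs => rw [show i = 3*(i/3)+i%3 from by omega]
            exact hdecomp _ _ (by omega)
          have hxr0 : 0 ≤ x (i%3) := by
            have := hle 0 (i%3) (by omega) (by omega)
            rw [hx0] at this; exact this
          have hxr1 : (k:ℝ) * x (i%3) < 1 := by
            have h1 := hlt (i%3) 3 (by omega) (by omega)
            calc (k:ℝ) * x (i%3) < (k:ℝ) * x 3 := mul_lt_mul_of_pos_left h1 hk0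
              _ = 1 := hkx3
          have he : (k:ℝ) * x i = ((i/3 : ℕ):ℝ) + (k:ℝ) * x (i%3) := by
            rw [hxi, mul_add,
              show (k:ℝ) * (((i/3:ℕ):ℝ) * x 3) = ((i/3:ℕ):ℝ) * ((k:ℝ) * x 3) from by ring,
              hkx3, mul_one]
          rw [he, show ((i/3:ℕ):ℝ) = (((i/3:ℕ):ℤ):ℝ) from (Int.cast_natCast _).symm,
            Int.fract_intCast_add, Int.fract_eq_self.mpr ⟨by positivity, hxr1⟩]
        obtain ⟨r1, hr1lt, hr1⟩ := hres θ hθS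
        have h2θS : Int.fract (2*θ) ∈ S := by
          rw [hS]
          simp only [Finset.mem_image, Finset.mem_range]
          exact ⟨2, by omega, by norm_num⟩
        obtain ⟨r2, hr2lt, hr2⟩ := hres _ h2θS
        have hr2' : Int.fract ((k:ℝ) * (2*θ)) = (k:ℝ) * x r2 := by
          rw [← hr2, ← show (((k:ℤ)):ℝ) = (k:ℝ) from Int.cast_natCast _,
            fract_mul_fract]
        have hNcard : ((Finset.range N).image fun j : ℕ => Int.fract ((j:ℝ)*θ)).card = N := by
          rw [← hS]; exact hcard
        have hint1 : ∀ z : ℤ, (k:ℝ) * θ ≠ (z:ℝ) := by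
          intro z hz
          have := aux_card N k θ z (by omega) hz hNcard
          omega
        have hint2 : ∀ z : ℤ, (k:ℝ) * (2*θ) ≠ (z:ℝ) := by
          intro z hz
          have h2 : ((2*k:ℕ):ℝ) * θ = (z:ℝ) := by push_cast; push_cast at hz; linarith
          have := aux_card N (2*k) θ z (by omega) h2 hNcard
          omega
        have hk1 : Int.fract ((k:ℝ)*θ) ≠ 0 := by
          intro h0
          refine hint1 ⌊(k:ℝ)*θ⌋ ?_
          have := Int.floor_add_fract ((k:ℝ)*θ)
          rw [h0] at this; linarith
        have hk2' : Int.fract ((k:ℝ)*(2*θ)) ≠ 0 := by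
          intro h0
          refine hint2 ⌊(k:ℝ)*(2*θ)⌋ ?_
          have := Int.floor_add_fract ((k:ℝ)*(2*θ))
          rw [h0] at this; linarith
        have hk12 : Int.fract ((k:ℝ)*θ) ≠ Int.fract ((k:ℝ)*(2*θ)) := by
          intro h
          rw [Int.fract_eq_fract] at h
          obtain ⟨z, hz⟩ := h
          refine hint1 (-z) ?_
          push_cast
          linear_combination -hz
        have hr1ne : r1 ≠ 0 := by
          intro h; rw [h, hx0, mul_zero] at hr1; exact hk1 hr1
        have hr2ne : r2 ≠ 0 := by
          intro h; rw [h, hx0, mul_zero] at hr2'; exact hk2' hr2'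
        have hr12 : r1 ≠ r2 := by
          intro h; rw [h, ← hr2'] at hr1; exact hk12 hr1
        have hy1eq : x (3 + r2) = x 3 + x r2 := by
          have h1 := hdecomp 1 r2 (by omega)
          rw [show 3*1 + r2 = 3 + r2 from by omega] at h1
          rw [h1]; push_cast; ring
        have hstep : ∀ y ∈ S, y ≠ Int.fract (((N-1:ℕ):ℝ)*θ) → Int.fract (y + θ) ∈ S := by
          intro y hy hyt
          rw [hS] at hy
          simp only [Finset.mem_image, Finset.mem_range] at hy
          obtain ⟨j, hj, rfl⟩ := hy
          have hjne : j ≠ N - 1 := by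
            intro h; rw [h] at hyt; exact hyt rfl
          rw [fract_fract_add, show ((j:ℝ)*θ + θ) = ((j+1:ℕ):ℝ)*θ from by push_cast; ring, hS]
          simp only [Finset.mem_image, Finset.mem_range]
          exact ⟨j+1, by omega, rfl⟩
        have hfr2 : Int.fract ((k:ℝ) * x r2) = (k:ℝ) * x r2 := by
          apply Int.fract_eq_self.mpr
          constructor
          · have h1 : 0 ≤ x r2 := by
              have := hle 0 r2 (by omega) (by omega)
              rw [hx0] at this; exact this
            positivity
          · have h1 := hlt r2 3 (by omega) (by omega)
            calc (k:ℝ) * x r2 < (k:ℝ) * x 3 := mul_lt_mul_of_pos_left h1 hk0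
              _ = 1 := hkx3
        obtain ⟨y, hyS, hyt, hky⟩ : ∃ y, y ∈ S ∧ y ≠ Int.fract (((N-1:ℕ):ℝ)*θ) ∧
            Int.fract ((k:ℝ)*y) = (k:ℝ) * x r2 := by
          by_cases hca : x r2 = Int.fract (((N-1:ℕ):ℝ)*θ)
          · refine ⟨x (3 + r2), hmem _ (by omega), ?_, ?_⟩
            · rw [hy1eq, ← hca]
              intro hcon
              have : x 3 = 0 := by linarith
              linarith
            · have he3 : (k:ℝ)*(x 3 + x r2) = (k:ℝ)*x r2 + ((1:ℤ):ℝ) := by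
                push_cast
                linear_combination hkx3
              rw [hy1eq, he3, Int.fract_add_intCast]
              exact hfr2
          · exact ⟨x r2, hmem _ (by omega), hca, hfr2⟩
        have hyS' := hstep y hyS hyt
        obtain ⟨r', hr'lt, hr'⟩ := hres _ hyS'
        have hy2 : (k:ℝ) * y = (⌊(k:ℝ)*y⌋:ℝ) + (k:ℝ) * x r2 := by
          rw [← hky]
          exact (Int.floor_add_fract _).symm
        have hkey : Int.fract ((k:ℝ)*(3*θ)) = (k:ℝ) * x r' := by
          rw [← hr', ← show (((k:ℤ)):ℝ) = (k:ℝ) from Int.cast_natCast _, fract_mul_fract]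
          push_cast
          have he2 : (k:ℝ) * (y + θ) = (⌊((k:ℝ))*y⌋:ℝ) +
              (((k:ℝ)) * x r2 + ((k:ℝ))*θ) := by
            linear_combination hy2
          rw [he2, Int.fract_intCast_add, ← hr2', fract_fract_add]
          congr 1
          ring
        have hcases : r' = 0 ∨ r' = r1 ∨ r' = r2 := by omega
        rcases hcases with rfl | rfl | rfl
        · -- all gaps equal: contradiction with hne
          rw [hx0, mul_zero] at hkey
          have hNint : ((N:ℕ):ℝ) * θ = ((⌊(k:ℝ)*(3*θ)⌋:ℤ):ℝ) := by
            have hfl := Int.floor_add_fract ((k:ℝ)*(3*θ))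
            rw [hkey, add_zero] at hfl
            rw [hk]
            push_cast
            linear_combination -hfl
          have hNR : (0:ℝ) < (N:ℝ) := by exact_mod_cast (by omega : 0 < N)
          have hTeq : S = (Finset.range N).image fun i : ℕ => (i:ℝ)/N := by
            apply Finset.eq_of_subset_of_card_le
            · rw [hS]; exact aux_sub N N θ _ (by omega) hNint
            · rw [hcard]
              exact le_trans Finset.card_image_le (by simp)
          have hinS : ∀ a : ℕ, a < N → ((a:ℝ)/N) ∈ S := by
            intro a ha
            rw [hTeq]
            simp only [Finset.mem_image, Finset.mem_range]
            exact ⟨a, ha, rfl⟩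
          have hmemT : ∀ i, i < N → ∃ a:ℕ, a < N ∧ x i = a/N := by
            intro i hi
            have h1 := hmem i hi
            rw [hTeq] at h1
            simp only [Finset.mem_image, Finset.mem_range] at h1
            obtain ⟨a, ha, h⟩ := h1
            exact ⟨a, ha, h.symm⟩
          have hx1pos : 0 < x 1 := by
            have := hlt 0 1 (by omega) (by omega); rw [hx0] at this; exact this
          have hx1 : x 1 = 1/(N:ℝ) := by
            obtain ⟨j, hj, hxj⟩ := hsurj _ (hinS 1 (by omega))
            simp only [Nat.cast_one] at hxj
            have hj1 : 1 ≤ j := by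
              by_contra hcj
              have hj0 : j = 0 := by omega
              rw [hj0, hx0] at hxj
              have : (0:ℝ) < 1/(N:ℝ) := by positivity
              rw [← hxj] at this
              exact lt_irrefl _ this
            have hub : x 1 ≤ 1/(N:ℝ) := by
              rw [← hxj]
              exact hle 1 j hj1 (by omega)
            obtain ⟨a, ha, hxa⟩ := hmemT 1 (by omega)
            have ha1 : 1 ≤ a := by
              by_contra hca
              have ha0 : a = 0 := by omega
              rw [ha0] at hxa
              simp at hxa
              linarith
            have hlb : 1/(N:ℝ) ≤ x 1 := by
              rw [hxa]
              gcongr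
              exact_mod_cast ha1
            linarith
          have hx2 : x 2 = 2/(N:ℝ) := by
            obtain ⟨j, hj, hxj⟩ := hsurj _ (hinS 2 (by omega))
            have h1N : (0:ℝ) < 1/(N:ℝ) := by positivity
            have h2N : (2:ℝ)/N = 1/N + 1/N := by ring
            have hxj' : x j = 2/(N:ℝ) := by rw [hxj]; norm_num
            have hj2 : 2 ≤ j := by
              by_contra hcj
              have hxle : x j ≤ x 1 := hle j 1 (by omega) (by omega)
              rw [hxj', hx1] at hxle
              linarith
            have hub : x 2 ≤ 2/(N:ℝ) := by
              rw [← hxj']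
              exact hle 2 j hj2 (by omega)
            obtain ⟨a, ha, hxa⟩ := hmemT 2 (by omega)
            have h12 := hlt 1 2 (by omega) (by omega)
            have ha2 : 2 ≤ a := by
              by_contra hca
              interval_cases a
              · rw [hxa] at h12
                simp at h12
                linarith [hx1pos]
              · rw [hxa, Nat.cast_one, ← hx1] at h12
                exact lt_irrefl _ h12
            have hlb : 2/(N:ℝ) ≤ x 2 := by
              rw [hxa]
              gcongr
              exact_mod_cast ha2
            linarith
          have hx3N : x 3 = 3/(N:ℝ) := by
            have hNk : (N:ℝ) = 3*(k:ℝ) := by rw [hk]; push_cast; ring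
            have hkne : (k:ℝ) ≠ 0 := ne_of_gt hk0
            rw [hNk]
            field_simp
            linear_combination hkx3
          have hd0 : d 0 = 1/(N:ℝ) := by
            rw [hd 0, show (0+1:ℕ) = 1 from rfl, hx1, hx0]; ring
          have hd1 : d 1 = 1/(N:ℝ) := by
            rw [hd 1, show (1+1:ℕ) = 2 from rfl, hx2, hx1]; ring
          have hd2 : d 2 = 1/(N:ℝ) := by
            rw [hd 2, show (2+1:ℕ) = 3 from rfl, hx3N, hx2]; ring
          exact hne ⟨by rw [hd0, hd1], by rw [hd1, hd2]⟩
        · have h := hkey.trans hr1.symm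
          rw [Int.fract_eq_fract] at h
          obtain ⟨z, hz⟩ := h
          exact hint2 z (by linear_combination hz)
        · have h := hkey.trans hr2'.symm
          rw [Int.fract_eq_fract] at h
          obtain ⟨z, hz⟩ := h
          exact hint1 z (by linear_combination hz)
    subst hN3
    have hchar : ∀ c : ℝ, Int.fract (2*θ) = c →
        (∀ y ∈ S, y = 0 ∨ y = θ ∨ y = c) := by
      intro c hc y hy
      rw [hS] at hy
      simp only [Finset.mem_image, Finset.mem_range] at hy
      obtain ⟨j, hj, rfl⟩ := hy
      interval_cases j
      · left; simp
      · right; left; rw [Nat.cast_one, one_mul, hfr]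
      · right; right; rw [← hc]; norm_num
    refine ⟨rfl, ?_, ?_⟩
    · rintro rfl
      apply hne
      have hc : Int.fract (2*(1/3 : ℝ)) = 2/3 := by
        rw [Int.fract_eq_self.mpr (by norm_num)]; norm_num
      have h1 : x 1 = 1/3 ∧ x 2 = 2/3 := by
        have hm1 := hchar _ hc _ (hmem 1 (by omega))
        have hm2 := hchar _ hc _ (hmem 2 (by omega))
        have h01 := hlt 0 1 (by omega) (by omega)
        have h12 := hlt 1 2 (by omega) (by omega)
        rw [hx0] at h01
        exact aux3 _ _ _ _ h01 h12 (Or.inl ⟨rfl, rfl⟩) hm1 hm2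
      rw [hd 0, hd 1, hd 2, hx0, h1.1, h1.2, show (2+1 : ℕ) = 3 from rfl, hxN]
      norm_num
    · rintro rfl
      apply hne
      have hc : Int.fract (2*(2/3 : ℝ)) = 1/3 := by
        rw [show (2*(2/3:ℝ)) = 1/3 + (1:ℤ) by norm_num, Int.fract_add_intCast,
          Int.fract_eq_self.mpr (by norm_num)]
      have h1 : x 1 = 1/3 ∧ x 2 = 2/3 := by
        have hm1 := hchar _ hc _ (hmem 1 (by omega))
        have hm2 := hchar _ hc _ (hmem 2 (by omega))
        have h01 := hlt 0 1 (by omega) (by omega)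
        have h12 := hlt 1 2 (by omega) (by omega)
        rw [hx0] at h01
        exact aux3 _ _ _ _ h01 h12 (Or.inr ⟨rfl, rfl⟩) hm1 hm2
      rw [hd 0, hd 1, hd 2, hx0, h1.1, h1.2, show (2+1 : ℕ) = 3 from rfl, hxN]
      norm_num
  · rintro ⟨rfl, h13, h23⟩
    refine ⟨⟨1, rfl⟩, fun i h => absurd h (by omega), ?_⟩
    rintro ⟨e01, e12⟩
    have hsum : d 0 + d 1 + d 2 = 1 := by
      rw [hd 0, hd 1, hd 2, hx0, show (2+1 : ℕ) = 3 from rfl, hxN]; ring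
    have hx1 : x 1 = 1/3 := by
      have h0 := hd 0; have h1 := hd 1; have h2 := hd 2
      rw [hx0] at h0; linarith
    have hx2 : x 2 = 2/3 := by
      have h0 := hd 0; have h1 := hd 1
      rw [hx0] at h0; linarith
    obtain ⟨i, hi, hxi⟩ := hsurj θ hθS
    interval_cases i
    · rw [hx0] at hxi; linarith
    · rw [hx1] at hxi; exact h13 hxi.symm
    · rw [hx2] at hxi; exact h23 hxi.symm
end

section
/- Suppose the sorted orbit of θ is 2-periodic with gaps d_0 > d_1 > 0, (N/2)(d_0+d_1)=1, and θ = l(d_0+d_1) + d_0 for some integer l ≥ 0. Then frac(2θ) must equal m(d_0+d_1) + (d_0 − d_1) for some integer m, and membership of frac(2θ) in the orbit forces d_0 − d_1 ∈ {0, d_0}, i.e., d_1 = 0 or d_0 = d_1 — a contradiction. Hence no such θ exists for N > 2. -/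
/-!
Everything is read modulo `L = d0 + d1`, which divides `1` because `(N / 2) • L = 1`. The orbit
points are `≡ 0` or `≡ d0`, while `frac (2θ) ≡ 2θ = (2l + 1) L + (d0 - d1) ≡ d0 - d1`. Either
way one of `d0 - d1` or `d1`, both strictly between `0` and `L`, would be `≡ 0 [PMOD L]`.
-/

open AddCommGroup

theorem Int.fract_modEq_one {α : Type*} [Ring α] [LinearOrder α] [FloorRing α] (x : α) :
    Int.fract x ≡ x [PMOD 1] :=
  modEq_iff_eq_add_zsmul.2 ⟨⌊x⌋, by rw [zsmul_one, Int.fract_add_floor]⟩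

theorem AddCommGroup.not_modEq_zero_of_mem_Ioo {α : Type*} [AddCommGroup α] [LinearOrder α]
    [IsOrderedAddMonoid α] [Archimedean α] {p x : α} (hx : x ∈ Set.Ioo 0 p) :
    ¬x ≡ 0 [PMOD p] := fun h =>
  (modEq_iff_forall_notMem_Ioo_mod (hx.1.trans hx.2)).1 h.symm 0 (by simpa using hx)

section Pattern

variable {R : Type*} [CommRing R]

theorem modEq_zero_or_modEq_of_mem_twoPeriodic [DecidableEq R] {M : ℕ} {L d x : R}
    (hx : x ∈ (Finset.range M).image (fun m : ℕ => (m : R) * L) ∪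
      (Finset.range M).image fun m : ℕ => (m : R) * L + d) :
    x ≡ 0 [PMOD L] ∨ x ≡ d [PMOD L] := by
  simp only [Finset.mem_union, Finset.mem_image] at hx
  rcases hx with ⟨m, -, rfl⟩ | ⟨m, -, rfl⟩
  · left
    simpa [nsmul_eq_mul] using nsmul_add_modEq (a := (0 : R)) (p := L) m
  · right
    simpa [nsmul_eq_mul] using nsmul_add_modEq (a := d) (p := L) m

theorem two_mul_modEq_sub {d₀ d₁ θ : R} (l : ℕ) (hθ : θ = l * (d₀ + d₁) + d₀) :
    2 * θ ≡ d₀ - d₁ [PMOD d₀ + d₁] := by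
  have h : 2 * θ = (2 * l + 1) • (d₀ + d₁) + (d₀ - d₁) := by
    rw [hθ, nsmul_eq_mul]; push_cast; ring
  exact h ▸ nsmul_add_modEq _

end Pattern

/-- Suppose `N > 2` is even, the orbit `{frac(jθ) : j = 0,…,N-1}` equals the 2-periodic
pattern `{mL, mL + d_0 : 0 ≤ m ≤ N/2 - 1}` with gaps `d_0 > d_1 > 0`,
`(N/2)(d_0+d_1) = 1`, `L = d_0 + d_1`, and `θ = l(d_0+d_1) + d_0` for some integer
`l ≥ 0`.  Then membership of `frac(2θ)` in the orbit forces `d_0 - d_1 ∈ {0, d_0}`,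
i.e. `d_1 = 0` or `d_0 = d_1` — a contradiction.  Hence no such `θ` exists. -/
theorem no_ssh2_with_shifted_angle
    (N : ℕ) (hN : 2 < N) (hNe : Even N)
    (d0 d1 : ℝ) (hd1 : 0 < d1) (hlt : d1 < d0)
    (L : ℝ) (hL : L = d0 + d1) (hsum : ((N : ℝ) / 2) * L = 1)
    (l : ℕ) (θ : ℝ) (hθ : θ = l * L + d0)
    (horb : (Finset.range N).image (fun j : ℕ => Int.fract ((j : ℝ) * θ)) =
      (Finset.range (N / 2)).image (fun m : ℕ => (m : ℝ) * L) ∪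
        (Finset.range (N / 2)).image fun m : ℕ => (m : ℝ) * L + d0) :
    False := by
  subst hL
  have hperiod : (N / 2) • (d0 + d1) = 1 := by
    rwa [nsmul_eq_mul, Nat.cast_div hNe.two_dvd two_ne_zero, Nat.cast_ofNat]
  have hfrac : Int.fract (2 * θ) ≡ d0 - d1 [PMOD d0 + d1] :=
    ((hperiod ▸ Int.fract_modEq_one (2 * θ)).of_nsmul).trans (two_mul_modEq_sub l hθ)
  have hmem : Int.fract (2 * θ) ∈ (Finset.range N).image fun j : ℕ => Int.fract ((j : ℝ) * θ) :=
    Finset.mem_image.2 ⟨2, Finset.mem_range.2 hN, by norm_num⟩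
  rw [horb] at hmem
  rcases modEq_zero_or_modEq_of_mem_twoPeriodic hmem with h | h
  · exact not_modEq_zero_of_mem_Ioo ⟨by linarith, by linarith⟩ (hfrac.symm.trans h)
  · refine not_modEq_zero_of_mem_Ioo (p := d0 + d1) ⟨hd1, by linarith⟩
      (ModEq.sub_left_cancel' d0 ?_)
    rw [sub_zero]
    exact hfrac.symm.trans h
end
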